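/- arXiv:2005.05863 — 6 statements merged into one kernel-verified Lean document; each statement's English description precedes it below -/
import Mathlib

section
/- For every integer c ≥ 2 there exist a constant C > 0 and a family (A_n)_{n ≥ 1} of verifiers with certificate length s(n) ≤ C·⌈log₂(n+2)⌉ that is a proof-labeling scheme for the class of path-outerplanar graphs. -/
/-!
Certify a witnessing order by giving each vertex its position `i`, the number `encl i` of chords
`(x, y)` with `x < i < y`, and its number of neighbours after `i`. Seeing the neighbours at
positions `i ± 1` forces the positions to be a bijection, and the recurrence
`encl (i + 1) + #(neighbours of i + 1 before it) = encl i + #(neighbours of i after it)`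
forces the `encl` fields to be the true counts. For a chord `(a, b)` with `a < b`,
`encl b + #{x < a < y ≤ b} = encl a + #(neighbours of a beyond b) + #{a < x < b < y}`,
so `a` can check that no chord leaves `(a, b)` to the right; when crossings exist, the
leftmost left endpoint of a crossing pair has no chord of the first kind and fails that check.
-/

open Classical in
/-- The family of verifiers `A` with certificate length `s` is a proof-labeling scheme
for the class `C` of graphs (identifiers are taken in `Fin (n ^ c)`). -/
def IsPLS (c : ℕ) (s : ℕ → ℕ)
    (A : (n : ℕ) → ℕ → (Fin (s n) → Bool) → Multiset (Fin (s n) → Bool) → Bool)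
    (C : (n : ℕ) → SimpleGraph (Fin n) → Prop) : Prop :=
  ∀ n : ℕ, 1 ≤ n → ∀ G : SimpleGraph (Fin n), G.Connected →
    ∀ ids : Fin n → Fin (n ^ c), Function.Injective ids →
      (C n G ↔ ∃ cert : Fin n → (Fin (s n) → Bool),
        ∀ v : Fin n,
          A n (ids v) (cert v)
            (((Finset.univ.filter (fun u => G.Adj v u)).val).map cert) = true)

/-- `G` on `Fin N` is path-outerplanar with witness the natural order: consecutive
vertices are adjacent, and any two edges are nested or non-overlapping. -/
def IsPathOuterplanarWitness {N : ℕ} (G : SimpleGraph (Fin N)) : Prop :=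
  (∀ i : Fin N, ∀ h : (i : ℕ) + 1 < N, G.Adj i ⟨(i : ℕ) + 1, h⟩) ∧
  (∀ a b c d : Fin N, G.Adj a b → G.Adj c d → a < b → c < d →
    (b ≤ c) ∨ (d ≤ a) ∨ (a ≤ c ∧ d ≤ b) ∨ (c ≤ a ∧ b ≤ d))

/-- `G` is path-outerplanar: some linear ordering of the vertices is a witness. -/
def IsPathOuterplanar {N : ℕ} (G : SimpleGraph (Fin N)) : Prop :=
  ∃ e : Fin N ≃ Fin N, IsPathOuterplanarWitness (G.comap e)

open Finset Classical

namespace SimpleGraph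

variable {n : ℕ} (H : SimpleGraph (Fin n))

noncomputable def chordCount (P : Fin n → Fin n → Prop) : ℕ :=
  #{p : Fin n × Fin n | H.Adj p.1 p.2 ∧ P p.1 p.2}

noncomputable def enclosingCount (i : Fin n) : ℕ :=
  H.chordCount fun x y => x < i ∧ i < y

noncomputable def upDegree (i : Fin n) : ℕ := #{j | H.Adj i j ∧ i < j}

noncomputable def downDegree (i : Fin n) : ℕ := #{j | H.Adj i j ∧ j < i}

def HasCrossing : Prop :=
  ∃ a b c d : Fin n, H.Adj a b ∧ H.Adj c d ∧ a < c ∧ c < b ∧ b < d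

variable {H}

theorem chordCount_congr {P Q : Fin n → Fin n → Prop} (h : ∀ x y, P x y ↔ Q x y) :
    H.chordCount P = H.chordCount Q := by
  simp only [chordCount, h]

theorem chordCount_or {P Q : Fin n → Fin n → Prop} (h : ∀ x y, P x y → ¬ Q x y) :
    H.chordCount (fun x y => P x y ∨ Q x y) = H.chordCount P + H.chordCount Q := by
  simp only [chordCount, and_or_left, filter_or]
  exact card_union_of_disjoint (disjoint_filter.2 fun p _ hP hQ => h _ _ hP.2 hQ.2)

theorem chordCount_eq_zero_iff {P : Fin n → Fin n → Prop} :
    H.chordCount P = 0 ↔ ∀ x y, H.Adj x y → ¬ P x y := by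
  simp [chordCount, filter_eq_empty_iff]

theorem chordCount_le (P : Fin n → Fin n → Prop) : H.chordCount P ≤ n * n :=
  (card_filter_le _ _).trans (by simp)

theorem chordCount_fst (i : Fin n) (Q : Fin n → Prop) [DecidablePred Q] :
    H.chordCount (fun x y => x = i ∧ Q y) = #{j | H.Adj i j ∧ Q j} := by
  refine card_nbij' Prod.snd (fun j => (i, j)) ?_ ?_ ?_ ?_ <;>
    intro p <;> simp +contextual [Prod.ext_iff, and_comm]

theorem chordCount_snd (i : Fin n) (Q : Fin n → Prop) [DecidablePred Q] :
    H.chordCount (fun x y => y = i ∧ Q x) = #{j | H.Adj i j ∧ Q j} := by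
  rw [← chordCount_fst]
  refine card_nbij' Prod.swap Prod.swap ?_ ?_ (fun _ _ => rfl) (fun _ _ => rfl) <;>
    intro p <;> simp [H.adj_comm]

theorem enclosingCount_eq_zero {i : Fin n} (hi : (i : ℕ) = 0) : H.enclosingCount i = 0 :=
  chordCount_eq_zero_iff.2 fun _ _ _ h => by omega

/-- Both sides count the chords `(x, y)` with `x ≤ i < y`. -/
theorem enclosingCount_add_downDegree {i j : Fin n} (hij : (j : ℕ) = i + 1) :
    H.enclosingCount j + H.downDegree j = H.enclosingCount i + H.upDegree i := by
  rw [enclosingCount, enclosingCount, downDegree, upDegree, ← chordCount_snd, ← chordCount_fst,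
    ← chordCount_or (by omega), ← chordCount_or (by omega)]
  exact chordCount_congr (by omega)

theorem enclosingCount_add_chordCount {a b : Fin n} (hab : a < b) :
    H.enclosingCount b + H.chordCount (fun x y => x < a ∧ a < y ∧ y ≤ b) =
      H.enclosingCount a + #{j | H.Adj a j ∧ b < j} +
        H.chordCount (fun x y => a < x ∧ x < b ∧ b < y) := by
  rw [enclosingCount, enclosingCount, ← chordCount_fst, ← chordCount_or (by omega),
    ← chordCount_or (by omega), ← chordCount_or (by omega)]
  exact chordCount_congr (by omega)

theorem isPathOuterplanarWitness_iff :
    IsPathOuterplanarWitness H ↔ (∀ (i : Fin n) (h : (i : ℕ) + 1 < n), H.Adj i ⟨i + 1, h⟩) ∧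
      ¬ H.HasCrossing := by
  refine and_congr_right fun _ => ⟨?_, fun h => ?_⟩
  · rintro h ⟨a, b, c, d, hab, hcd, hac, hcb, hbd⟩
    have := h a b c d hab hcd (hac.trans hcb) (hcb.trans hbd)
    omega
  · intro a b c d hab hcd hab' hcd'
    by_contra hne
    rcases lt_trichotomy a c with hac | rfl | hca
    · exact h ⟨a, b, c, d, hab, hcd, hac, by omega, by omega⟩
    · omega
    · exact h ⟨c, d, a, b, hcd, hab, hca, by omega, by omega⟩

theorem not_hasCrossing_iff :
    ¬ H.HasCrossing ↔ ∀ a b, H.Adj a b → a < b →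
      H.enclosingCount b ≤ H.enclosingCount a + #{j | H.Adj a j ∧ b < j} := by
  constructor
  · intro h a b hab hlt
    have hR : H.chordCount (fun x y => a < x ∧ x < b ∧ b < y) = 0 :=
      chordCount_eq_zero_iff.2 fun x y hxy hx => h ⟨a, b, x, y, hab, hxy, hx⟩
    have := enclosingCount_add_chordCount (H := H) hlt
    omega
  · rintro h ⟨a, hcross⟩
    induction a using WellFoundedLT.induction with
    | _ a ih =>
    obtain ⟨b, c, d, hab, hcd, hac, hcb, hbd⟩ := hcross
    have hC : H.chordCount (fun x y => x < a ∧ a < y ∧ y ≤ b) = 0 := by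
      refine chordCount_eq_zero_iff.2 fun x y hxy ⟨hxa, hay, hyb⟩ => ?_
      rcases hyb.lt_or_eq with hyb | rfl
      · exact ih x hxa ⟨y, a, b, hxy, hab, hxa, hay, hyb⟩
      · exact ih x hxa ⟨y, c, d, hxy, hcd, hxa.trans hac, hcb, hbd⟩
    have hR : H.chordCount (fun x y => a < x ∧ x < b ∧ b < y) ≠ 0 :=
      fun h0 => chordCount_eq_zero_iff.1 h0 c d hcd ⟨hac, hcb, hbd⟩
    have := enclosingCount_add_chordCount (H := H) (hac.trans hcb)
    have := h a b hab (hac.trans hcb)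
    omega

end SimpleGraph

section NeighborLabels

variable {V W β : Type*} [Fintype V] [Fintype W]

noncomputable def neighborLabels (G : SimpleGraph V) (f : V → β) (v : V) : Multiset β :=
  (univ.filter fun u => G.Adj v u).val.map f

variable {G : SimpleGraph V} {f : V → β} {v : V}

theorem mem_neighborLabels {q : β} : q ∈ neighborLabels G f v ↔ ∃ u, G.Adj v u ∧ f u = q := by
  simp [neighborLabels]

theorem countP_neighborLabels (P : β → Prop) [DecidablePred P] :
    (neighborLabels G f v).countP P = #{u | G.Adj v u ∧ P (f u)} := by
  rw [neighborLabels, Multiset.countP_map, ← filter_filter]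
  rfl

theorem map_neighborLabels {γ : Type*} (g : β → γ) :
    (neighborLabels G f v).map g = neighborLabels G (g ∘ f) v :=
  Multiset.map_map _ _ _

theorem neighborLabels_comap (e : W ≃ V) (w : W) :
    neighborLabels G f (e w) = neighborLabels (G.comap e) (f ∘ e) w := by
  have : (univ.filter fun u => G.Adj (e w) u) =
      (univ.filter fun u => (G.comap e).Adj w u).map e.toEmbedding := by
    ext u
    simp
  rw [neighborLabels, neighborLabels, this, map_val, Multiset.map_map]
  rfl

end NeighborLabels

/-- A certificate: a position in the path, an enclosing count and an up-degree. -/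
abbrev Label (n : ℕ) := Fin (n + 1) × Fin (n * n + 1) × Fin (n + 1)

namespace Label

variable {n : ℕ}

def pos (x : Label n) : ℕ := x.1

def encl (x : Label n) : ℕ := x.2.1

def up (x : Label n) : ℕ := x.2.2

end Label

def Accepts {n : ℕ} (x : Label n) (M : Multiset (Label n)) : Prop :=
  x.pos < n ∧
  (x.pos + 1 < n → ∃ q ∈ M, q.pos = x.pos + 1) ∧
  x.up = M.countP (fun q => x.pos < q.pos) ∧
  (x.pos = 0 → x.encl = 0) ∧
  (0 < x.pos → ∃ q ∈ M, q.pos + 1 = x.pos ∧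
    x.encl + M.countP (fun r => r.pos < x.pos) = q.encl + q.up) ∧
  ∀ q ∈ M, x.pos < q.pos → q.encl ≤ x.encl + M.countP (fun r => q.pos < r.pos)

namespace SimpleGraph

variable {n : ℕ} {H : SimpleGraph (Fin n)}

variable (H) in
noncomputable def canonicalLabel (i : Fin n) : Label n :=
  (⟨i, by omega⟩, ⟨H.enclosingCount i, Nat.lt_succ_of_le (chordCount_le _)⟩,
    ⟨H.upDegree i, Nat.lt_succ_of_le ((card_filter_le _ _).trans (by simp))⟩)

@[simp] theorem pos_canonicalLabel (i : Fin n) : (H.canonicalLabel i).pos = i := rfl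
@[simp] theorem encl_canonicalLabel (i : Fin n) :
    (H.canonicalLabel i).encl = H.enclosingCount i := rfl
@[simp] theorem up_canonicalLabel (i : Fin n) : (H.canonicalLabel i).up = H.upDegree i := rfl

theorem accepts_canonicalLabel (hH : IsPathOuterplanarWitness H) (i : Fin n) :
    Accepts (H.canonicalLabel i) (neighborLabels H H.canonicalLabel i) := by
  obtain ⟨hpath, hcross⟩ := isPathOuterplanarWitness_iff.1 hH
  simp only [Accepts, countP_neighborLabels]
  simp only [mem_neighborLabels, exists_exists_and_eq_and, forall_exists_index, and_imp,
    forall_apply_eq_imp_iff₂, pos_canonicalLabel, encl_canonicalLabel, up_canonicalLabel,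
    Fin.val_fin_lt]
  refine ⟨i.isLt, fun h => ⟨_, hpath i h, rfl⟩, ?_, enclosingCount_eq_zero, fun h => ?_, ?_⟩
  · rfl
  · obtain ⟨j, hj⟩ : ∃ j : Fin n, (i : ℕ) = j + 1 := ⟨⟨i - 1, by omega⟩, (Nat.sub_add_cancel h).symm⟩
    have hji : (⟨j + 1, by omega⟩ : Fin n) = i := Fin.ext hj.symm
    exact ⟨j, hji ▸ (hpath j (by omega)).symm, hj.symm, enclosingCount_add_downDegree hj⟩
  · exact not_hasCrossing_iff.1 hcross i

theorem isPathOuterplanarWitness_of_accepts {L : Fin n → Label n} (hL : ∀ i, (L i).pos = i)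
    (h : ∀ i, Accepts (L i) (neighborLabels H L i)) : IsPathOuterplanarWitness H := by
  simp only [Accepts, countP_neighborLabels] at h
  simp only [mem_neighborLabels, exists_exists_and_eq_and, forall_exists_index, and_imp,
    forall_apply_eq_imp_iff₂, hL, Fin.val_fin_lt] at h
  choose _ hsucc hup hzero hpred hcross using h
  have hpath (i : Fin n) (hi : (i : ℕ) + 1 < n) : H.Adj i ⟨i + 1, hi⟩ := by
    obtain ⟨j, hij, hj⟩ := hsucc i hi
    rwa [← Fin.ext (b := ⟨i + 1, hi⟩) hj]
  have hencl (i : Fin n) : (L i).encl = H.enclosingCount i := by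
    induction i using WellFoundedLT.induction with
    | _ i ih =>
    rcases Nat.eq_zero_or_pos i with hi | hi
    · rw [hzero i hi, enclosingCount_eq_zero hi]
    · obtain ⟨j, -, hji, heq⟩ := hpred i hi
      have := enclosingCount_add_downDegree (H := H) hji.symm
      rw [downDegree, upDegree] at this
      rw [ih j (by omega), hup j] at heq
      omega
  rw [isPathOuterplanarWitness_iff, not_hasCrossing_iff]
  refine ⟨hpath, fun a b hab hlt => ?_⟩
  simpa only [hencl] using hcross a b hab hlt

end SimpleGraph

theorem Function.surjective_of_exists_succ_of_exists_pred {α : Type*} [Nonempty α] {n : ℕ}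
    {f : α → Fin n} (hsucc : ∀ v, (f v : ℕ) + 1 < n → ∃ u, (f u : ℕ) = f v + 1)
    (hpred : ∀ v, 0 < (f v : ℕ) → ∃ u, (f u : ℕ) + 1 = f v) : Function.Surjective f := by
  have hzero : ∃ u, (f u : ℕ) = 0 := by
    obtain ⟨v⟩ := ‹Nonempty α›
    induction hv : (f v : ℕ) generalizing v with
    | zero => exact ⟨v, hv⟩
    | succ m ih =>
      obtain ⟨u, hu⟩ := hpred v (by omega)
      exact ih u (by omega)
  have hall (m : ℕ) (hm : m < n) : ∃ u, (f u : ℕ) = m := by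
    induction m with
    | zero => exact hzero
    | succ m ih =>
      obtain ⟨v, hv⟩ := ih (by omega)
      obtain ⟨u, hu⟩ := hsucc v (by omega)
      exact ⟨u, by omega⟩
  intro y
  obtain ⟨u, hu⟩ := hall y y.isLt
  exact ⟨u, Fin.ext hu⟩

theorem isPathOuterplanar_iff_exists_accepts {n : ℕ} [NeZero n] (G : SimpleGraph (Fin n)) :
    IsPathOuterplanar G ↔
      ∃ cert : Fin n → Label n, ∀ v, Accepts (cert v) (neighborLabels G cert v) := by
  constructor
  · rintro ⟨e, hW⟩
    refine ⟨(G.comap e).canonicalLabel ∘ e.symm, fun v => ?_⟩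
    have := SimpleGraph.accepts_canonicalLabel hW (e.symm v)
    rw [← e.apply_symm_apply v, neighborLabels_comap]
    simpa [Function.comp_def] using this
  · rintro ⟨cert, hcert⟩
    let f (v : Fin n) : Fin n := ⟨(cert v).pos, (hcert v).1⟩
    have hf : Function.Surjective f := by
      refine Function.surjective_of_exists_succ_of_exists_pred (fun v hv => ?_) (fun v hv => ?_)
      · obtain ⟨q, hq, hqv⟩ := (hcert v).2.1 hv
        obtain ⟨u, -, rfl⟩ := mem_neighborLabels.1 hq
        exact ⟨u, hqv⟩
      · obtain ⟨q, hq, hqv, -⟩ := (hcert v).2.2.2.2.1 hv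
        obtain ⟨u, -, rfl⟩ := mem_neighborLabels.1 hq
        exact ⟨u, hqv⟩
    let e := (Equiv.ofBijective f ⟨Finite.injective_iff_surjective.2 hf, hf⟩).symm
    refine ⟨e, SimpleGraph.isPathOuterplanarWitness_of_accepts (L := cert ∘ e) (fun i => ?_)
      (fun i => ?_)⟩
    · exact congrArg Fin.val ((Equiv.ofBijective f _).apply_symm_apply i)
    · rw [← neighborLabels_comap]
      exact hcert (e i)

def IsPLSWith (c : ℕ) (D : ℕ → Type*) (A : (n : ℕ) → ℕ → D n → Multiset (D n) → Bool)
    (C : (n : ℕ) → SimpleGraph (Fin n) → Prop) : Prop :=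
  ∀ n : ℕ, 1 ≤ n → ∀ G : SimpleGraph (Fin n), G.Connected →
    ∀ ids : Fin n → Fin (n ^ c), Function.Injective ids →
      (C n G ↔ ∃ cert : Fin n → D n, ∀ v, A n (ids v) (cert v) (neighborLabels G cert v) = true)

theorem IsPLSWith.exists_isPLS {c : ℕ} {D : ℕ → Type*} [∀ n, Fintype (D n)]
    [∀ n, Nonempty (D n)] {V : (n : ℕ) → ℕ → D n → Multiset (D n) → Bool}
    {C : (n : ℕ) → SimpleGraph (Fin n) → Prop} (hV : IsPLSWith c D V C) {s : ℕ → ℕ}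
    (hs : ∀ n, Fintype.card (D n) ≤ 2 ^ s n) : ∃ A, IsPLS c s A C := by
  have emb (n : ℕ) : D n ↪ (Fin (s n) → Bool) :=
    Classical.choice (Function.Embedding.nonempty_of_card_le (by simpa using hs n))
  have hdec (n : ℕ) := Function.leftInverse_invFun (emb n).injective
  suffices ∃ A, IsPLSWith c (fun n => Fin (s n) → Bool) A C from this
  refine ⟨fun n i x M => V n i (Function.invFun (emb n) x) (M.map (Function.invFun (emb n))),
    fun n hn G hG ids hids => (hV n hn G hG ids hids).trans ⟨?_, ?_⟩⟩
  · rintro ⟨cert, h⟩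
    refine ⟨emb n ∘ cert, fun v => ?_⟩
    simpa [map_neighborLabels, Function.comp_def, hdec n _] using h v
  · rintro ⟨cert, h⟩
    exact ⟨Function.invFun (emb n) ∘ cert, fun v => by simpa [map_neighborLabels] using h v⟩

theorem isPLSWith_accepts (c : ℕ) :
    IsPLSWith c Label (fun _ _ x M => decide (Accepts x M)) (fun _ G => IsPathOuterplanar G) := by
  intro n hn G _ _ _
  have : NeZero n := ⟨by omega⟩
  simpa only [decide_eq_true_iff] using isPathOuterplanar_iff_exists_accepts G

theorem card_label_le (n : ℕ) : Fintype.card (Label n) ≤ 2 ^ (4 * Nat.clog 2 (n + 2)) :=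
  calc Fintype.card (Label n) = (n + 1) * ((n * n + 1) * (n + 1)) := by simp
    _ ≤ (n + 2) ^ 4 := by nlinarith
    _ ≤ (2 ^ Nat.clog 2 (n + 2)) ^ 4 := Nat.pow_le_pow_left (Nat.le_pow_clog one_lt_two _) 4
    _ = 2 ^ (4 * Nat.clog 2 (n + 2)) := by rw [← pow_mul, mul_comm]

theorem pls_for_path_outerplanarity_general (c : ℕ) :
    ∃ C : ℕ, 0 < C ∧
      ∃ (s : ℕ → ℕ)
        (A : (n : ℕ) → ℕ → (Fin (s n) → Bool) → Multiset (Fin (s n) → Bool) → Bool),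
        (∀ n : ℕ, s n ≤ C * Nat.clog 2 (n + 2)) ∧
        IsPLS c s A (fun _n G => IsPathOuterplanar G) := by
  obtain ⟨A, hA⟩ := (isPLSWith_accepts c).exists_isPLS card_label_le
  exact ⟨4, by norm_num, _, A, fun _ => le_rfl, hA⟩

/-- There is a proof-labeling scheme with `O(log n)`-bit certificates for the class of
path-outerplanar graphs. -/
theorem pls_for_path_outerplanarity (c : ℕ) (hc : 2 ≤ c) :
    ∃ C : ℕ, 0 < C ∧
      ∃ (s : ℕ → ℕ)
        (A : (n : ℕ) → ℕ → (Fin (s n) → Bool) → Multiset (Fin (s n) → Bool) → Bool),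
        (∀ n : ℕ, s n ≤ C * Nat.clog 2 (n + 2)) ∧
        IsPLS c s A (fun _n G => IsPathOuterplanar G) :=
  pls_for_path_outerplanarity_general c
end

section
/- Let 𝒞 be the class of connected simple graphs having neither K_4 nor K_{2,3} as a minor (the class of connected outerplanar graphs). Then for every function g : ℕ → ℕ that is o(log n), there is no family of local verifiers with certificate length g that is a locally checkable proof for 𝒞. -/
/-- `K_k` is a minor of `G`: `k` pairwise disjoint nonempty connected subsets,
pairwise joined by an edge. -/
def HasCliqueMinor {V : Type*} (G : SimpleGraph V) (k : ℕ) : Prop :=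
  ∃ S : Fin k → Set V,
    (∀ i, (S i).Nonempty) ∧
    (∀ i j, i ≠ j → Disjoint (S i) (S j)) ∧
    (∀ i, (G.induce (S i)).Connected) ∧
    (∀ i j, i ≠ j → ∃ u ∈ S i, ∃ v ∈ S j, G.Adj u v)

/-- `K_{p,q}` is a minor of `G`. -/
def HasBipartiteMinor {V : Type*} (G : SimpleGraph V) (p q : ℕ) : Prop :=
  ∃ (S : Fin p → Set V) (T : Fin q → Set V),
    (∀ i, (S i).Nonempty) ∧ (∀ j, (T j).Nonempty) ∧
    (∀ i j, i ≠ j → Disjoint (S i) (S j)) ∧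
    (∀ i j, i ≠ j → Disjoint (T i) (T j)) ∧
    (∀ i j, Disjoint (S i) (T j)) ∧
    (∀ i, (G.induce (S i)).Connected) ∧
    (∀ j, (G.induce (T j)).Connected) ∧
    (∀ i j, ∃ u ∈ S i, ∃ v ∈ T j, G.Adj u v)

open Classical in
/-- The family of local verifiers `A` with certificate length `g` is a locally checkable
proof for the class `C` of graphs (identifiers are taken in `Fin (n ^ 2)`). -/
def IsLCP (g : ℕ → ℕ)
    (A : (n : ℕ) → ℕ → (Fin (g n) → Bool) → Finset (ℕ × (Fin (g n) → Bool)) → Bool)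
    (C : (n : ℕ) → SimpleGraph (Fin n) → Prop) : Prop :=
  ∀ n : ℕ, 1 ≤ n → ∀ G : SimpleGraph (Fin n), G.Connected →
    ∀ ids : Fin n → Fin (n ^ 2), Function.Injective ids →
      (C n G ↔ ∃ cert : Fin n → (Fin (g n) → Bool),
        ∀ v : Fin n,
          A n (ids v) (cert v)
            ((Finset.univ.filter (fun u => G.Adj v u)).image
              (fun u => ((ids u : ℕ), cert u))) = true)

/-- `g` is `o(log n)`. -/
def IsLittleOLog (g : ℕ → ℕ) : Prop :=
  ∀ ε : ℝ, 0 < ε → ∃ n₀ : ℕ, ∀ n : ℕ, n₀ ≤ n → (g n : ℝ) ≤ ε * Real.logb 2 n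


namespace OPL

open Classical

open Classical

abbrev VT (B : ℕ) := Fin (3*B+3) ⊕ (Fin B × Fin 4)

variable {B : ℕ}

def ESpec (α β : Equiv.Perm (Fin B)) : VT B → VT B → Prop
  | Sum.inl k, Sum.inl k' => (k' : ℕ) = (k : ℕ) + 1
  | Sum.inl k, Sum.inr p => p.2 = 0 ∧ (k : ℕ) = 3 * (p.1 : ℕ)
  | Sum.inr p, Sum.inl k => p.2 = 3 ∧ (k : ℕ) = 3 * ((α⁻¹ p.1 : Fin B) : ℕ) + 1
  | Sum.inr p, Sum.inr q =>
      (p.1 = q.1 ∧ p.2 = 0 ∧ q.2 = 1) ∨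
      (p.2 = 1 ∧ q.2 = 2 ∧ q.1 = β p.1) ∨
      (p.1 = q.1 ∧ p.2 = 2 ∧ q.2 = 3)

def Gr (α β : Equiv.Perm (Fin B)) : SimpleGraph (VT B) where
  Adj u v := ESpec α β u v ∨ ESpec α β v u
  symm := ⟨fun u v h => h.symm⟩
  loopless := ⟨by
    rintro (k | p) h
    · rcases h with h | h <;> simp [ESpec] at h
    · rcases h with h | h <;>
      · simp only [ESpec] at h
        rcases h with ⟨-, h2, h3⟩ | ⟨h2, h3, -⟩ | ⟨-, h2, h3⟩ <;>
          (rw [h2] at h3; exact absurd h3 (by decide))⟩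

lemma gr_adj {α β : Equiv.Perm (Fin B)} {u v : VT B} :
    (Gr α β).Adj u v ↔ ESpec α β u v ∨ ESpec α β v u := Iff.rfl

def pos (π : Equiv.Perm (Fin B)) : VT B → ℕ
  | Sum.inl k => k
  | Sum.inr p => if (p.2 : ℕ) ≤ 1 then 3 * (p.1 : ℕ) else 3 * ((π⁻¹ p.1 : Fin B) : ℕ)

def ordv : VT B → ℕ
  | Sum.inl k => k
  | Sum.inr p => 3*B+3 + 4 * (p.1 : ℕ) + (p.2 : ℕ)

lemma ordv_inj : Function.Injective (ordv (B := B)) := by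
  rintro (k | ⟨i, r⟩) (k' | ⟨i', r'⟩) h <;> simp only [ordv] at h
  · exact congrArg Sum.inl (Fin.ext h)
  · exact absurd h (by omega)
  · exact absurd h (by omega)
  · have hi : (i : ℕ) = i' ∧ (r : ℕ) = r' := by omega
    exact congrArg Sum.inr (Prod.ext (Fin.ext hi.1) (Fin.ext hi.2))

lemma pos_le (π : Equiv.Perm (Fin B)) (v : VT B) : pos π v ≤ 3*B+2 := by
  rcases v with k | ⟨i, r⟩
  · simpa [pos] using Nat.lt_succ_iff.mp k.isLt
  · have h1 : (i : ℕ) < B := i.isLt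
    have h2 : ((π⁻¹ i : Fin B) : ℕ) < B := (π⁻¹ i).isLt
    simp only [pos]
    split <;> omega

lemma fv0 : ((0 : Fin 4) : ℕ) = 0 := rfl
lemma fv1 : ((1 : Fin 4) : ℕ) = 1 := rfl
lemma fv2 : ((2 : Fin 4) : ℕ) = 2 := rfl
lemma fv3 : ((3 : Fin 4) : ℕ) = 3 := rfl

def Sid (π : Equiv.Perm (Fin B)) (m0 : ℕ) (v : VT B) : Prop :=
  m0 < pos π v ∨ (pos π v = m0 ∧ v.isRight = true)

/-- `v` is not the backbone vertex at position `m0`. -/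
def NotC (m0 : ℕ) (v : VT B) : Prop := ∀ k : Fin (3*B+3), v = Sum.inl k → (k : ℕ) ≠ m0

lemma notC_inr (m0 : ℕ) (p : Fin B × Fin 4) : NotC m0 (Sum.inr p : VT B) := by
  intro k hk; exact absurd hk (by simp)

lemma sid_eq (π : Equiv.Perm (Fin B)) (m0 : ℕ) {u v : VT B}
    (h : (Gr π π).Adj u v) (hu : NotC m0 u) (hv : NotC m0 v) :
    (Sid π m0 u ↔ Sid π m0 v) := by
  rcases u with k | ⟨i, r⟩ <;> rcases v with k' | ⟨i', r'⟩
  · have hk : (k : ℕ) ≠ m0 := hu k rfl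
    have hk' : (k' : ℕ) ≠ m0 := hv k' rfl
    have h' : (k' : ℕ) = k + 1 ∨ (k : ℕ) = k' + 1 := by
      rcases h with h | h <;> simp [ESpec] at h <;> omega
    simp only [Sid, pos, Sum.isRight]
    constructor <;> rintro (h1 | ⟨h1, h2⟩) <;> simp_all <;> omega
  · -- inl k ~ inr (i', r')
    rcases h with h | h <;> simp only [ESpec] at h
    · obtain ⟨hr, hk⟩ := h
      have hkm : (k : ℕ) ≠ m0 := hu k rfl
      subst hr
      simp only [Sid, pos, Sum.isRight, hk, fv0, fv1, fv2, fv3]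
      norm_num
      omega
    · obtain ⟨hr, hk⟩ := h
      subst hr
      simp only [Sid, pos, Sum.isRight, hk, fv0, fv1, fv2, fv3]
      norm_num
      omega
  · -- inr ~ inl : symmetric
    rcases h with h | h <;> simp only [ESpec] at h
    · obtain ⟨hr, hk⟩ := h
      subst hr
      simp only [Sid, pos, Sum.isRight, hk, fv0, fv1, fv2, fv3]
      norm_num
      omega
    · obtain ⟨hr, hk⟩ := h
      have hkm : (k' : ℕ) ≠ m0 := hv k' rfl
      subst hr
      simp only [Sid, pos, Sum.isRight, hk, fv0, fv1, fv2, fv3]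
      norm_num
      omega
  · -- inr ~ inr
    rcases h with h | h <;> simp only [ESpec] at h <;>
      rcases h with ⟨h1, h2, h3⟩ | ⟨h2, h3, h1⟩ | ⟨h1, h2, h3⟩ <;>
        (subst h2; subst h3) <;>
        simp only [Sid, pos, Sum.isRight, fv0, fv1, fv2, fv3] <;> norm_num
    · rw [h1]
    · rw [h1]; simp [Equiv.symm_apply_apply]
    · rw [h1]
    · rw [h1]
    · rw [h1]; simp [Equiv.symm_apply_apply]
    · rw [h1]


open Classical

-- generic helper lemmas on graphs

lemma induce_adj' {V : Type*} {G : SimpleGraph V} {A : Set V} {a b : ↥A}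
    (h : (G.induce A).Adj a b) : G.Adj a.1 b.1 := by
  simpa [SimpleGraph.induce] using h

lemma induce_adj_of {V : Type*} {G : SimpleGraph V} {A : Set V} {a b : ↥A}
    (h : G.Adj a.1 b.1) : (G.induce A).Adj a b := by
  simpa [SimpleGraph.induce] using h

lemma conn_const {V : Type*} {G : SimpleGraph V} {A : Set V}
    (hconn : (G.induce A).Connected) (P : V → Prop)
    (hP : ∀ x y, G.Adj x y → x ∈ A → y ∈ A → (P x ↔ P y))
    {x y : V} (hx : x ∈ A) (hy : y ∈ A) : P x ↔ P y := by
  have key : ∀ (a b : ↥A) (_w : (G.induce A).Walk a b), (P a.1 ↔ P b.1) := by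
    intro a b w
    induction w with
    | nil => exact Iff.rfl
    | @cons x' y' z' h p ih =>
      exact (hP _ _ (induce_adj' h) x'.2 y'.2).trans ih
  exact (hconn.preconnected ⟨x, hx⟩ ⟨y, hy⟩).elim (fun w => key _ _ w)

lemma shrink_conn {V : Type*} {G : SimpleGraph V} {A : Set V} {c : V}
    (hcA : c ∈ A) (hconn : (G.induce A).Connected) (P : V → Prop)
    (hP : ∀ x y, G.Adj x y → x ≠ c → y ≠ c → (P x ↔ P y)) :
    (G.induce {x | x ∈ A ∧ (x = c ∨ P x)}).Connected := by
  set A' : Set V := {x | x ∈ A ∧ (x = c ∨ P x)} with hA'def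
  have hcA' : c ∈ A' := ⟨hcA, Or.inl rfl⟩
  have key : ∀ (a b : ↥A) (_w : (G.induce A).Walk a b), (b : V) = c → ∀ (ha' : a.1 ∈ A'),
      (G.induce A').Reachable ⟨a.1, ha'⟩ ⟨c, hcA'⟩ := by
    intro a b w
    induction w with
    | @nil u =>
      intro hb ha'
      have h2 : (⟨u.1, ha'⟩ : ↥A') = ⟨c, hcA'⟩ := Subtype.ext hb
      rw [h2]
    | @cons x' y' z' h p ih =>
      intro hz hx'
      by_cases hxc : (x' : V) = c
      · have : (⟨x'.1, hx'⟩ : ↥A') = ⟨c, hcA'⟩ := Subtype.ext hxc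
        rw [this]
      · by_cases hyc : (y' : V) = c
        · have hadj : (G.induce A').Adj ⟨x'.1, hx'⟩ ⟨c, hcA'⟩ := by
            apply induce_adj_of
            have := induce_adj' h
            rwa [hyc] at this
          exact hadj.reachable
        · have hPx : P x'.1 := hx'.2.resolve_left hxc
          have hPy : P y'.1 := (hP x'.1 y'.1 (induce_adj' h) hxc hyc).mp hPx
          have hy' : y'.1 ∈ A' := ⟨y'.2, Or.inr hPy⟩
          have hadj : (G.induce A').Adj ⟨x'.1, hx'⟩ ⟨y'.1, hy'⟩ :=
            induce_adj_of (induce_adj' h)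
          exact hadj.reachable.trans (ih hz hy')
  have hreach : ∀ u : ↥A', (G.induce A').Reachable u ⟨c, hcA'⟩ := by
    intro u
    have hu : u.1 ∈ A := u.2.1
    exact (hconn.preconnected ⟨u.1, hu⟩ ⟨c, hcA⟩).elim
      (fun w => by simpa using key ⟨u.1, hu⟩ ⟨c, hcA⟩ w rfl u.2)
  rw [SimpleGraph.connected_iff]
  exact ⟨fun u v => (hreach u).trans (hreach v).symm, ⟨⟨c, hcA'⟩⟩⟩

lemma conn_count {V : Type*} [Fintype V] (G : SimpleGraph V) (ord : V → ℕ)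
    (hord : Function.Injective ord) (A : Set V) (hconn : (G.induce A).Connected) :
    (Finset.univ.filter (· ∈ A)).card ≤
      (((Finset.univ.filter (· ∈ A)) ×ˢ (Finset.univ.filter (· ∈ A))).filter
        (fun p => G.Adj p.1 p.2 ∧ ord p.1 < ord p.2)).card + 1 := by
  classical
  obtain ⟨r⟩ := hconn.nonempty
  set H := G.induce A with hH
  have hpre := hconn.preconnected
  have key : ∀ v : ↥A, v ≠ r → ∃ u : ↥A, H.Adj v u ∧ H.dist u r < H.dist v r := by
    intro v hv
    obtain ⟨p, hp⟩ := (hpre v r).exists_walk_length_eq_dist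
    have hd0 : 0 < H.dist v r := hconn.pos_dist_of_ne hv
    cases p with
    | nil => rw [← hp] at hd0; simp at hd0
    | @cons _ u _ h q =>
      refine ⟨u, h, ?_⟩
      have h1 : H.dist u r ≤ q.length := SimpleGraph.dist_le q
      have h2 : q.length + 1 = H.dist v r := by simpa using hp
      omega
  let par : ↥A → ↥A := fun v => if h : v ≠ r then (key v h).choose else r
  have hpar_adj : ∀ v : ↥A, v ≠ r → H.Adj v (par v) := by
    intro v h; simp only [par, dif_pos h]; exact (key v h).choose_spec.1
  have hpar_dist : ∀ v : ↥A, v ≠ r → H.dist (par v) r < H.dist v r := by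
    intro v h; simp only [par, dif_pos h]; exact (key v h).choose_spec.2
  let f : ↥A → V × V := fun v =>
    if ord v.1 < ord (par v).1 then (v.1, (par v).1) else ((par v).1, v.1)
  have hmap : ∀ v ∈ Finset.univ.erase r, f v ∈
      (((Finset.univ.filter (· ∈ A)) ×ˢ (Finset.univ.filter (· ∈ A))).filter
        (fun p => G.Adj p.1 p.2 ∧ ord p.1 < ord p.2)) := by
    intro v hv
    have hvr : v ≠ r := (Finset.mem_erase.mp hv).1
    have hadj : G.Adj v.1 (par v).1 := induce_adj' (hpar_adj v hvr)
    have hne : ord v.1 ≠ ord (par v).1 := by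
      intro he
      exact (hpar_adj v hvr).ne (Subtype.ext (hord he))
    simp only [f, Finset.mem_filter, Finset.mem_product, Finset.mem_univ, true_and]
    by_cases hlt : ord v.1 < ord (par v).1
    · rw [if_pos hlt]
      exact ⟨⟨v.2, (par v).2⟩, hadj, hlt⟩
    · rw [if_neg hlt]
      exact ⟨⟨(par v).2, v.2⟩, hadj.symm, show ord (par v).1 < ord v.1 by omega⟩
  have hinj : Set.InjOn f ↑(Finset.univ.erase r (α := ↥A)) := by
    intro v hv w hw he
    have hvr : v ≠ r := (Finset.mem_erase.mp (Finset.mem_coe.mp hv)).1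
    have hwr : w ≠ r := (Finset.mem_erase.mp (Finset.mem_coe.mp hw)).1
    by_contra hne
    -- from he, {v, par v} = {w, par w} with v ≠ w, so v = par w and w = par v
    have hpair : (v.1 = w.1 ∧ (par v).1 = (par w).1) ∨ (v.1 = (par w).1 ∧ (par v).1 = w.1) := by
      simp only [f] at he
      split_ifs at he <;>
        obtain ⟨h1, h2⟩ := Prod.ext_iff.mp he <;>
        first
        | exact Or.inl ⟨h1, h2⟩
        | exact Or.inr ⟨h1, h2⟩
        | exact Or.inl ⟨h2, h1⟩
        | exact Or.inr ⟨h2, h1⟩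
    rcases hpair with ⟨h1, _⟩ | ⟨h1, h2⟩
    · exact hne (Subtype.ext h1)
    · have hv' : v = par w := Subtype.ext h1
      have hw' : w = par v := Subtype.ext h2.symm
      have d1 := hpar_dist v hvr
      have d2 := hpar_dist w hwr
      rw [← hw'] at d1
      rw [← hv'] at d2
      omega
  have hcard := Finset.card_le_card_of_injOn f hmap hinj
  have h1 : (Finset.univ.erase r (α := ↥A)).card = Fintype.card ↥A - 1 := by
    rw [Finset.card_erase_of_mem (Finset.mem_univ r), Finset.card_univ]
  have h2 : (Finset.univ.filter (· ∈ A)).card = Fintype.card ↥A := by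
    simp [Fintype.card_subtype]
  have h3 : 1 ≤ Fintype.card ↥A := Fintype.card_pos_iff.mpr ⟨r⟩
  omega


lemma gr_conn (α β : Equiv.Perm (Fin B)) : (Gr α β).Connected := by
  have h0 : (0:ℕ) < 3*B+3 := by omega
  set v0 : VT B := Sum.inl ⟨0, h0⟩ with hv0
  have hbb : ∀ n : ℕ, ∀ k : Fin (3*B+3), (k : ℕ) = n → (Gr α β).Reachable (Sum.inl k) v0 := by
    intro n
    induction n with
    | zero =>
      intro k hk
      have : k = ⟨0, h0⟩ := Fin.ext hk
      rw [this]
    | succ n ih =>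
      intro k hk
      have hn : n < 3*B+3 := by omega
      have hadj : (Gr α β).Adj (Sum.inl k) (Sum.inl (⟨n, hn⟩ : Fin (3*B+3))) := by
        right
        show ESpec α β _ _
        simp only [ESpec]
        omega
      exact hadj.reachable.trans (ih ⟨n, hn⟩ rfl)
  have hreach : ∀ v : VT B, (Gr α β).Reachable v v0 := by
    rintro (k | ⟨i, r⟩)
    · exact hbb k k rfl
    · have hib : 3 * (i:ℕ) < 3*B+3 := by have := i.isLt; omega
      have hib' : 3 * ((α⁻¹ i : Fin B) : ℕ) + 1 < 3*B+3 := by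
        have := (α⁻¹ i).isLt; omega
      have hx : (Gr α β).Adj (Sum.inr (i, 0)) (Sum.inl ⟨3 * (i:ℕ), hib⟩) := by
        right; show ESpec α β _ _; simp [ESpec]
      have hy : (Gr α β).Adj (Sum.inr (i, 3)) (Sum.inl ⟨3 * ((α⁻¹ i : Fin B) : ℕ) + 1, hib'⟩) := by
        left; show ESpec α β _ _; simp [ESpec]
      have hxa : (Gr α β).Adj (Sum.inr (i, 1)) (Sum.inr (i, 0)) := by
        right; show ESpec α β _ _; simp [ESpec]
      have hby : (Gr α β).Adj (Sum.inr (i, 2)) (Sum.inr (i, 3)) := by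
        left; show ESpec α β _ _; simp [ESpec]
      have r0 : (Gr α β).Reachable (Sum.inr (i, 0)) v0 := hx.reachable.trans (hbb _ _ rfl)
      have r3 : (Gr α β).Reachable (Sum.inr (i, 3)) v0 := hy.reachable.trans (hbb _ _ rfl)
      fin_cases r
      · exact r0
      · exact hxa.reachable.trans r0
      · exact hby.reachable.trans r3
      · exact r3
  rw [SimpleGraph.connected_iff]
  exact ⟨fun u v => (hreach u).trans (hreach v).symm, ⟨v0⟩⟩


def hd : VT B × VT B → VT B
  | (Sum.inl k, Sum.inl _) => Sum.inl k
  | (Sum.inl k, Sum.inr p) => if p.2 = 3 then Sum.inl k else Sum.inr p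
  | (Sum.inr _, Sum.inl k) => Sum.inl k
  | (Sum.inr p, Sum.inr q) => if (p.2:ℕ) < (q.2:ℕ) then Sum.inr q else Sum.inr p

lemma hd_mem (p : VT B × VT B) : hd p = p.1 ∨ hd p = p.2 := by
  obtain ⟨u, v⟩ := p
  rcases u with k | w <;> rcases v with k' | w' <;> simp only [hd] <;>
    try split_ifs <;> simp
  · simp
  · simp

lemma hdll (k k' : Fin (3*B+3)) : hd (Sum.inl k, Sum.inl k') = Sum.inl k := rfl
lemma hdl0 (k : Fin (3*B+3)) (b : Fin B) :
    hd (Sum.inl k, Sum.inr (b, (0:Fin 4))) = Sum.inr (b, 0) := by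
  simp only [hd]; rw [if_neg (by decide)]
lemma hdl3 (k : Fin (3*B+3)) (b : Fin B) :
    hd (Sum.inl k, Sum.inr (b, (3:Fin 4))) = Sum.inl k := by
  simp only [hd]; rw [if_pos (by decide)]
lemma hd01 (a b : Fin B) :
    hd (Sum.inr (a,(0:Fin 4)), Sum.inr (b,(1:Fin 4))) = Sum.inr (b,1) := by
  simp only [hd]; rw [if_pos (by decide)]
lemma hd12 (a b : Fin B) :
    hd (Sum.inr (a,(1:Fin 4)), Sum.inr (b,(2:Fin 4))) = Sum.inr (b,2) := by
  simp only [hd]; rw [if_pos (by decide)]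
lemma hd21 (a b : Fin B) :
    hd (Sum.inr (a,(2:Fin 4)), Sum.inr (b,(1:Fin 4))) = Sum.inr (a,2) := by
  simp only [hd]; rw [if_neg (by decide)]
lemma hd23 (a b : Fin B) :
    hd (Sum.inr (a,(2:Fin 4)), Sum.inr (b,(3:Fin 4))) = Sum.inr (b,3) := by
  simp only [hd]; rw [if_pos (by decide)]

lemma edge_shape (π : Equiv.Perm (Fin B)) {u v : VT B}
    (h : (Gr π π).Adj u v) (hs : ordv u < ordv v) :
    (∃ k k' : Fin (3*B+3), u = Sum.inl k ∧ v = Sum.inl k' ∧ (k':ℕ) = (k:ℕ)+1) ∨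
    (∃ (k : Fin (3*B+3)) (i : Fin B), u = Sum.inl k ∧ v = Sum.inr (i, 0) ∧ (k:ℕ) = 3*(i:ℕ)) ∨
    (∃ (k : Fin (3*B+3)) (j : Fin B),
      u = Sum.inl k ∧ v = Sum.inr (j, 3) ∧ (k:ℕ) = 3*((π⁻¹ j : Fin B):ℕ)+1) ∨
    (∃ i : Fin B, u = Sum.inr (i,0) ∧ v = Sum.inr (i,1)) ∨
    (∃ i : Fin B, (u = Sum.inr (i,1) ∧ v = Sum.inr (π i, 2)) ∨
        (u = Sum.inr (π i, 2) ∧ v = Sum.inr (i,1))) ∨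
    (∃ j : Fin B, u = Sum.inr (j,2) ∧ v = Sum.inr (j,3)) := by
  rcases u with k | ⟨i, r⟩ <;> rcases v with k' | ⟨i', r'⟩
  · -- inl inl
    left
    refine ⟨k, k', rfl, rfl, ?_⟩
    simp only [ordv] at hs
    rcases h with h | h <;> simp only [ESpec] at h <;> omega
  · -- inl inr
    rcases h with h | h <;> simp only [ESpec] at h
    · obtain ⟨hr, hk⟩ := h
      right; left
      exact ⟨k, i', rfl, by rw [hr], hk⟩
    · obtain ⟨hr, hk⟩ := h
      right; right; left
      exact ⟨k, i', rfl, by rw [hr], hk⟩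
  · -- inr inl : impossible by sorting
    exfalso
    simp only [ordv] at hs
    have := k'.isLt
    omega
  · -- inr inr
    rcases h with h | h <;> simp only [ESpec] at h <;>
      rcases h with ⟨h1, h2, h3⟩ | ⟨h2, h3, h1⟩ | ⟨h1, h2, h3⟩
    · right; right; right; left
      exact ⟨i, by rw [h1, h2], by rw [h3, h1]⟩
    · right; right; right; right; left
      refine ⟨i, Or.inl ⟨by rw [h2], ?_⟩⟩
      rw [h3, h1]
    · right; right; right; right; right
      exact ⟨i, by rw [h1, h2], by rw [h3, h1]⟩
    · -- ESpec (inr (i',r')) (inr (i,r)) case 1 : u=(i,1) v=(i,0) contra sort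
      exfalso
      simp only [ordv] at hs
      rw [h1, h2, h3] at hs
      have e1 : ((0:Fin 4):ℕ) = 0 := rfl
      have e2 : ((1:Fin 4):ℕ) = 1 := rfl
      rw [e1, e2] at hs
      omega
    · right; right; right; right; left
      refine ⟨i', Or.inr ⟨?_, by rw [h2]⟩⟩
      rw [h3, h1]
    · exfalso
      simp only [ordv] at hs
      rw [h1, h2, h3] at hs
      have e1 : ((2:Fin 4):ℕ) = 2 := rfl
      have e2 : ((3:Fin 4):ℕ) = 3 := rfl
      rw [e1, e2] at hs
      omega


lemma band_bound (π : Equiv.Perm (Fin B)) (t : ℕ) (W : Finset (VT B))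
    (hW : ∀ v ∈ W, pos π v = t ∨ pos π v = t+1) :
    ((W ×ˢ W).filter (fun p => (Gr π π).Adj p.1 p.2 ∧ ordv p.1 < ordv p.2)).card ≤ W.card := by
  apply Finset.card_le_card_of_injOn hd
  · intro p hp
    simp only [Finset.mem_coe, Finset.mem_filter, Finset.mem_product] at hp ⊢
    rcases hd_mem p with h | h <;> rw [h] <;> tauto
  · intro p hp q hq he
    simp only [Finset.mem_coe, Finset.mem_filter, Finset.mem_product] at hp hq
    obtain ⟨⟨hp1, hp2⟩, hpa, hps⟩ := hp
    obtain ⟨⟨hq1, hq2⟩, hqa, hqs⟩ := hq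
    obtain ⟨u, v⟩ := p
    obtain ⟨x, y⟩ := q
    simp only at hp1 hp2 hq1 hq2 hpa hps hqa hqs he ⊢
    rcases edge_shape π hpa hps with
      ⟨k,k',rfl,rfl,hk⟩|⟨k,i,rfl,rfl,hk⟩|⟨k,j,rfl,rfl,hk⟩|⟨i,rfl,rfl⟩|⟨i,⟨rfl,rfl⟩|⟨rfl,rfl⟩⟩|⟨j,rfl,rfl⟩ <;>
      rcases edge_shape π hqa hqs with
        ⟨k₂,k₂',rfl,rfl,hk₂⟩|⟨k₂,i₂,rfl,rfl,hk₂⟩|⟨k₂,j₂,rfl,rfl,hk₂⟩|⟨i₂,rfl,rfl⟩|⟨i₂,⟨rfl,rfl⟩|⟨rfl,rfl⟩⟩|⟨j₂,rfl,rfl⟩ <;>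
      simp only [hdll, hdl0, hdl3, hd01, hd12, hd21, hd23] at he <;>
      try simp at he
    -- (1,1)
    · subst he
      have hkk : k' = k₂' := Fin.ext (by omega)
      rw [hkk]
    -- (1,3)
    · exfalso
      have w1 := hW _ hp1
      have w2 := hW _ hp2
      have w3 := hW _ hq2
      simp only [pos] at w1 w2 w3
      rw [if_neg (by decide)] at w3
      have hv : (k:ℕ) = (k₂:ℕ) := by rw [he]
      omega
    -- (2,2)
    · subst he
      have hkk : k = k₂ := Fin.ext (by omega)
      rw [hkk]
    -- (3,1)
    · exfalso
      have w1 := hW _ hq1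
      have w2 := hW _ hq2
      have w3 := hW _ hp2
      simp only [pos] at w1 w2 w3
      rw [if_neg (by decide)] at w3
      have hv : (k:ℕ) = (k₂:ℕ) := by rw [he]
      omega
    -- (3,3)
    · subst he
      have hj : π⁻¹ j = π⁻¹ j₂ := Fin.ext (by omega)
      have hjj : j = j₂ := by
        have h2 := congrArg (⇑π) hj
        simpa only [Equiv.Perm.coe_inv, Equiv.apply_symm_apply] using h2
      rw [hjj]
    -- (4,4)
    · rw [he]
    -- (5L,5L)
    · have hii : i = i₂ := by first | exact he | exact π.injective he
      rw [hii]
    -- (5L,5R)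
    · exfalso
      have hii : i = i₂ := by first | exact he | exact π.injective he
      subst hii
      have e1 : ((1:Fin 4):ℕ) = 1 := rfl
      have e2 : ((2:Fin 4):ℕ) = 2 := rfl
      simp only [ordv, e1, e2] at hps hqs
      omega
    -- (5R,5L)
    · exfalso
      have hii : i = i₂ := by first | exact he | exact π.injective he
      subst hii
      have e1 : ((1:Fin 4):ℕ) = 1 := rfl
      have e2 : ((2:Fin 4):ℕ) = 2 := rfl
      simp only [ordv, e1, e2] at hps hqs
      omega
    -- (5R,5R)
    · have hii : i = i₂ := by first | exact he | exact π.injective he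
      rw [hii]
    -- (6,6)
    · rw [he]


lemma notC_of_ne {m0 : ℕ} (hm0 : m0 < 3*B+3) {v : VT B} (h : v ≠ Sum.inl ⟨m0, hm0⟩) :
    NotC m0 v := by
  rintro k rfl hk
  exact h (by rw [show k = (⟨m0, hm0⟩ : Fin (3*B+3)) from Fin.ext hk])

lemma exists_other {m : ℕ} (hm : 2 ≤ m) (a : Fin m) : ∃ i : Fin m, i ≠ a := by
  by_cases h : a = ⟨0, by omega⟩
  · refine ⟨⟨1, by omega⟩, ?_⟩
    rw [h]
    intro hh
    exact absurd (congrArg Fin.val hh) (by simp)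
  · exact ⟨⟨0, by omega⟩, fun hh => h hh.symm⟩

lemma exists_third {m : ℕ} (hm : 3 ≤ m) (i j : Fin m) : ∃ a : Fin m, a ≠ i ∧ a ≠ j := by
  have hv : ∃ v : ℕ, v < m ∧ v ≠ i.val ∧ v ≠ j.val := by
    refine ⟨if i.val = 0 then (if j.val = 1 then 2 else 1)
      else (if j.val = 0 then (if i.val = 1 then 2 else 1) else 0), ?_⟩
    split_ifs <;> omega
  obtain ⟨v, hv3, hvi, hvj⟩ := hv
  exact ⟨⟨v, hv3⟩, fun h => hvi (congrArg Fin.val h), fun h => hvj (congrArg Fin.val h)⟩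

lemma bif_eq {P Q : Prop} (h : (if P then true else false) = (if Q then true else false)) :
    P ↔ Q := by
  by_cases hP : P <;> by_cases hQ : Q <;> simp_all

lemma bif_of_iff {P Q : Prop} (h : P ↔ Q) :
    (if P then true else false) = (if Q then true else false) := by
  by_cases hP : P <;> by_cases hQ : Q <;> simp_all

lemma final_count (π : Equiv.Perm (Fin B)) {m : ℕ} (pat : Finset (Fin m × Fin m))
    (hlt : ∀ p ∈ pat, p.1 < p.2)
    (hcard : m < pat.card)
    (S : Fin m → Set (VT B))
    (hdisj : ∀ i j, i ≠ j → Disjoint (S i) (S j))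
    (hc : ∀ i, ((Gr π π).induce (S i)).Connected)
    (hadj : ∀ p ∈ pat, ∃ u ∈ S p.1, ∃ v ∈ S p.2, (Gr π π).Adj u v)
    (t : ℕ) (hband : ∀ i, ∀ v, v ∈ S i → pos π v = t ∨ pos π v = t + 1) : False := by
  classical
  set G := Gr π π with hG
  set SF : Fin m → Finset (VT B) := fun i => Finset.univ.filter (· ∈ S i) with hSF
  set U : Finset (VT B) := Finset.univ.filter (fun v => ∃ i, v ∈ S i) with hUdef
  set EP : Finset (VT B) → Finset (VT B × VT B) := fun W =>
    (W ×ˢ W).filter (fun p => G.Adj p.1 p.2 ∧ ordv p.1 < ordv p.2) with hEP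
  have hmemSF : ∀ i v, v ∈ SF i ↔ v ∈ S i := by
    intro i v; simp [hSF]
  have hmemU : ∀ v, v ∈ U ↔ ∃ i, v ∈ S i := by
    intro v; simp [hUdef]
  have hdisj' : ∀ i j : Fin m, i ≠ j → ∀ v, v ∈ S i → v ∈ S j → False := by
    intro i j hij v hvi hvj
    exact Set.disjoint_left.mp (hdisj i j hij) hvi hvj
  -- U as biUnion
  have hUbi : U = Finset.univ.biUnion SF := by
    ext v
    simp [hUdef, hSF]
  have hSFdisj : ∀ i ∈ (Finset.univ : Finset (Fin m)), ∀ j ∈ Finset.univ, i ≠ j →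
      Disjoint (SF i) (SF j) := by
    intro i _ j _ hij
    rw [Finset.disjoint_left]
    intro v hvi hvj
    exact hdisj' i j hij v ((hmemSF i v).mp hvi) ((hmemSF j v).mp hvj)
  have hUcard : U.card = ∑ i, (SF i).card := by
    rw [hUbi]; exact Finset.card_biUnion hSFdisj
  -- per-set lower bound
  have hper : ∀ i, (SF i).card ≤ (EP (SF i)).card + 1 := by
    intro i
    exact conn_count G ordv ordv_inj (S i) (hc i)
  -- EP (SF i) are pairwise disjoint subsets of EP U, and their biUnion misses cross edges
  have hEPsub : ∀ i, EP (SF i) ⊆ EP U := by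
    intro i p hp
    simp only [hEP, Finset.mem_filter, Finset.mem_product] at hp ⊢
    refine ⟨⟨?_, ?_⟩, hp.2⟩
    · exact (hmemU _).mpr ⟨i, (hmemSF _ _).mp hp.1.1⟩
    · exact (hmemU _).mpr ⟨i, (hmemSF _ _).mp hp.1.2⟩
  have hEPdisj : ∀ i ∈ (Finset.univ : Finset (Fin m)), ∀ j ∈ Finset.univ, i ≠ j →
      Disjoint (EP (SF i)) (EP (SF j)) := by
    intro i _ j _ hij
    rw [Finset.disjoint_left]
    intro p hpi hpj
    simp only [hEP, Finset.mem_filter, Finset.mem_product] at hpi hpj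
    exact hdisj' i j hij p.1 ((hmemSF _ _).mp hpi.1.1) ((hmemSF _ _).mp hpj.1.1)
  -- cross witnesses
  have hwit : ∀ p : Fin m × Fin m, p ∈ pat → ∃ q : VT B × VT B,
      q.1 ∈ S p.1 ∧ q.2 ∈ S p.2 ∧ G.Adj q.1 q.2 := by
    intro p hp
    obtain ⟨u, hu, v, hv, ha⟩ := hadj p hp
    exact ⟨(u, v), hu, hv, ha⟩
  let dflt : VT B × VT B := (Sum.inl ⟨0, by omega⟩, Sum.inl ⟨0, by omega⟩)
  let wit : Fin m × Fin m → VT B × VT B := fun p =>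
    if hp : p ∈ pat then (hwit p hp).choose else dflt
  have hwit1 : ∀ p ∈ pat, (wit p).1 ∈ S p.1 := by
    intro p hp; simp only [wit, dif_pos hp]; exact (hwit p hp).choose_spec.1
  have hwit2 : ∀ p ∈ pat, (wit p).2 ∈ S p.2 := by
    intro p hp; simp only [wit, dif_pos hp]; exact (hwit p hp).choose_spec.2.1
  have hwita : ∀ p ∈ pat, G.Adj (wit p).1 (wit p).2 := by
    intro p hp; simp only [wit, dif_pos hp]; exact (hwit p hp).choose_spec.2.2
  let swit : Fin m × Fin m → VT B × VT B := fun p =>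
    if ordv (wit p).1 < ordv (wit p).2 then wit p else ((wit p).2, (wit p).1)
  set crossF : Finset (VT B × VT B) := pat.image swit with hcrossF
  have hswit_mem : ∀ p ∈ pat, swit p ∈ EP U := by
    intro p hp
    have h1 := hwit1 p hp
    have h2 := hwit2 p hp
    have ha := hwita p hp
    have hne12 : ordv (wit p).1 ≠ ordv (wit p).2 := by
      intro h
      exact ha.ne (ordv_inj h)
    simp only [hEP, Finset.mem_filter, Finset.mem_product]
    by_cases hlt12 : ordv (wit p).1 < ordv (wit p).2
    · rw [show swit p = wit p from if_pos hlt12]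
      exact ⟨⟨(hmemU _).mpr ⟨p.1, h1⟩, (hmemU _).mpr ⟨p.2, h2⟩⟩, ha, hlt12⟩
    · rw [show swit p = ((wit p).2, (wit p).1) from if_neg hlt12]
      exact ⟨⟨(hmemU _).mpr ⟨p.2, h2⟩, (hmemU _).mpr ⟨p.1, h1⟩⟩, ha.symm,
        show ordv (wit p).2 < ordv (wit p).1 by omega⟩
  have hswit_inj : Set.InjOn swit ↑pat := by
    intro p hp q hq he
    have hp1 := hwit1 p (Finset.mem_coe.mp hp)
    have hp2 := hwit2 p (Finset.mem_coe.mp hp)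
    have hq1 := hwit1 q (Finset.mem_coe.mp hq)
    have hq2 := hwit2 q (Finset.mem_coe.mp hq)
    have hpair : ((wit p).1 = (wit q).1 ∧ (wit p).2 = (wit q).2) ∨
        ((wit p).1 = (wit q).2 ∧ (wit p).2 = (wit q).1) := by
      simp only [swit] at he
      split_ifs at he <;>
        obtain ⟨h1, h2⟩ := Prod.ext_iff.mp he <;>
        first
        | exact Or.inl ⟨h1, h2⟩
        | exact Or.inr ⟨h1, h2⟩
        | exact Or.inl ⟨h2, h1⟩
        | exact Or.inr ⟨h2, h1⟩
    have hlp := hlt p (Finset.mem_coe.mp hp)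
    have hlq := hlt q (Finset.mem_coe.mp hq)
    rcases hpair with ⟨h1, h2⟩ | ⟨h1, h2⟩
    · -- p.1 = q.1 and p.2 = q.2
      have e1 : p.1 = q.1 := by
        by_contra hne
        exact hdisj' p.1 q.1 hne (wit p).1 hp1 (h1 ▸ hq1)
      have e2 : p.2 = q.2 := by
        by_contra hne
        exact hdisj' p.2 q.2 hne (wit p).2 hp2 (h2 ▸ hq2)
      exact Prod.ext e1 e2
    · exfalso
      have e1 : p.1 = q.2 := by
        by_contra hne
        exact hdisj' p.1 q.2 hne (wit p).1 hp1 (h1 ▸ hq2)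
      have e2 : p.2 = q.1 := by
        by_contra hne
        exact hdisj' p.2 q.1 hne (wit p).2 hp2 (h2 ▸ hq1)
      have : (p.1 : ℕ) < p.2 := hlp
      have : (q.1 : ℕ) < q.2 := hlq
      have : (p.1 : ℕ) = q.2 := congrArg Fin.val e1
      have : (p.2 : ℕ) = q.1 := congrArg Fin.val e2
      omega
  have hcross_card : crossF.card = pat.card := Finset.card_image_of_injOn hswit_inj
  have hcross_sub : crossF ⊆ EP U := by
    intro q hq
    obtain ⟨p, hp, rfl⟩ := Finset.mem_image.mp hq
    exact hswit_mem p hp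
  -- crossF disjoint from each EP (SF i)
  have hcross_disj : Disjoint (Finset.univ.biUnion (fun i => EP (SF i))) crossF := by
    rw [Finset.disjoint_right]
    intro q hq hq'
    obtain ⟨p, hp, rfl⟩ := Finset.mem_image.mp hq
    obtain ⟨i, -, hqi⟩ := Finset.mem_biUnion.mp hq'
    simp only [hEP, Finset.mem_filter, Finset.mem_product] at hqi
    have hw1 : (swit p).1 ∈ S i := (hmemSF _ _).mp hqi.1.1
    have hw2 : (swit p).2 ∈ S i := (hmemSF _ _).mp hqi.1.2
    have hp1 := hwit1 p hp
    have hp2 := hwit2 p hp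
    have hlp := hlt p hp
    have hne : p.1 ≠ p.2 := by
      intro h; rw [h] at hlp; exact lt_irrefl _ hlp
    simp only [swit] at hw1 hw2
    split_ifs at hw1 hw2
    · exact hdisj' p.1 i (by
        intro h; exact hdisj' p.1 p.2 hne (wit p).2 (h ▸ hw2) hp2) (wit p).1 hp1 hw1
    · exact hdisj' p.2 i (by
        intro h; exact hdisj' p.2 p.1 (Ne.symm hne) (wit p).1 (h ▸ hw2) hp1) (wit p).2 hp2 hw1
  -- assemble
  have hbig : (Finset.univ.biUnion (fun i => EP (SF i))) ∪ crossF ⊆ EP U := by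
    intro q hq
    rcases Finset.mem_union.mp hq with hq | hq
    · obtain ⟨i, -, hqi⟩ := Finset.mem_biUnion.mp hq
      exact hEPsub i hqi
    · exact hcross_sub hq
  have hbig_card : (∑ i, (EP (SF i)).card) + pat.card ≤ (EP U).card := by
    calc (∑ i, (EP (SF i)).card) + pat.card
        = (Finset.univ.biUnion (fun i => EP (SF i))).card + crossF.card := by
          rw [Finset.card_biUnion hEPdisj, hcross_card]
      _ = ((Finset.univ.biUnion (fun i => EP (SF i))) ∪ crossF).card := by
          rw [Finset.card_union_of_disjoint hcross_disj]
      _ ≤ (EP U).card := Finset.card_le_card hbig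
  have hband' : ∀ v ∈ U, pos π v = t ∨ pos π v = t + 1 := by
    intro v hv
    obtain ⟨i, hvi⟩ := (hmemU v).mp hv
    exact hband i v hvi
  have hupper : (EP U).card ≤ U.card := band_bound π t U hband'
  have hsum : (∑ i, (SF i).card) ≤ (∑ i, (EP (SF i)).card) + m := by
    calc (∑ i, (SF i).card) ≤ ∑ i, ((EP (SF i)).card + 1) := Finset.sum_le_sum (fun i _ => hper i)
      _ = (∑ i, (EP (SF i)).card) + m := by
        rw [Finset.sum_add_distrib]
        simp [Finset.card_univ]
  omega

theorem no_model (π : Equiv.Perm (Fin B)) {m : ℕ} (pat : Finset (Fin m × Fin m))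
    (hm : 3 ≤ m)
    (hlt : ∀ p ∈ pat, p.1 < p.2)
    (hcard : m < pat.card)
    (hpatconn : ∀ (a : Fin m) (f : Fin m → Bool),
       (∀ p ∈ pat, p.1 ≠ a → p.2 ≠ a → f p.1 = f p.2) → ∀ i j, i ≠ a → j ≠ a → f i = f j)
    (S : Fin m → Set (VT B))
    (hne : ∀ i, (S i).Nonempty)
    (hdisj : ∀ i j, i ≠ j → Disjoint (S i) (S j))
    (hc : ∀ i, ((Gr π π).induce (S i)).Connected)
    (hadj : ∀ p ∈ pat, ∃ u ∈ S p.1, ∃ v ∈ S p.2, (Gr π π).Adj u v) : False := by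
  classical
  have hm0lt : (0:ℕ) < m := by omega
  suffices H : ∀ N : ℕ, ∀ S : Fin m → Set (VT B),
      (∀ i, (S i).Nonempty) → (∀ i j, i ≠ j → Disjoint (S i) (S j)) →
      (∀ i, ((Gr π π).induce (S i)).Connected) →
      (∀ p ∈ pat, ∃ u ∈ S p.1, ∃ v ∈ S p.2, (Gr π π).Adj u v) →
      (Finset.univ.filter (fun v => ∃ i, v ∈ S i)).card ≤ N → False by
    exact H _ S hne hdisj hc hadj le_rfl
  intro N
  induction N with
  | zero =>
    intro S hne hdisj hc hadj hle
    obtain ⟨x, hx⟩ := hne ⟨0, hm0lt⟩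
    have hmem : x ∈ Finset.univ.filter (fun v => ∃ i, v ∈ S i) := by
      simp only [Finset.mem_filter, Finset.mem_univ, true_and]
      exact ⟨_, hx⟩
    have := Finset.card_pos.mpr ⟨x, hmem⟩
    omega
  | succ N ih =>
    intro S hne hdisj hc hadj hle
    have hdisj' : ∀ i j : Fin m, i ≠ j → ∀ v, v ∈ S i → v ∈ S j → False := by
      intro i j hij v hvi hvj
      exact Set.disjoint_left.mp (hdisj i j hij) hvi hvj
    set U : Finset (VT B) := Finset.univ.filter (fun v => ∃ i, v ∈ S i) with hUdef
    have hmemU : ∀ v, v ∈ U ↔ ∃ i, v ∈ S i := by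
      intro v; simp [hUdef]
    have hUne : U.Nonempty := by
      obtain ⟨x, hx⟩ := hne ⟨0, hm0lt⟩
      exact ⟨x, (hmemU x).mpr ⟨_, hx⟩⟩
    have hUineN : (U.image (pos π)).Nonempty := hUne.image _
    set lo := (U.image (pos π)).min' hUineN with hlodef
    set hi := (U.image (pos π)).max' hUineN with hhidef
    have hlo : ∀ v ∈ U, lo ≤ pos π v := by
      intro v hv
      exact Finset.min'_le _ _ (Finset.mem_image_of_mem _ hv)
    have hhi : ∀ v ∈ U, pos π v ≤ hi := by
      intro v hv
      exact Finset.le_max' _ _ (Finset.mem_image_of_mem _ hv)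
    obtain ⟨vlo, hvloU, hvlo⟩ : ∃ v ∈ U, pos π v = lo := by
      have := (U.image (pos π)).min'_mem hUineN
      rw [← hlodef] at this
      obtain ⟨v, hv, hv2⟩ := Finset.mem_image.mp this
      exact ⟨v, hv, hv2⟩
    obtain ⟨vhi, hvhiU, hvhi⟩ : ∃ v ∈ U, pos π v = hi := by
      have := (U.image (pos π)).max'_mem hUineN
      rw [← hhidef] at this
      obtain ⟨v, hv, hv2⟩ := Finset.mem_image.mp this
      exact ⟨v, hv, hv2⟩
    by_cases hrange : hi ≤ lo + 1
    · refine final_count π pat hlt hcard S hdisj hc hadj lo ?_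
      intro i v hv
      have h1 := hlo v ((hmemU v).mpr ⟨i, hv⟩)
      have h2 := hhi v ((hmemU v).mpr ⟨i, hv⟩)
      omega
    · push_neg at hrange
      set m0 := lo + 1 with hm0def
      have hm0lt3 : m0 < 3*B+3 := by
        have h1 := pos_le π vhi
        omega
      set c : VT B := Sum.inl ⟨m0, hm0lt3⟩ with hcdef
      have hposc : pos π c = m0 := rfl
      -- side facts for vlo and vhi
      have hSvlo : ¬ Sid π m0 vlo := by
        rintro (h | ⟨h, -⟩) <;> omega
      have hSvhi : Sid π m0 vhi := by
        left; omega
      have hvloc : vlo ≠ c := by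
        intro h; rw [h] at hvlo; rw [hposc] at hvlo; omega
      have hvhic : vhi ≠ c := by
        intro h; rw [h] at hvhi; rw [hposc] at hvhi; omega
      -- per-set side constancy for sets avoiding c
      have hsetconst : ∀ i, c ∉ S i → ∀ x ∈ S i, ∀ y ∈ S i,
          (Sid π m0 x ↔ Sid π m0 y) := by
        intro i hci x hx y hy
        refine conn_const (hc i) (Sid π m0) ?_ hx hy
        intro a b hab ha hb
        exact sid_eq π m0 hab
          (notC_of_ne hm0lt3 (fun h => hci (by rw [hcdef, ← h]; exact ha)))
          (notC_of_ne hm0lt3 (fun h => hci (by rw [hcdef, ← h]; exact hb)))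
      by_cases hcS : ∃ a, c ∈ S a
      · obtain ⟨a, hca⟩ := hcS
        obtain ⟨i₀, hi₀a⟩ := exists_other (by omega) a
        have hcnot : ∀ i, i ≠ a → c ∉ S i := by
          intro i hia hc'
          exact hdisj' i a hia c hc' hca
        set rep : Fin m → VT B := fun i => (hne i).choose with hrepdef
        have hrep : ∀ i, rep i ∈ S i := fun i => (hne i).choose_spec
        set σS : Prop := Sid π m0 (rep i₀) with hσdef
        set f : Fin m → Bool := fun i => if Sid π m0 (rep i) then true else false with hfdef
        have hpatf : ∀ p ∈ pat, p.1 ≠ a → p.2 ≠ a → f p.1 = f p.2 := by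
          intro p hp h1a h2a
          obtain ⟨u, hu, v, hv, hauv⟩ := hadj p hp
          have hu_c : u ≠ c := fun h => hcnot p.1 h1a (h ▸ hu)
          have hv_c : v ≠ c := fun h => hcnot p.2 h2a (h ▸ hv)
          have e1 : Sid π m0 (rep p.1) ↔ Sid π m0 u :=
            hsetconst p.1 (hcnot p.1 h1a) _ (hrep p.1) _ hu
          have e2 : Sid π m0 u ↔ Sid π m0 v :=
            sid_eq π m0 hauv (notC_of_ne hm0lt3 hu_c) (notC_of_ne hm0lt3 hv_c)
          have e3 : Sid π m0 v ↔ Sid π m0 (rep p.2) :=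
            (hsetconst p.2 (hcnot p.2 h2a) _ (hrep p.2) _ hv).symm
          exact bif_of_iff ((e1.trans e2).trans e3)
        have hallf : ∀ i j, i ≠ a → j ≠ a → f i = f j := hpatconn a f hpatf
        have hsame : ∀ i, i ≠ a → ∀ x, x ∈ S i → (Sid π m0 x ↔ σS) := by
          intro i hia x hx
          have e1 : Sid π m0 x ↔ Sid π m0 (rep i) :=
            hsetconst i (hcnot i hia) _ hx _ (hrep i)
          have e2 : Sid π m0 (rep i) ↔ Sid π m0 (rep i₀) :=
            bif_eq (hallf i i₀ hia hi₀a)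
          exact e1.trans e2
        set A' : Set (VT B) := {x | x ∈ S a ∧ (x = c ∨ (Sid π m0 x ↔ σS))} with hA'def
        set S' : Fin m → Set (VT B) := Function.update S a A' with hS'def
        have hS'a : S' a = A' := Function.update_self a A' S
        have hS'ne : ∀ i, i ≠ a → S' i = S i := fun i h => Function.update_of_ne h A' S
        have hsub : ∀ i, S' i ⊆ S i := by
          intro i
          by_cases h : i = a
          · subst h; rw [hS'a]; intro x hx; exact hx.1
          · rw [hS'ne i h]
        -- new model properties
        have hne2 : ∀ i, (S' i).Nonempty := by
          intro i
          by_cases h : i = a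
          · subst h; rw [hS'a]; exact ⟨c, hca, Or.inl rfl⟩
          · rw [hS'ne i h]; exact hne i
        have hdisj2 : ∀ i j, i ≠ j → Disjoint (S' i) (S' j) := by
          intro i j hij
          exact Set.disjoint_of_subset (hsub i) (hsub j) (hdisj i j hij)
        have hc2 : ∀ i, ((Gr π π).induce (S' i)).Connected := by
          intro i
          by_cases h : i = a
          · rw [show S' i = A' from by rw [h, hS'a], hA'def]
            refine shrink_conn hca (hc a) (fun x => Sid π m0 x ↔ σS) ?_
            intro x y hxy hx hy
            have := sid_eq π m0 hxy (notC_of_ne hm0lt3 hx) (notC_of_ne hm0lt3 hy)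
            constructor <;> intro hh <;> [exact this.symm.trans hh; exact this.trans hh]
          · rw [hS'ne i h]; exact hc i
        have hadj2 : ∀ p ∈ pat, ∃ u ∈ S' p.1, ∃ v ∈ S' p.2, (Gr π π).Adj u v := by
          intro p hp
          obtain ⟨u, hu, v, hv, hauv⟩ := hadj p hp
          have hp12 : p.1 ≠ p.2 := by
            have := hlt p hp
            intro h; rw [h] at this; exact lt_irrefl _ this
          by_cases h1 : p.1 = a
          · have h2 : p.2 ≠ a := fun h => hp12 (h1.trans h.symm)
            refine ⟨u, ?_, v, ?_, hauv⟩
            · rw [h1, hS'a]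
              rw [h1] at hu
              refine ⟨hu, ?_⟩
              by_cases huc : u = c
              · exact Or.inl huc
              · right
                have hv_c : v ≠ c := fun h => hcnot p.2 h2 (h ▸ hv)
                have e2 : Sid π m0 u ↔ Sid π m0 v :=
                  sid_eq π m0 hauv (notC_of_ne hm0lt3 huc) (notC_of_ne hm0lt3 hv_c)
                exact e2.trans (hsame p.2 h2 v hv)
            · rw [hS'ne p.2 h2]; exact hv
          · by_cases h2 : p.2 = a
            · refine ⟨u, ?_, v, ?_, hauv⟩
              · rw [hS'ne p.1 h1]; exact hu
              · rw [h2, hS'a]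
                rw [h2] at hv
                refine ⟨hv, ?_⟩
                by_cases hvc : v = c
                · exact Or.inl hvc
                · right
                  have hu_c : u ≠ c := fun h => hcnot p.1 h1 (h ▸ hu)
                  have e2 : Sid π m0 v ↔ Sid π m0 u :=
                    (sid_eq π m0 hauv (notC_of_ne hm0lt3 hu_c) (notC_of_ne hm0lt3 hvc)).symm
                  exact e2.trans (hsame p.1 h1 u hu)
            · refine ⟨u, ?_, v, ?_, hauv⟩
              · rw [hS'ne p.1 h1]; exact hu
              · rw [hS'ne p.2 h2]; exact hv
        -- strict decrease
        set U' : Finset (VT B) := Finset.univ.filter (fun v => ∃ i, v ∈ S' i) with hU'def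
        have hU'sub : U' ⊆ U := by
          intro v hv
          simp only [hU'def, Finset.mem_filter, Finset.mem_univ, true_and] at hv
          obtain ⟨i, hvi⟩ := hv
          exact (hmemU v).mpr ⟨i, hsub i hvi⟩
        obtain ⟨w, hwU, hwnot⟩ : ∃ w, w ∈ U ∧ w ∉ U' := by
          by_cases hσ : σS
          · refine ⟨vlo, hvloU, ?_⟩
            simp only [hU'def, Finset.mem_filter, Finset.mem_univ, true_and]
            rintro ⟨i, hvi⟩
            by_cases h : i = a
            · subst h
              rw [hS'a] at hvi
              rcases hvi.2 with h | h
              · exact hvloc h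
              · exact hSvlo (h.mpr hσ)
            · rw [hS'ne i h] at hvi
              exact hSvlo ((hsame i h vlo hvi).mpr hσ)
          · refine ⟨vhi, hvhiU, ?_⟩
            simp only [hU'def, Finset.mem_filter, Finset.mem_univ, true_and]
            rintro ⟨i, hvi⟩
            by_cases h : i = a
            · subst h
              rw [hS'a] at hvi
              rcases hvi.2 with h | h
              · exact hvhic h
              · exact hσ (h.mp hSvhi)
            · rw [hS'ne i h] at hvi
              exact hσ ((hsame i h vhi hvi).mp hSvhi)
        have hU'card : U'.card ≤ N := by
          have hsub2 : U' ⊆ U.erase w := by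
            intro v hv
            rw [Finset.mem_erase]
            exact ⟨fun h => hwnot (h ▸ hv), hU'sub hv⟩
          have := Finset.card_le_card hsub2
          rw [Finset.card_erase_of_mem hwU] at this
          omega
        exact ih S' hne2 hdisj2 hc2 hadj2 hU'card
      · -- c in no set: all sets on one side, contradiction with vlo/vhi
        push_neg at hcS
        set rep : Fin m → VT B := fun i => (hne i).choose with hrepdef
        have hrep : ∀ i, rep i ∈ S i := fun i => (hne i).choose_spec
        set f : Fin m → Bool := fun i => if Sid π m0 (rep i) then true else false with hfdef
        have hpatf : ∀ p ∈ pat, f p.1 = f p.2 := by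
          intro p hp
          obtain ⟨u, hu, v, hv, hauv⟩ := hadj p hp
          have hu_c : u ≠ c := fun h => hcS p.1 (h ▸ hu)
          have hv_c : v ≠ c := fun h => hcS p.2 (h ▸ hv)
          have e1 : Sid π m0 (rep p.1) ↔ Sid π m0 u :=
            hsetconst p.1 (hcS p.1) _ (hrep p.1) _ hu
          have e2 : Sid π m0 u ↔ Sid π m0 v :=
            sid_eq π m0 hauv (notC_of_ne hm0lt3 hu_c) (notC_of_ne hm0lt3 hv_c)
          have e3 : Sid π m0 v ↔ Sid π m0 (rep p.2) :=
            (hsetconst p.2 (hcS p.2) _ (hrep p.2) _ hv).symm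
          exact bif_of_iff ((e1.trans e2).trans e3)
        have hallf : ∀ i j : Fin m, f i = f j := by
          intro i j
          obtain ⟨a, hai, haj⟩ := exists_third hm i j
          exact hpatconn a f (fun p hp _ _ => hpatf p hp) i j
            (fun h => hai (h.symm ▸ rfl)) (fun h => haj (h.symm ▸ rfl))
        obtain ⟨ilo, hilo⟩ := (hmemU vlo).mp hvloU
        obtain ⟨ihi, hihi⟩ := (hmemU vhi).mp hvhiU
        have e1 : Sid π m0 vlo ↔ Sid π m0 (rep ilo) :=
          hsetconst ilo (hcS ilo) _ hilo _ (hrep ilo)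
        have e2 : Sid π m0 (rep ilo) ↔ Sid π m0 (rep ihi) := bif_eq (hallf ilo ihi)
        have e3 : Sid π m0 (rep ihi) ↔ Sid π m0 vhi :=
          (hsetconst ihi (hcS ihi) _ hihi _ (hrep ihi)).symm
        exact hSvlo (((e1.trans e2).trans e3).mpr hSvhi)

def pat4 : Finset (Fin 4 × Fin 4) :=
  {((0:Fin 4),(1:Fin 4)),(0,2),(0,3),(1,2),(1,3),(2,3)}

def pat23 : Finset (Fin 5 × Fin 5) :=
  {((0:Fin 5),(2:Fin 5)),(0,3),(0,4),(1,2),(1,3),(1,4)}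

theorem noK4 (π : Equiv.Perm (Fin B)) : ¬ HasCliqueMinor (Gr π π) 4 := by
  rintro ⟨S, hne, hdisj, hc, hadj⟩
  refine no_model π pat4 (by norm_num) (by decide) (by decide) (by decide) S hne hdisj hc ?_
  intro p hp
  have hne12 : p.1 ≠ p.2 := by
    have : ∀ q ∈ pat4, q.1 ≠ q.2 := by decide
    exact this p hp
  obtain ⟨u, hu, v, hv, ha⟩ := hadj p.1 p.2 hne12
  exact ⟨u, hu, v, hv, ha⟩

theorem noK23 (π : Equiv.Perm (Fin B)) : ¬ HasBipartiteMinor (Gr π π) 2 3 := by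
  rintro ⟨S, T, hSne, hTne, hSdisj, hTdisj, hST, hSc, hTc, hadj⟩
  set F : Fin 5 → Set (VT B) := ![S 0, S 1, T 0, T 1, T 2] with hF
  refine no_model π pat23 (by norm_num) (by decide) (by decide) (by decide) F ?_ ?_ ?_ ?_
  · intro i
    fin_cases i <;> simp only [hF] <;>
      first
        | exact hSne 0 | exact hSne 1 | exact hTne 0 | exact hTne 1 | exact hTne 2
  · intro i j hij
    fin_cases i <;> fin_cases j <;> simp only [hF] <;>
      first
        | exact absurd rfl hij
        | exact hSdisj 0 1 (by decide)
        | exact hSdisj 1 0 (by decide)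
        | exact hTdisj 0 1 (by decide)
        | exact hTdisj 1 0 (by decide)
        | exact hTdisj 0 2 (by decide)
        | exact hTdisj 2 0 (by decide)
        | exact hTdisj 1 2 (by decide)
        | exact hTdisj 2 1 (by decide)
        | exact hST 0 0 | exact hST 0 1 | exact hST 0 2
        | exact hST 1 0 | exact hST 1 1 | exact hST 1 2
        | exact (hST 0 0).symm | exact (hST 0 1).symm | exact (hST 0 2).symm
        | exact (hST 1 0).symm | exact (hST 1 1).symm | exact (hST 1 2).symm
  · intro i
    fin_cases i <;> simp only [hF] <;>
      first
        | exact hSc 0 | exact hSc 1 | exact hTc 0 | exact hTc 1 | exact hTc 2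
  · intro p hp
    fin_cases hp <;> simp only [hF]
    · exact hadj 0 0
    · exact hadj 0 1
    · exact hadj 0 2
    · exact hadj 1 0
    · exact hadj 1 1
    · exact hadj 1 2

def Ival (a b : ℕ) : Set (VT B) :=
  {v : VT B | ∃ k : Fin (3*B+3), v = Sum.inl k ∧ a ≤ (k:ℕ) ∧ (k:ℕ) ≤ b}

lemma interval_conn (α β : Equiv.Perm (Fin B)) (a b : ℕ) (hab : a ≤ b) (hb : b < 3*B+3) :
    ((Gr α β).induce (Ival a b)).Connected := by
  have haI : (Sum.inl ⟨a, by omega⟩ : VT B) ∈ Ival a b :=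
    ⟨⟨a, by omega⟩, rfl, le_refl a, hab⟩
  have key : ∀ d : ℕ, ∀ (u : ↥(Ival a b (B := B))),
      (∀ k : Fin (3*B+3), u.1 = Sum.inl k → (k:ℕ) ≤ a + d) →
      ((Gr α β).induce (Ival a b)).Reachable u ⟨Sum.inl ⟨a, by omega⟩, haI⟩ := by
    intro d
    induction d with
    | zero =>
      intro u hu
      obtain ⟨k, hk, h1, h2⟩ := u.2
      have hka : (k:ℕ) = a := le_antisymm (by simpa using hu k hk) h1
      have : u = ⟨Sum.inl ⟨a, by omega⟩, haI⟩ := by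
        apply Subtype.ext
        rw [hk]
        congr 1
        exact Fin.ext hka
      rw [this]
    | succ d ih =>
      intro u hu
      obtain ⟨k, hk, h1, h2⟩ := u.2
      by_cases hka : (k:ℕ) = a
      · have : u = ⟨Sum.inl ⟨a, by omega⟩, haI⟩ := by
          apply Subtype.ext
          rw [hk]
          congr 1
          exact Fin.ext hka
        rw [this]
      · have hk1 : (k:ℕ) - 1 < 3*B+3 := by omega
        set k' : Fin (3*B+3) := ⟨(k:ℕ) - 1, hk1⟩ with hk'
        have hk'I : (Sum.inl k' : VT B) ∈ Ival a b := ⟨k', rfl, by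
          constructor <;> simp only [hk'] <;> omega⟩
        have hadj : (Gr α β).Adj (Sum.inl k) (Sum.inl k') := by
          right
          show ESpec α β _ _
          simp only [ESpec, hk']
          omega
        have hmem : u.1 ∈ Ival a b := u.2
        have hadj2 : ((Gr α β).induce (Ival a b)).Adj ⟨u.1, hmem⟩ ⟨Sum.inl k', hk'I⟩ := by
          apply induce_adj_of
          rw [hk]
          exact hadj
        have hstep := ih ⟨Sum.inl k', hk'I⟩ (by
          intro k2 hk2
          have : k' = k2 := Sum.inl.inj hk2
          rw [← this]
          simp only [hk']
          have := hu k hk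
          omega)
        exact hadj2.reachable.trans hstep
  rw [SimpleGraph.connected_iff]
  refine ⟨?_, ⟨⟨Sum.inl ⟨a, by omega⟩, haI⟩⟩⟩
  intro u v
  have hu := key (b - a) u (by
    rintro k hk
    obtain ⟨k2, hk2, h1, h2⟩ := u.2
    rw [hk] at hk2
    have : k = k2 := Sum.inl.inj hk2
    omega)
  have hv := key (b - a) v (by
    rintro k hk
    obtain ⟨k2, hk2, h1, h2⟩ := v.2
    rw [hk] at hk2
    have : k = k2 := Sum.inl.inj hk2
    omega)
  exact hu.trans hv.symm

def Chan (β : Equiv.Perm (Fin B)) (i : Fin B) : Set (VT B) :=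
  {v : VT B | v = Sum.inr (i,0) ∨ v = Sum.inr (i,1) ∨ v = Sum.inr (β i,2) ∨ v = Sum.inr (β i,3)}

lemma chan_conn (α β : Equiv.Perm (Fin B)) (i : Fin B) :
    ((Gr α β).induce (Chan β i)).Connected := by
  have m0 : (Sum.inr (i,(0:Fin 4)) : VT B) ∈ Chan β i := Or.inl rfl
  have m1 : (Sum.inr (i,(1:Fin 4)) : VT B) ∈ Chan β i := Or.inr (Or.inl rfl)
  have m2 : (Sum.inr (β i,(2:Fin 4)) : VT B) ∈ Chan β i := Or.inr (Or.inr (Or.inl rfl))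
  have m3 : (Sum.inr (β i,(3:Fin 4)) : VT B) ∈ Chan β i := Or.inr (Or.inr (Or.inr rfl))
  have a01 : ((Gr α β).induce (Chan β i)).Adj ⟨_, m0⟩ ⟨_, m1⟩ := by
    apply induce_adj_of
    left
    show ESpec α β _ _
    simp [ESpec]
  have a12 : ((Gr α β).induce (Chan β i)).Adj ⟨_, m1⟩ ⟨_, m2⟩ := by
    apply induce_adj_of
    left
    show ESpec α β _ _
    simp [ESpec]
  have a23 : ((Gr α β).induce (Chan β i)).Adj ⟨_, m2⟩ ⟨_, m3⟩ := by
    apply induce_adj_of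
    left
    show ESpec α β _ _
    simp [ESpec]
  have hreach : ∀ (v : VT B) (hv : v ∈ Chan β i),
      ((Gr α β).induce (Chan β i)).Reachable ⟨v, hv⟩ ⟨_, m0⟩ := by
    intro v hv
    rcases id hv with h | h | h | h <;> subst h
    · exact SimpleGraph.Reachable.refl _
    · exact a01.symm.reachable
    · exact (a12.symm.reachable).trans a01.symm.reachable
    · exact a23.symm.reachable.trans ((a12.symm.reachable).trans a01.symm.reachable)
  rw [SimpleGraph.connected_iff]
  exact ⟨fun u v => (hreach u.1 u.2).trans (hreach v.1 v.2).symm, ⟨⟨_, m0⟩⟩⟩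


lemma val_mk {n a : ℕ} (h : a < n) : ((⟨a, h⟩ : Fin n) : ℕ) = a := rfl

lemma ival_disjoint {a b a' b' : ℕ} (h : b < a') :
    Disjoint (Ival a b (B := B)) (Ival a' b') := by
  rw [Set.disjoint_left]
  rintro v ⟨k, rfl, h1, h2⟩ ⟨k2, hk2, h3, h4⟩
  have hkk : k = k2 := Sum.inl.inj hk2
  have := congrArg Fin.val hkk
  omega

lemma chan_ival_disjoint (β : Equiv.Perm (Fin B)) (i : Fin B) (a b : ℕ) :
    Disjoint (Chan β i) (Ival a b (B := B)) := by
  rw [Set.disjoint_left]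
  rintro v hv ⟨k, rfl, -, -⟩
  rcases hv with h | h | h | h <;> simp at h

lemma chan_chan_disjoint (β : Equiv.Perm (Fin B)) {i i' : Fin B} (h : i ≠ i') :
    Disjoint (Chan β i) (Chan β i') := by
  rw [Set.disjoint_left]
  rintro v hv hv'
  have hβ : β i ≠ β i' := fun hh => h (β.injective hh)
  rcases hv with rfl | rfl | rfl | rfl <;>
    rcases hv' with h' | h' | h' | h' <;>
      simp only [Sum.inr.injEq, Prod.mk.injEq] at h' <;>
      first
        | (exact h h'.1)
        | (exact hβ h'.1)
        | (exact absurd h'.2 (by decide))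

theorem soundness (π π' : Equiv.Perm (Fin B)) (hpine : π ≠ π') :
    HasBipartiteMinor (Gr π π') 2 3 := by
  classical
  set ρ : Equiv.Perm (Fin B) := π⁻¹ * π' with hρ
  have hρne : ρ ≠ 1 := by
    intro h
    apply hpine
    have : π * ρ = π * 1 := by rw [h]
    rw [hρ] at this
    simpa [mul_assoc] using this.symm
  have hmoved : ∃ i : Fin B, ρ i ≠ i := by
    by_contra h
    push_neg at h
    exact hρne (Equiv.ext h)
  set M : Finset (Fin B) := Finset.univ.filter (fun i => ρ i ≠ i) with hM
  have hMne : M.Nonempty := by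
    obtain ⟨i, hi⟩ := hmoved
    exact ⟨i, by simp [hM, hi]⟩
  set i₀ : Fin B := M.min' hMne with hi₀
  have hi₀M : i₀ ∈ M := M.min'_mem hMne
  have hi₀moved : ρ i₀ ≠ i₀ := by
    have := hi₀M
    simp [hM] at this
    exact this
  have hmin : ∀ j ∈ M, i₀ ≤ j := fun j hj => M.min'_le j hj
  set j₀ : Fin B := ρ i₀ with hj₀
  set k₀ : Fin B := ρ⁻¹ i₀ with hk₀
  have hj₀moved : ρ j₀ ≠ j₀ := by
    intro h
    exact hi₀moved (ρ.injective (h.trans hj₀))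
  have hρk₀ : ρ k₀ = i₀ := by rw [hk₀]; exact Equiv.apply_symm_apply ρ i₀
  have hk₀moved : ρ k₀ ≠ k₀ := by
    intro h
    have h1 : i₀ = k₀ := by rw [← hρk₀, h]
    apply hi₀moved
    rw [hj₀, h1]
    exact h
  -- index inequalities
  have hjB : (j₀:ℕ) < B := j₀.isLt
  have hkB : (k₀:ℕ) < B := k₀.isLt
  have hij : (i₀:ℕ) < (j₀:ℕ) := by
    have h1 : i₀ ≤ j₀ := hmin j₀ (by
      simp only [hM, Finset.mem_filter, Finset.mem_univ, true_and]; exact hj₀moved)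
    have h2 : i₀ ≠ j₀ := fun h => hi₀moved h.symm
    have h3 := Fin.le_def.mp h1
    have h4 : (i₀:ℕ) ≠ (j₀:ℕ) := fun h => h2 (Fin.ext h)
    omega
  have hik : (i₀:ℕ) < (k₀:ℕ) := by
    have h1 : i₀ ≤ k₀ := hmin k₀ (by
      simp only [hM, Finset.mem_filter, Finset.mem_univ, true_and]; exact hk₀moved)
    have h2 : i₀ ≠ k₀ := by
      intro h
      apply hi₀moved
      rw [hj₀]
      rw [← h] at hρk₀
      exact hρk₀
    have h3 := Fin.le_def.mp h1
    have h4 : (i₀:ℕ) ≠ (k₀:ℕ) := fun h => h2 (Fin.ext h)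
    omega
  have hpj : π⁻¹ (π' i₀) = j₀ := by
    rw [hj₀, hρ]
    rfl
  have hpk : π⁻¹ (π' k₀) = i₀ := by
    rw [← hρk₀, hρ]
    rfl
  set c' : ℕ := min (3*(j₀:ℕ)+1) (3*(k₀:ℕ)) with hc'
  have hc'le1 : c' ≤ 3*(j₀:ℕ)+1 := min_le_left _ _
  have hc'le2 : c' ≤ 3*(k₀:ℕ) := min_le_right _ _
  have hc'lo : 3*(i₀:ℕ)+3 ≤ c' := le_min (by omega) (by omega)
  have hc'hi : c' + 1 ≤ 3*B := by omega
  clear hc'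
  have hiB : (i₀:ℕ) < B := i₀.isLt
  refine ⟨![Ival 0 (3*(i₀:ℕ)+1), Ival c' (3*B+2)],
          ![Chan π' i₀, Ival (3*(i₀:ℕ)+2) (c'-1), Chan π' k₀], ?_, ?_, ?_, ?_, ?_, ?_, ?_, ?_⟩
  · intro i
    fin_cases i
    · exact ⟨Sum.inl ⟨0, by first | omega | (simp only [val_mk]; omega)⟩, ⟨0, by first | omega | (simp only [val_mk]; omega)⟩, rfl, by first | omega | (simp only [val_mk]; omega), by first | omega | (simp only [val_mk]; omega)⟩
    · exact ⟨Sum.inl ⟨c', by first | omega | (simp only [val_mk]; omega)⟩, ⟨c', by first | omega | (simp only [val_mk]; omega)⟩, rfl, by first | omega | (simp only [val_mk]; omega), by first | omega | (simp only [val_mk]; omega)⟩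
  · intro j
    fin_cases j
    · exact ⟨Sum.inr (i₀, 0), Or.inl rfl⟩
    · exact ⟨Sum.inl ⟨3*(i₀:ℕ)+2, by first | omega | (simp only [val_mk]; omega)⟩, ⟨3*(i₀:ℕ)+2, by first | omega | (simp only [val_mk]; omega)⟩, rfl, by first | omega | (simp only [val_mk]; omega), by first | omega | (simp only [val_mk]; omega)⟩
    · exact ⟨Sum.inr (k₀, 0), Or.inl rfl⟩
  · intro i j hij'
    fin_cases i <;> fin_cases j
    · exact absurd rfl hij'
    · exact ival_disjoint (by first | omega | (simp only [val_mk]; omega))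
    · exact (ival_disjoint (by first | omega | (simp only [val_mk]; omega))).symm
    · exact absurd rfl hij'
  · intro i j hij'
    have hikne : i₀ ≠ k₀ := fun h => by rw [h] at hik; omega
    fin_cases i <;> fin_cases j
    · exact absurd rfl hij'
    · exact chan_ival_disjoint π' i₀ _ _
    · exact chan_chan_disjoint π' hikne
    · exact (chan_ival_disjoint π' i₀ _ _).symm
    · exact absurd rfl hij'
    · exact (chan_ival_disjoint π' k₀ _ _).symm
    · exact chan_chan_disjoint π' (Ne.symm hikne)
    · exact chan_ival_disjoint π' k₀ _ _
    · exact absurd rfl hij'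
  · intro i j
    fin_cases i <;> fin_cases j
    · exact (chan_ival_disjoint π' i₀ _ _).symm
    · exact ival_disjoint (by first | omega | (simp only [val_mk]; omega))
    · exact (chan_ival_disjoint π' k₀ _ _).symm
    · exact (chan_ival_disjoint π' i₀ _ _).symm
    · exact (ival_disjoint (show c'-1 < c' by first | omega | (simp only [val_mk]; omega))).symm
    · exact (chan_ival_disjoint π' k₀ _ _).symm
  · intro i
    fin_cases i
    · exact interval_conn π π' 0 (3*(i₀:ℕ)+1) (by first | omega | (simp only [val_mk]; omega)) (by first | omega | (simp only [val_mk]; omega))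
    · exact interval_conn π π' c' (3*B+2) (by first | omega | (simp only [val_mk]; omega)) (by first | omega | (simp only [val_mk]; omega))
  · intro j
    fin_cases j
    · exact chan_conn π π' i₀
    · exact interval_conn π π' (3*(i₀:ℕ)+2) (c'-1) (by first | omega | (simp only [val_mk]; omega)) (by first | omega | (simp only [val_mk]; omega))
    · exact chan_conn π π' k₀
  · intro i j
    fin_cases i <;> fin_cases j
    · -- S0 - T0
      refine ⟨Sum.inl ⟨3*(i₀:ℕ), by first | omega | (simp only [val_mk]; omega)⟩, ⟨⟨3*(i₀:ℕ), by first | omega | (simp only [val_mk]; omega)⟩, rfl, by first | omega | (simp only [val_mk]; omega), by first | omega | (simp only [val_mk]; omega)⟩,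
        Sum.inr (i₀, 0), Or.inl rfl, Or.inl ?_⟩
      exact ⟨rfl, rfl⟩
    · -- S0 - T1
      refine ⟨Sum.inl ⟨3*(i₀:ℕ)+1, by first | omega | (simp only [val_mk]; omega)⟩, ⟨⟨3*(i₀:ℕ)+1, by first | omega | (simp only [val_mk]; omega)⟩, rfl, by first | omega | (simp only [val_mk]; omega), by first | omega | (simp only [val_mk]; omega)⟩,
        Sum.inl ⟨3*(i₀:ℕ)+2, by first | omega | (simp only [val_mk]; omega)⟩, ⟨⟨3*(i₀:ℕ)+2, by first | omega | (simp only [val_mk]; omega)⟩, rfl, by first | omega | (simp only [val_mk]; omega), by first | omega | (simp only [val_mk]; omega)⟩, Or.inl ?_⟩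
      show ((⟨3*(i₀:ℕ)+2, by first | omega | (simp only [val_mk]; omega)⟩ : Fin (3*B+3)) : ℕ) = _ + 1
      rfl
    · -- S0 - T2  via y-end of channel k₀
      refine ⟨Sum.inl ⟨3*(i₀:ℕ)+1, by first | omega | (simp only [val_mk]; omega)⟩, ⟨⟨3*(i₀:ℕ)+1, by first | omega | (simp only [val_mk]; omega)⟩, rfl, by first | omega | (simp only [val_mk]; omega), by first | omega | (simp only [val_mk]; omega)⟩,
        Sum.inr (π' k₀, 3), Or.inr (Or.inr (Or.inr rfl)), Or.inr ?_⟩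
      refine ⟨rfl, ?_⟩
      show (3*(i₀:ℕ)+1 : ℕ) = 3 * ((π⁻¹ (π' k₀) : Fin B) : ℕ) + 1
      rw [hpk]
    · -- S1 - T0 via y-end of channel i₀
      refine ⟨Sum.inl ⟨3*(j₀:ℕ)+1, by first | omega | (simp only [val_mk]; omega)⟩, ⟨⟨3*(j₀:ℕ)+1, by first | omega | (simp only [val_mk]; omega)⟩, rfl, by first | omega | (simp only [val_mk]; omega), by first | omega | (simp only [val_mk]; omega)⟩,
        Sum.inr (π' i₀, 3), Or.inr (Or.inr (Or.inr rfl)), Or.inr ?_⟩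
      refine ⟨rfl, ?_⟩
      show (3*(j₀:ℕ)+1 : ℕ) = 3 * ((π⁻¹ (π' i₀) : Fin B) : ℕ) + 1
      rw [hpj]
    · -- S1 - T1
      refine ⟨Sum.inl ⟨c', by first | omega | (simp only [val_mk]; omega)⟩, ⟨⟨c', by first | omega | (simp only [val_mk]; omega)⟩, rfl, by first | omega | (simp only [val_mk]; omega), by first | omega | (simp only [val_mk]; omega)⟩,
        Sum.inl ⟨c'-1, by first | omega | (simp only [val_mk]; omega)⟩, ⟨⟨c'-1, by first | omega | (simp only [val_mk]; omega)⟩, rfl, by first | omega | (simp only [val_mk]; omega), by first | omega | (simp only [val_mk]; omega)⟩, Or.inr ?_⟩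
      show ((⟨c', by first | omega | (simp only [val_mk]; omega)⟩ : Fin (3*B+3)) : ℕ) = _ + 1
      show c' = (c'-1) + 1
      omega
    · -- S1 - T2
      refine ⟨Sum.inl ⟨3*(k₀:ℕ), by first | omega | (simp only [val_mk]; omega)⟩, ⟨⟨3*(k₀:ℕ), by first | omega | (simp only [val_mk]; omega)⟩, rfl, by first | omega | (simp only [val_mk]; omega), by first | omega | (simp only [val_mk]; omega)⟩,
        Sum.inr (k₀, 0), Or.inl rfl, Or.inl ?_⟩
      exact ⟨rfl, rfl⟩


def nOf (B : ℕ) : ℕ := 3*B+3 + B*4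

def eqv (B : ℕ) : VT B ≃ Fin (nOf B) :=
  (Equiv.sumCongr (Equiv.refl _) finProdFinEquiv).trans finSumFinEquiv

def Gfin (α β : Equiv.Perm (Fin B)) : SimpleGraph (Fin (nOf B)) :=
  SimpleGraph.comap (fun v => (eqv B).symm v) (Gr α β)

lemma gfin_adj {α β : Equiv.Perm (Fin B)} {u v : Fin (nOf B)} :
    (Gfin α β).Adj u v ↔ (Gr α β).Adj ((eqv B).symm u) ((eqv B).symm v) := Iff.rfl

lemma gfin_conn (α β : Equiv.Perm (Fin B)) : (Gfin α β).Connected := by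
  refine SimpleGraph.Connected.map ⟨⇑(eqv B), ?_⟩ (eqv B).surjective (gr_conn α β)
  intro a b hab
  show (Gr α β).Adj ((eqv B).symm ((eqv B) a)) ((eqv B).symm ((eqv B) b))
  simpa using hab

lemma induce_conn_map {V V' : Type*} (φ : V ≃ V') {G : SimpleGraph V} {G' : SimpleGraph V'}
    (hAdj : ∀ a b : V, G.Adj a b ↔ G'.Adj (φ a) (φ b)) (S : Set V)
    (h : (G.induce S).Connected) : (G'.induce (⇑φ '' S)).Connected := by
  have hsurj : Function.Surjective
      (fun x : ↥S => (⟨φ x.1, ⟨x.1, x.2, rfl⟩⟩ : ↥(⇑φ '' S))) := by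
    rintro ⟨y, x, hx, rfl⟩
    exact ⟨⟨x, hx⟩, rfl⟩
  refine SimpleGraph.Connected.map ⟨fun x => ⟨φ x.1, ⟨x.1, x.2, rfl⟩⟩, ?_⟩ hsurj h
  intro a b hab
  exact induce_adj_of ((hAdj a.1 b.1).mp (induce_adj' hab))

lemma clique_map {V V' : Type*} (φ : V ≃ V') {G : SimpleGraph V} {G' : SimpleGraph V'}
    (hAdj : ∀ a b, G.Adj a b ↔ G'.Adj (φ a) (φ b)) {k : ℕ}
    (h : HasCliqueMinor G k) : HasCliqueMinor G' k := by
  obtain ⟨S, h1, h2, h3, h4⟩ := h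
  refine ⟨fun i => ⇑φ '' S i, fun i => (h1 i).image _, ?_,
    fun i => induce_conn_map φ hAdj _ (h3 i), ?_⟩
  · intro i j hij
    rw [Set.disjoint_image_iff φ.injective]
    exact h2 i j hij
  · intro i j hij
    obtain ⟨u, hu, v, hv, ha⟩ := h4 i j hij
    exact ⟨φ u, ⟨u, hu, rfl⟩, φ v, ⟨v, hv, rfl⟩, (hAdj u v).mp ha⟩

lemma bip_map {V V' : Type*} (φ : V ≃ V') {G : SimpleGraph V} {G' : SimpleGraph V'}
    (hAdj : ∀ a b, G.Adj a b ↔ G'.Adj (φ a) (φ b)) {p q : ℕ}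
    (h : HasBipartiteMinor G p q) : HasBipartiteMinor G' p q := by
  obtain ⟨S, T, h1, h2, h3, h4, h5, h6, h7, h8⟩ := h
  refine ⟨fun i => ⇑φ '' S i, fun j => ⇑φ '' T j,
    fun i => (h1 i).image _, fun j => (h2 j).image _, ?_, ?_, ?_,
    fun i => induce_conn_map φ hAdj _ (h6 i), fun j => induce_conn_map φ hAdj _ (h7 j), ?_⟩
  · intro i j hij
    rw [Set.disjoint_image_iff φ.injective]
    exact h3 i j hij
  · intro i j hij
    rw [Set.disjoint_image_iff φ.injective]
    exact h4 i j hij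
  · intro i j
    rw [Set.disjoint_image_iff φ.injective]
    exact h5 i j
  · intro i j
    obtain ⟨u, hu, v, hv, ha⟩ := h8 i j
    exact ⟨φ u, ⟨u, hu, rfl⟩, φ v, ⟨v, hv, rfl⟩, (hAdj u v).mp ha⟩

lemma gfin_to_gr_adj (α β : Equiv.Perm (Fin B)) :
    ∀ a b : Fin (nOf B), (Gfin α β).Adj a b ↔
      (Gr α β).Adj ((eqv B).symm a) ((eqv B).symm b) := fun _ _ => Iff.rfl

lemma gr_to_gfin_adj (α β : Equiv.Perm (Fin B)) :
    ∀ a b : VT B, (Gr α β).Adj a b ↔ (Gfin α β).Adj ((eqv B) a) ((eqv B) b) := by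
  intro a b
  rw [gfin_adj]
  simp

theorem gfin_noK4 (π : Equiv.Perm (Fin B)) : ¬ HasCliqueMinor (Gfin π π) 4 := by
  intro h
  exact noK4 π (clique_map (eqv B).symm (gfin_to_gr_adj π π) h)

theorem gfin_noK23 (π : Equiv.Perm (Fin B)) : ¬ HasBipartiteMinor (Gfin π π) 2 3 := by
  intro h
  exact noK23 π (bip_map (eqv B).symm (gfin_to_gr_adj π π) h)

theorem gfin_K23 (π π' : Equiv.Perm (Fin B)) (h : π ≠ π') :
    HasBipartiteMinor (Gfin π π') 2 3 :=
  bip_map (eqv B) (gr_to_gfin_adj π π') (soundness π π' h)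

-- view-matching lemmas
lemma adj_beta_irrel {α β β' : Equiv.Perm (Fin B)} {w u : VT B}
    (hw : (∃ k, w = Sum.inl k) ∨ (∃ p : Fin B × Fin 4, w = Sum.inr p ∧ (p.2 = 0 ∨ p.2 = 3))) :
    ((Gr α β).Adj w u ↔ (Gr α β').Adj w u) := by
  rcases hw with ⟨k, rfl⟩ | ⟨p, rfl, hp⟩
  · rcases u with k' | q
    · exact Iff.rfl
    · exact Iff.rfl
  · rcases u with k' | q
    · exact Iff.rfl
    · have hne1 : p.2 ≠ 1 := by rcases hp with hp | hp <;> rw [hp] <;> decide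
      have hne2 : p.2 ≠ 2 := by rcases hp with hp | hp <;> rw [hp] <;> decide
      show (ESpec α β _ _ ∨ ESpec α β _ _) ↔ (ESpec α β' _ _ ∨ ESpec α β' _ _)
      simp only [ESpec]
      constructor <;>
        · rintro ((⟨a1, a2, a3⟩ | ⟨a1, a2, a3⟩ | ⟨a1, a2, a3⟩) |
                  (⟨a1, a2, a3⟩ | ⟨a1, a2, a3⟩ | ⟨a1, a2, a3⟩))
          · exact Or.inl (Or.inl ⟨a1, a2, a3⟩)
          · exact absurd a1 hne1
          · exact absurd a2 hne2
          · exact absurd a3 hne1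
          · exact absurd a2 hne2
          · exact Or.inr (Or.inr (Or.inr ⟨a1, a2, a3⟩))

lemma adj_alpha_irrel {α α' β : Equiv.Perm (Fin B)} {w u : VT B}
    (hw : ∃ p : Fin B × Fin 4, w = Sum.inr p ∧ (p.2 = 1 ∨ p.2 = 2)) :
    ((Gr α β).Adj w u ↔ (Gr α' β).Adj w u) := by
  obtain ⟨p, rfl, hp⟩ := hw
  have hne0 : p.2 ≠ 0 := by rcases hp with hp | hp <;> rw [hp] <;> decide
  have hne3 : p.2 ≠ 3 := by rcases hp with hp | hp <;> rw [hp] <;> decide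
  rcases u with k' | q
  · show (ESpec α β _ _ ∨ ESpec α β _ _) ↔ (ESpec α' β _ _ ∨ ESpec α' β _ _)
    simp only [ESpec]
    constructor <;>
      · rintro (⟨h1, h2⟩ | ⟨h1, h2⟩)
        · exact absurd h1 hne3
        · exact absurd h1 hne0
  · exact Iff.rfl

lemma nbr_inr {α β : Equiv.Perm (Fin B)} {p : Fin B × Fin 4} (hp : p.2 = 1 ∨ p.2 = 2)
    {u : VT B} (h : (Gr α β).Adj (Sum.inr p) u) : ∃ q : Fin B × Fin 4, u = Sum.inr q := by
  rcases u with k | q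
  · exfalso
    rcases h with h | h <;> simp only [ESpec] at h
    · exact absurd h.1 (by rcases hp with hp | hp <;> rw [hp] <;> decide)
    · exact absurd h.1 (by rcases hp with hp | hp <;> rw [hp] <;> decide)
  · exact ⟨q, rfl⟩

lemma pow_mul_factorial_le (k j : ℕ) : k^j * k.factorial ≤ (k + j).factorial := by
  induction j with
  | zero => simp
  | succ j ih =>
    have h1 : (k + (j+1)).factorial = (k + j + 1) * (k + j).factorial := by
      rw [show k + (j+1) = (k+j)+1 by omega]
      exact Nat.factorial_succ _
    rw [h1, pow_succ]
    calc k ^ j * k * k.factorial = k * (k^j * k.factorial) := by ring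
      _ ≤ k * (k + j).factorial := Nat.mul_le_mul_left _ ih
      _ ≤ (k + j + 1) * (k + j).factorial := Nat.mul_le_mul_right _ (by omega)

lemma factorial_big {M Bn : ℕ} (hM : 1 ≤ M) (hB : 2 * (M^8 + 1) ≤ Bn) :
    M^(Bn*4) < Bn.factorial := by
  set K := M^8 + 1 with hK
  have hKB : K ≤ Bn := by omega
  have h1 : K^(Bn - K) * K.factorial ≤ Bn.factorial := by
    have h := pow_mul_factorial_le K (Bn - K)
    rwa [show K + (Bn - K) = Bn by omega] at h
  have h2 : K^(Bn - K) ≤ Bn.factorial :=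
    le_trans (Nat.le_mul_of_pos_right _ K.factorial_pos) h1
  have h3 : M^(Bn*4) < K^(Bn - K) := by
    have e1 : M^(Bn*4) ≤ (M^8)^(Bn - K) := by
      rw [← pow_mul]
      apply Nat.pow_le_pow_right (by omega)
      omega
    have e2 : (M^8)^(Bn - K) < K^(Bn - K) := by
      apply Nat.pow_lt_pow_left (by omega)
      omega
    omega
  omega

end OPL

/-- No locally checkable proof with `o(log n)`-bit certificates exists for the class of
connected graphs with neither a `K_4` nor a `K_{2,3}` minor (connected outerplanar
graphs). -/
theorem no_sublog_lcp_outerplanarity (g : ℕ → ℕ) (hg : IsLittleOLog g)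
    (A : (n : ℕ) → ℕ → (Fin (g n) → Bool) → Finset (ℕ × (Fin (g n) → Bool)) → Bool) :
    ¬ IsLCP g A (fun _n G => ¬ HasCliqueMinor G 4 ∧ ¬ HasBipartiteMinor G 2 3) := by
  classical
  intro hLCP
  obtain ⟨n₀, hn₀⟩ := hg (1/100) (by norm_num)
  set B : ℕ := max n₀ 128 with hB
  have hB128 : 128 ≤ B := le_max_right _ _
  set n : ℕ := OPL.nOf B with hn
  have hnB : n = 3*B+3 + B*4 := rfl
  have hn0le : n₀ ≤ n := by
    have := le_max_left n₀ 128
    omega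
  have hn1 : 1 ≤ n := by omega
  set M : ℕ := 2^(g n) with hM
  have hM1 : 1 ≤ M := Nat.one_le_two_pow
  have hMbound : 2 * (M^8 + 1) ≤ B := by
    have hgn : (g n : ℝ) ≤ (1/100) * Real.logb 2 n := hn₀ n hn0le
    have hn1R : (1:ℝ) ≤ (n:ℝ) := by exact_mod_cast hn1
    have hlogb_nonneg : 0 ≤ Real.logb 2 n := Real.logb_nonneg (by norm_num) hn1R
    have h8 : ((8 * g n : ℕ) : ℝ) ≤ Real.logb 2 n * (1/2) := by
      push_cast
      nlinarith
    have hMeq : M^8 = 2^(8 * g n) := by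
      rw [hM, ← pow_mul]
      ring_nf
    have hMR : ((M^8 : ℕ) : ℝ) ≤ (n:ℝ) ^ ((1:ℝ)/2) := by
      rw [hMeq]
      push_cast
      calc (2:ℝ) ^ (8 * g n) = (2:ℝ) ^ (((8 * g n : ℕ) : ℝ)) := by
            rw [Real.rpow_natCast]
        _ ≤ (2:ℝ) ^ (Real.logb 2 n * (1/2)) :=
            Real.rpow_le_rpow_of_exponent_le (by norm_num) h8
        _ = ((2:ℝ) ^ (Real.logb 2 n)) ^ ((1:ℝ)/2) := by
            rw [← Real.rpow_mul (by norm_num)]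
        _ = (n:ℝ) ^ ((1:ℝ)/2) := by
            rw [Real.rpow_logb (by norm_num) (by norm_num) (by positivity)]
    have hsqrt : (n:ℝ) ^ ((1:ℝ)/2) ≤ (B:ℝ)/4 := by
      have h1 : (n:ℝ) ≤ ((B:ℝ)/4)^2 := by
        rw [hnB]
        push_cast
        have hBR : (128:ℝ) ≤ (B:ℝ) := by exact_mod_cast hB128
        nlinarith [mul_le_mul_of_nonneg_right hBR (by positivity : (0:ℝ) ≤ (B:ℝ))]
      calc (n:ℝ) ^ ((1:ℝ)/2) = Real.sqrt n := (Real.sqrt_eq_rpow _).symm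
        _ ≤ Real.sqrt (((B:ℝ)/4)^2) := Real.sqrt_le_sqrt h1
        _ = (B:ℝ)/4 := Real.sqrt_sq (by positivity)
    have hfin : ((2*(M^8+1) : ℕ) : ℝ) ≤ (B:ℝ) := by
      push_cast
      have hMB := hMR.trans hsqrt
      push_cast at hMB
      have hBR : (128:ℝ) ≤ (B:ℝ) := by exact_mod_cast hB128
      linarith
    exact_mod_cast hfin
  set e := OPL.eqv B with he
  set ids : Fin n → Fin (n^2) :=
    fun v => ⟨v.1, lt_of_lt_of_le v.2 (Nat.le_self_pow (by norm_num) n)⟩ with hids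
  have hids_inj : Function.Injective ids := by
    intro a b h
    have h2 : (ids a).1 = (ids b).1 := congrArg Fin.val h
    simp only [hids, OPL.val_mk] at h2
    exact Fin.ext h2
  have hcomp : ∀ π : Equiv.Perm (Fin B), ∃ cert : Fin n → (Fin (g n) → Bool),
      ∀ v : Fin n, A n (ids v) (cert v)
        ((Finset.univ.filter (fun u => (OPL.Gfin π π).Adj v u)).image
          (fun u => ((ids u : ℕ), cert u))) = true := by
    intro π
    have hiff := hLCP n hn1 (OPL.Gfin π π) (OPL.gfin_conn π π) ids hids_inj
    exact hiff.mp ⟨OPL.gfin_noK4 π, OPL.gfin_noK23 π⟩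
  choose cert hcert using hcomp
  set Φ : Equiv.Perm (Fin B) → (Fin B × Fin 4 → (Fin (g n) → Bool)) :=
    fun π p => cert π (e (Sum.inr p)) with hΦ
  have hcard : Fintype.card (Fin B × Fin 4 → (Fin (g n) → Bool)) <
      Fintype.card (Equiv.Perm (Fin B)) := by
    rw [Fintype.card_perm, Fintype.card_fun]
    have h1 : Fintype.card (Fin (g n) → Bool) = M := by
      rw [Fintype.card_fun]
      simp [hM]
    have h2 : Fintype.card (Fin B × Fin 4) = B * 4 := by simp
    rw [h1, h2, Fintype.card_fin]
    exact OPL.factorial_big hM1 hMbound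
  obtain ⟨π, π', hππ', hΦeq⟩ := Fintype.exists_ne_map_eq_of_card_lt Φ hcard
  have hagree : ∀ p : Fin B × Fin 4, cert π (e (Sum.inr p)) = cert π' (e (Sum.inr p)) :=
    fun p => congrFun hΦeq p
  set H := OPL.Gfin π π' with hH
  have hacc : ∀ v : Fin n, A n (ids v) (cert π v)
      ((Finset.univ.filter (fun u => H.Adj v u)).image
        (fun u => ((ids u : ℕ), cert π u))) = true := by
    intro v
    have hbetacase : ((∃ k, e.symm v = Sum.inl k) ∨
        (∃ p : Fin B × Fin 4, e.symm v = Sum.inr p ∧ (p.2 = 0 ∨ p.2 = 3))) →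
        A n (ids v) (cert π v)
          ((Finset.univ.filter (fun u => H.Adj v u)).image
            (fun u => ((ids u : ℕ), cert π u))) = true := by
      intro hcase
      have hfeq : (Finset.univ.filter (fun u => H.Adj v u)) =
          (Finset.univ.filter (fun u => (OPL.Gfin π π).Adj v u)) := by
        apply Finset.filter_congr
        intro u _
        show H.Adj v u ↔ (OPL.Gfin π π).Adj v u
        rw [OPL.gfin_adj (α := π) (β := π'), OPL.gfin_adj (α := π) (β := π)]
        apply OPL.adj_beta_irrel
        rcases hcase with ⟨k, hk⟩ | ⟨p, hp, hp2⟩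
        · exact Or.inl ⟨k, hk⟩
        · exact Or.inr ⟨p, hp, hp2⟩
      rw [hfeq]
      exact hcert π v
    rcases hsplit : e.symm v with k | p
    · exact hbetacase (Or.inl ⟨k, hsplit⟩)
    · obtain ⟨i, r⟩ := p
      have hr4 : r = 0 ∨ r = 1 ∨ r = 2 ∨ r = 3 := by
        fin_cases r
        · exact Or.inl rfl
        · exact Or.inr (Or.inl rfl)
        · exact Or.inr (Or.inr (Or.inl rfl))
        · exact Or.inr (Or.inr (Or.inr rfl))
      have hinr : ∀ (_hr12 : r = 1 ∨ r = 2),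
          A n (ids v) (cert π v)
            ((Finset.univ.filter (fun u => H.Adj v u)).image
              (fun u => ((ids u : ℕ), cert π u))) = true := by
        intro hr12
        have hfeq : (Finset.univ.filter (fun u => H.Adj v u)) =
            (Finset.univ.filter (fun u => (OPL.Gfin π' π').Adj v u)) := by
          apply Finset.filter_congr
          intro u _
          show H.Adj v u ↔ (OPL.Gfin π' π').Adj v u
          rw [OPL.gfin_adj (α := π) (β := π'), OPL.gfin_adj (α := π') (β := π')]
          exact OPL.adj_alpha_irrel ⟨(i, r), hsplit, hr12⟩
        have hvE : v = e (Sum.inr (i, r)) := (Equiv.symm_apply_eq e).mp hsplit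
        have hvown : cert π v = cert π' v := by
          rw [hvE]; exact hagree (i, r)
        have himg : ((Finset.univ.filter (fun u => (OPL.Gfin π' π').Adj v u)).image
              (fun u => ((ids u : ℕ), cert π u))) =
            ((Finset.univ.filter (fun u => (OPL.Gfin π' π').Adj v u)).image
              (fun u => ((ids u : ℕ), cert π' u))) := by
          apply Finset.image_congr
          intro u hu
          rw [Finset.mem_coe, Finset.mem_filter] at hu
          have hadj := hu.2
          rw [OPL.gfin_adj (α := π') (β := π')] at hadj
          rw [hsplit] at hadj
          obtain ⟨q, hq⟩ := OPL.nbr_inr hr12 hadj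
          have huE : u = e (Sum.inr q) := (Equiv.symm_apply_eq e).mp hq
          show ((ids u : ℕ), cert π u) = ((ids u : ℕ), cert π' u)
          rw [huE, hagree q]
        rw [hfeq, himg, hvown]
        exact hcert π' v
      rcases hr4 with hr | hr | hr | hr
      · exact hbetacase (Or.inr ⟨(i, r), hsplit, Or.inl hr⟩)
      · exact hinr (Or.inl hr)
      · exact hinr (Or.inr hr)
      · exact hbetacase (Or.inr ⟨(i, r), hsplit, Or.inr hr⟩)
  have hiffH := hLCP n hn1 H (OPL.gfin_conn π π') ids hids_inj
  have hC := hiffH.mpr ⟨cert π, hacc⟩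
  exact hC.2 (OPL.gfin_K23 π π' hππ')
end

section
/- Under the Setup, if the checks pass at every vertex x ∈ {1, …, n}, then for any two edges {e,f} and {g,h} of G with e < f and g < h, one of the following holds: e < f ≤ g < h, or g < h ≤ e < f, or e ≤ g < h ≤ f, or g ≤ e < f ≤ h. In other words, G is path-outerplanar with witness the natural order on {0, 1, …, n+1}. -/
/-- The Setup: a graph on `{0, 1, …, n+1}` (modelled as `Fin (n+2)`) containing the
path `0–1–⋯–(n+1)`, the edge `{0, n+1}`, and whose every other edge has both
endpoints in `{1, …, n}`. -/
def SetupGraph (n : ℕ) (G : SimpleGraph (Fin (n + 2))) : Prop :=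
  (∀ i : Fin (n + 2), ∀ _hi : (i : ℕ) ≤ n, G.Adj i ⟨(i : ℕ) + 1, by omega⟩) ∧
  G.Adj ⟨0, by omega⟩ ⟨n + 1, by omega⟩ ∧
  (∀ u v : Fin (n + 2), G.Adj u v →
    ((u : ℕ) + 1 = (v : ℕ)) ∨ ((v : ℕ) + 1 = (u : ℕ)) ∨
    ((u : ℕ) = 0 ∧ (v : ℕ) = n + 1) ∨ ((v : ℕ) = 0 ∧ (u : ℕ) = n + 1) ∨
    (1 ≤ (u : ℕ) ∧ (u : ℕ) ≤ n ∧ 1 ≤ (v : ℕ) ∧ (v : ℕ) ≤ n))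

/-- The checks of the verification algorithm pass at vertex `x ∈ {1, …, n}`,
where `I x = (a, b)` is the interval certificate of `x`. -/
def ChecksPassAt (n : ℕ) (G : SimpleGraph (Fin (n + 2))) (I : Fin (n + 2) → ℤ × ℤ)
    (x : Fin (n + 2)) : Prop :=
  -- (i) `a < x < b` and all neighbors lie in `[a, b]`
  ((I x).1 < ((x : ℕ) : ℤ) ∧ ((x : ℕ) : ℤ) < (I x).2) ∧
  (∀ y, G.Adj x y → (I x).1 ≤ ((y : ℕ) : ℤ) ∧ ((y : ℕ) : ℤ) ≤ (I x).2) ∧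
  -- (ii) consecutive larger neighbors `y < z`: `I y = (x, z)`
  (∀ y z, G.Adj x y → G.Adj x z → x < y → y < z →
    (∀ w, G.Adj x w → ¬(y < w ∧ w < z)) → I y = (((x : ℕ) : ℤ), ((z : ℕ) : ℤ))) ∧
  -- (iii) consecutive smaller neighbors `y < z`: `I z = (y, x)`
  (∀ y z, G.Adj x y → G.Adj x z → y < z → z < x →
    (∀ w, G.Adj x w → ¬(y < w ∧ w < z)) → I z = (((y : ℕ) : ℤ), ((x : ℕ) : ℤ))) ∧
  -- (iv) if the largest neighbor `y` satisfies `y < b` then `I y = (a, b)`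
  (∀ y, G.Adj x y → x < y → (∀ z, G.Adj x z → z ≤ y) →
    ((y : ℕ) : ℤ) < (I x).2 → I y = I x) ∧
  -- (v) if the smallest neighbor `y` satisfies `a < y` then `I y = (a, b)`
  (∀ y, G.Adj x y → y < x → (∀ z, G.Adj x z → y ≤ z) →
    (I x).1 < ((y : ℕ) : ℤ) → I y = I x) ∧
  -- (vi) neighbors `y` whose interval has `x` as an endpoint
  (∀ y, G.Adj x y →
    ((I y).1 = ((x : ℕ) : ℤ) →
      (∃ d : Fin (n + 2), ((d : ℕ) : ℤ) = (I y).2 ∧ G.Adj x d) ∧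
      (I x).1 ≤ (I y).1 ∧ (I y).2 ≤ (I x).2 ∧ I y ≠ I x) ∧
    ((I y).2 = ((x : ℕ) : ℤ) →
      (∃ c : Fin (n + 2), ((c : ℕ) : ℤ) = (I y).1 ∧ G.Adj c x) ∧
      (I x).1 ≤ (I y).1 ∧ (I y).2 ≤ (I x).2 ∧ I y ≠ I x))


lemma lemA (n : ℕ) (G : SimpleGraph (Fin (n + 2))) (I : Fin (n + 2) → ℤ × ℤ)
    (hchecks : ∀ x : Fin (n + 2), 1 ≤ (x : ℕ) → (x : ℕ) ≤ n → ChecksPassAt n G I x)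
    (hpath : ∀ i : Fin (n + 2), ∀ _hi : (i : ℕ) ≤ n, G.Adj i ⟨(i : ℕ) + 1, by omega⟩) :
    ∀ μ : ℕ, ∀ t x : Fin (n + 2), ∀ p q : ℤ,
      I t = (p, q) → 1 ≤ (t : ℕ) → (t : ℕ) < (x : ℕ) → ((x : ℕ) : ℤ) < q →
      q ≤ (n : ℤ) + 1 → (q - p).toNat + ((x : ℕ) - (t : ℕ)) ≤ μ →
      p ≤ (I x).1 := by
  intro μ
  induction μ with
  | zero =>
    intro t x p q _ _ htx _ _ hmu
    omega
  | succ μ ih =>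
    intro t x p q hIt ht1 htx hxq hq hmu
    classical
    have hxn : (x : ℕ) ≤ n := by omega
    have htn : (t : ℕ) ≤ n := by omega
    obtain ⟨⟨hpt0, _⟩, hnb, hii, _, hiv, _, _⟩ := hchecks t ht1 htn
    rw [hIt] at hpt0 hnb hiv
    have hpt : p < ((t : ℕ) : ℤ) := by simpa using hpt0
    have hadjsucc : G.Adj t ⟨(t : ℕ) + 1, by omega⟩ := hpath t htn
    set T : Finset (Fin (n + 2)) :=
      Finset.univ.filter
        (fun w => G.Adj t w ∧ (t : ℕ) < (w : ℕ) ∧ (w : ℕ) ≤ (x : ℕ)) with hTdef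
    have hTne : T.Nonempty :=
      ⟨⟨(t : ℕ) + 1, by omega⟩,
        Finset.mem_filter.mpr ⟨Finset.mem_univ _, hadjsucc, Nat.lt_succ_self _, htx⟩⟩
    set w := T.max' hTne with hwdef
    obtain ⟨-, hadjw, htw, hwx⟩ := Finset.mem_filter.mp (T.max'_mem hTne)
    have hwmax : ∀ u : Fin (n + 2), G.Adj t u → (t : ℕ) < (u : ℕ) → (u : ℕ) ≤ (x : ℕ) →
        (u : ℕ) ≤ (w : ℕ) := by
      intro u ha h1 h2
      exact Fin.le_def.mp (T.le_max' u (Finset.mem_filter.mpr ⟨Finset.mem_univ _, ha, h1, h2⟩))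
    set Z : Finset (Fin (n + 2)) :=
      Finset.univ.filter (fun z => G.Adj t z ∧ (x : ℕ) < (z : ℕ)) with hZdef
    by_cases hZne : Z.Nonempty
    · set z := Z.min' hZne with hzdef
      obtain ⟨-, hadjz, hxz⟩ := Finset.mem_filter.mp (Z.min'_mem hZne)
      have hzmin : ∀ u : Fin (n + 2), G.Adj t u → (x : ℕ) < (u : ℕ) → (z : ℕ) ≤ (u : ℕ) := by
        intro u ha h1
        exact Fin.le_def.mp (Z.min'_le u (Finset.mem_filter.mpr ⟨Finset.mem_univ _, ha, h1⟩))
      have hzq : ((z : ℕ) : ℤ) ≤ q := by simpa using (hnb z hadjz).2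
      by_cases hwx' : (w : ℕ) = (x : ℕ)
      · have hweq : w = x := Fin.ext hwx'
        have hadjx : G.Adj t x := hweq ▸ hadjw
        have hIx : I x = (((t : ℕ) : ℤ), ((z : ℕ) : ℤ)) := by
          refine hii x z hadjx hadjz (Fin.lt_def.mpr htx) (Fin.lt_def.mpr hxz) ?_
          rintro u hu ⟨h1, h2⟩
          have h1' := Fin.lt_def.mp h1
          have h2' := Fin.lt_def.mp h2
          have := hzmin u hu h1'
          omega
        rw [hIx]
        simpa using le_of_lt hpt
      · have hwxlt : (w : ℕ) < (x : ℕ) := lt_of_le_of_ne hwx hwx'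
        have hIw : I w = (((t : ℕ) : ℤ), ((z : ℕ) : ℤ)) := by
          refine hii w z hadjw hadjz (Fin.lt_def.mpr htw)
            (Fin.lt_def.mpr (by omega)) ?_
          rintro u hu ⟨h1, h2⟩
          have h1' := Fin.lt_def.mp h1
          have h2' := Fin.lt_def.mp h2
          by_cases hux : (u : ℕ) ≤ (x : ℕ)
          · have := hwmax u hu (by omega) hux; omega
          · have := hzmin u hu (by omega); omega
        have hrec := ih w x (((t : ℕ) : ℤ)) (((z : ℕ) : ℤ)) hIw (by omega) hwxlt
          (by exact_mod_cast hxz) (by omega) (by omega)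
        linarith
    · have hZe : ∀ u : Fin (n + 2), G.Adj t u → (u : ℕ) ≤ (x : ℕ) := by
        intro u hu
        by_contra hcon
        exact hZne ⟨u, Finset.mem_filter.mpr ⟨Finset.mem_univ _, hu, by omega⟩⟩
      by_cases hwx' : (w : ℕ) = (x : ℕ)
      · have hweq : w = x := Fin.ext hwx'
        have hadjx : G.Adj t x := hweq ▸ hadjw
        have hIx : I x = (p, q) := by
          refine hiv x hadjx (Fin.lt_def.mpr htx) ?_ ?_
          · intro z' hz'; exact Fin.le_def.mpr (hZe z' hz')
          · simpa using hxq
        rw [hIx]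
      · have hwxlt : (w : ℕ) < (x : ℕ) := lt_of_le_of_ne hwx hwx'
        have hIw : I w = (p, q) := by
          refine hiv w hadjw (Fin.lt_def.mpr htw) ?_ ?_
          · intro z' hz'
            have h1 := hZe z' hz'
            refine Fin.le_def.mpr ?_
            by_cases h2 : (t : ℕ) < (z' : ℕ)
            · exact hwmax z' hz' h2 h1
            · omega
          · simp only [Prod.snd]
            omega
        exact ih w x p q hIw (by omega) hwxlt hxq hq (by omega)

lemma nocross (n : ℕ) (G : SimpleGraph (Fin (n + 2))) (I : Fin (n + 2) → ℤ × ℤ)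
    (hG : SetupGraph n G)
    (hchecks : ∀ x : Fin (n + 2), 1 ≤ (x : ℕ) → (x : ℕ) ≤ n → ChecksPassAt n G I x) :
    ∀ e f g h : Fin (n + 2), G.Adj e f → G.Adj g h →
      (e : ℕ) < (g : ℕ) → (g : ℕ) < (f : ℕ) → (f : ℕ) < (h : ℕ) → False := by
  intro e f g h hef hgh heg hgf hfh
  classical
  have hg1 : 1 ≤ (g : ℕ) := by omega
  have hhn : (h : ℕ) ≤ n := by
    rcases hG.2.2 g h hgh with h1 | h1 | ⟨h1, h2⟩ | ⟨h1, h2⟩ | ⟨_, _, _, h4⟩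
    · omega
    · omega
    · omega
    · omega
    · exact h4
  have hgn : (g : ℕ) ≤ n := by omega
  obtain ⟨⟨hpt0, _⟩, hnb, hii, -, -, -, -⟩ := hchecks g hg1 hgn
  have hf1 : 1 ≤ (f : ℕ) := by omega
  have hfn : (f : ℕ) ≤ n := by omega
  have hfe : (I f).1 ≤ ((e : ℕ) : ℤ) := ((hchecks f hf1 hfn).2.1 e hef.symm).1
  have hadjsucc : G.Adj g ⟨(g : ℕ) + 1, by omega⟩ := hG.1 g hgn
  set T : Finset (Fin (n + 2)) :=
    Finset.univ.filter
      (fun w => G.Adj g w ∧ (g : ℕ) < (w : ℕ) ∧ (w : ℕ) ≤ (f : ℕ)) with hTdef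
  have hTne : T.Nonempty :=
    ⟨⟨(g : ℕ) + 1, by omega⟩,
      Finset.mem_filter.mpr ⟨Finset.mem_univ _, hadjsucc, Nat.lt_succ_self _, hgf⟩⟩
  set w := T.max' hTne with hwdef
  obtain ⟨-, hadjw, hgw, hwf⟩ := Finset.mem_filter.mp (T.max'_mem hTne)
  have hwmax : ∀ u : Fin (n + 2), G.Adj g u → (g : ℕ) < (u : ℕ) → (u : ℕ) ≤ (f : ℕ) →
      (u : ℕ) ≤ (w : ℕ) := by
    intro u ha h1 h2
    exact Fin.le_def.mp (T.le_max' u (Finset.mem_filter.mpr ⟨Finset.mem_univ _, ha, h1, h2⟩))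
  set Z : Finset (Fin (n + 2)) :=
    Finset.univ.filter (fun z => G.Adj g z ∧ (f : ℕ) < (z : ℕ)) with hZdef
  have hZne : Z.Nonempty :=
    ⟨h, Finset.mem_filter.mpr ⟨Finset.mem_univ _, hgh, hfh⟩⟩
  set z := Z.min' hZne with hzdef
  obtain ⟨-, hadjz, hfz⟩ := Finset.mem_filter.mp (Z.min'_mem hZne)
  have hzmin : ∀ u : Fin (n + 2), G.Adj g u → (f : ℕ) < (u : ℕ) → (z : ℕ) ≤ (u : ℕ) := by
    intro u ha h1
    exact Fin.le_def.mp (Z.min'_le u (Finset.mem_filter.mpr ⟨Finset.mem_univ _, ha, h1⟩))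
  have hzh : (z : ℕ) ≤ (h : ℕ) := hzmin h hgh hfh
  by_cases hwf' : (w : ℕ) = (f : ℕ)
  · have hweq : w = f := Fin.ext hwf'
    have hadjf : G.Adj g f := hweq ▸ hadjw
    have hIf : I f = (((g : ℕ) : ℤ), ((z : ℕ) : ℤ)) := by
      refine hii f z hadjf hadjz (Fin.lt_def.mpr hgf) (Fin.lt_def.mpr hfz) ?_
      rintro u hu ⟨h1, h2⟩
      have h1' := Fin.lt_def.mp h1
      have h2' := Fin.lt_def.mp h2
      have := hzmin u hu h1'
      omega
    rw [hIf] at hfe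
    simp only [Prod.fst] at hfe
    omega
  · have hwflt : (w : ℕ) < (f : ℕ) := lt_of_le_of_ne hwf hwf'
    have hIw : I w = (((g : ℕ) : ℤ), ((z : ℕ) : ℤ)) := by
      refine hii w z hadjw hadjz (Fin.lt_def.mpr hgw) (Fin.lt_def.mpr (by omega)) ?_
      rintro u hu ⟨h1, h2⟩
      have h1' := Fin.lt_def.mp h1
      have h2' := Fin.lt_def.mp h2
      by_cases huf : (u : ℕ) ≤ (f : ℕ)
      · have := hwmax u hu (by omega) huf; omega
      · have := hzmin u hu (by omega); omega
    have hrec := lemA n G I hchecks hG.1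
      ((((z : ℕ) : ℤ) - ((g : ℕ) : ℤ)).toNat + ((f : ℕ) - (w : ℕ)))
      w f (((g : ℕ) : ℤ)) (((z : ℕ) : ℤ)) hIw (by omega) hwflt
      (by exact_mod_cast hfz) (by omega) (le_refl _)
    omega

/-- Soundness: if the checks pass at every vertex `x ∈ {1, …, n}`, then any two edges
of `G` are nested or non-overlapping, i.e. `G` is path-outerplanar with witness the
natural order on `{0, 1, …, n+1}`. -/
theorem checks_imply_path_outerplanar (n : ℕ) (hn : 1 ≤ n)
    (G : SimpleGraph (Fin (n + 2))) (hG : SetupGraph n G)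
    (I : Fin (n + 2) → ℤ × ℤ)
    (hI0 : I ⟨0, by omega⟩ = (-1, (n : ℤ) + 2))
    (hIn : I ⟨n + 1, by omega⟩ = (-1, (n : ℤ) + 2))
    (hchecks : ∀ x : Fin (n + 2), 1 ≤ (x : ℕ) → (x : ℕ) ≤ n → ChecksPassAt n G I x) :
    ∀ e f g h : Fin (n + 2), G.Adj e f → G.Adj g h → e < f → g < h →
      (f ≤ g) ∨ (h ≤ e) ∨ (e ≤ g ∧ h ≤ f) ∨ (g ≤ e ∧ f ≤ h) := by
  intro e f g h hef hgh hef' hgh'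
  by_contra hcon
  push_neg at hcon
  obtain ⟨h1, h2, h3, h4⟩ := hcon
  have h1' := Fin.lt_def.mp h1
  have h2' := Fin.lt_def.mp h2
  by_cases heg : (e : ℕ) < (g : ℕ)
  · have hfh : f < h := h3 (Fin.le_def.mpr (by omega))
    exact nocross n G I hG hchecks e f g h hef hgh heg h1' (Fin.lt_def.mp hfh)
  · by_cases hge : (g : ℕ) < (e : ℕ)
    · have hhf : h < f := h4 (Fin.le_def.mpr (by omega))
      exact nocross n G I hG hchecks g h e f hgh hef hge h2' (Fin.lt_def.mp hhf)
    · have hfh := Fin.lt_def.mp (h3 (Fin.le_def.mpr (by omega)))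
      have hhf := Fin.lt_def.mp (h4 (Fin.le_def.mpr (by omega)))
      omega
end

section
/- Under the Setup, suppose in addition that for any two edges {e,f} and {g,h} of G with e < f and g < h, one of e < f ≤ g < h, g < h ≤ e < f, e ≤ g < h ≤ f, g ≤ e < f ≤ h holds, and that for each x ∈ {1, …, n}, I(x) is the inclusion-minimal pair (a, b) such that {a, b} is an edge of G with a < x < b (such edges exist, e.g. {0, n+1}, and by the nesting property the pairs (a,b) of edges with a < x < b are totally ordered by interval inclusion, so the minimal one is well-defined). Then the checks pass at every vertex x ∈ {1, …, n}. -/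
/-!
In a graph whose edges, viewed as intervals of the vertex order, never cross, the minimal
enclosing edge of a vertex `y` is read off the neighbourhood of any neighbour `x` of `y`: it is
`{x, z}` when `z` is the next neighbour of `x` beyond `y`, and it is the minimal enclosing edge of
`x` itself when `y` is the extreme neighbour of `x` on that side. In each case a competing edge
`{c, d}` would produce a crossing `x < c < y < d`. The mirror-image statements are the same
statements for the reversed order.
-/

namespace SimpleGraph

variable {V : Type*} [LinearOrder V] (G : SimpleGraph V)

/-- Any two edges, read as intervals, are nested or meet in at most an endpoint. -/
def NonCrossing : Prop :=
  ∀ e f g h : V, G.Adj e f → G.Adj g h → e < f → g < h →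
    f ≤ g ∨ h ≤ e ∨ (e ≤ g ∧ h ≤ f) ∨ (g ≤ e ∧ f ≤ h)

def IsMinEnclosingEdge (x a b : V) : Prop :=
  G.Adj a b ∧ a < x ∧ x < b ∧
    ∀ a' b', G.Adj a' b' → a' < x → x < b' → a' ≤ a ∧ b ≤ b'

variable {G} {x y z a b c d : V}

theorem NonCrossing.dual (hG : G.NonCrossing) : NonCrossing (V := Vᵒᵈ) G := by
  intro e f g h hef hgh hfe hhg
  rcases hG f e h g hef.symm hgh.symm hfe hhg with H | H | H | H
  exacts [Or.inr (Or.inl H), Or.inl H, Or.inr (Or.inr (Or.inl H.symm)),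
    Or.inr (Or.inr (Or.inr H.symm))]

theorem IsMinEnclosingEdge.dual (h : G.IsMinEnclosingEdge x a b) :
    IsMinEnclosingEdge (V := Vᵒᵈ) G x b a :=
  ⟨h.1.symm, h.2.2.1, h.2.1,
    fun a' b' hab' ha' hb' => (h.2.2.2 b' a' hab'.symm hb' ha').symm⟩

theorem IsMinEnclosingEdge.unique (h : G.IsMinEnclosingEdge x a b)
    (h' : G.IsMinEnclosingEdge x c d) : c = a ∧ d = b :=
  have h₁ := h.2.2.2 c d h'.1 h'.2.1 h'.2.2.1
  have h₂ := h'.2.2.2 a b h.1 h.2.1 h.2.2.1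
  ⟨le_antisymm h₁.1 h₂.1, le_antisymm h₂.2 h₁.2⟩

theorem NonCrossing.not_crossing (hG : G.NonCrossing) (hxy : G.Adj x y) (hcd : G.Adj c d)
    (hxc : x < c) (hcy : c < y) (hyd : y < d) : False := by
  rcases hG x y c d hxy hcd (hxc.trans hcy) (hcy.trans hyd) with _ | _ | _ | _ <;> order

theorem NonCrossing.le_of_adj (hG : G.NonCrossing) (hab : G.Adj a b) (hax : a < x)
    (hxb : x < b) (hxy : G.Adj x y) : y ≤ b :=
  le_of_not_gt fun hby => hG.not_crossing hab hxy hax hxb hby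

theorem NonCrossing.mem_Icc_of_adj (hG : G.NonCrossing) (hab : G.Adj a b) (hax : a < x)
    (hxb : x < b) (hxy : G.Adj x y) : y ∈ Set.Icc a b :=
  ⟨hG.dual.le_of_adj hab.symm hxb hax hxy, hG.le_of_adj hab hax hxb hxy⟩

theorem NonCrossing.isMinEnclosingEdge_of_consecutive_right (hG : G.NonCrossing)
    (hxy : G.Adj x y) (hxz : G.Adj x z) (hxy' : x < y) (hyz : y < z)
    (hcons : ∀ w, G.Adj x w → ¬(y < w ∧ w < z)) : G.IsMinEnclosingEdge y x z := by
  refine ⟨hxz, hxy', hyz, fun a' b' hab' ha'y hyb' => ?_⟩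
  have ha'x : a' ≤ x := le_of_not_gt fun hxa' => hG.not_crossing hxy hab' hxa' ha'y hyb'
  refine ⟨ha'x, le_of_not_gt fun hb'z => ?_⟩
  rcases ha'x.eq_or_lt with rfl | ha'x
  · exact hcons b' hab' ⟨hyb', hb'z⟩
  · exact hG.not_crossing hab' hxz ha'x (hxy'.trans hyb') hb'z

theorem NonCrossing.isMinEnclosingEdge_of_consecutive_left (hG : G.NonCrossing)
    (hxy : G.Adj x y) (hxz : G.Adj x z) (hyz : y < z) (hzx : z < x)
    (hcons : ∀ w, G.Adj x w → ¬(y < w ∧ w < z)) : G.IsMinEnclosingEdge z y x :=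
  (hG.dual.isMinEnclosingEdge_of_consecutive_right hxz hxy hzx hyz
    fun w hw h => hcons w hw h.symm).dual

theorem NonCrossing.isMinEnclosingEdge_of_max_adj (hG : G.NonCrossing)
    (hx : G.IsMinEnclosingEdge x a b) (hxy : G.Adj x y) (hxy' : x < y)
    (hmax : ∀ z, G.Adj x z → z ≤ y) (hyb : y < b) : G.IsMinEnclosingEdge y a b := by
  obtain ⟨hab, hax, hxb, hmin⟩ := hx
  refine ⟨hab, hax.trans hxy', hyb, fun a' b' hab' ha'y hyb' =>
    hmin a' b' hab' ?_ (hxy'.trans hyb')⟩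
  rcases lt_trichotomy a' x with h | rfl | h
  · exact h
  · exact absurd (hmax b' hab') (not_le.mpr hyb')
  · exact (hG.not_crossing hxy hab' h ha'y hyb').elim

theorem NonCrossing.isMinEnclosingEdge_of_min_adj (hG : G.NonCrossing)
    (hx : G.IsMinEnclosingEdge x a b) (hxy : G.Adj x y) (hyx : y < x)
    (hmin : ∀ z, G.Adj x z → y ≤ z) (hay : a < y) : G.IsMinEnclosingEdge y a b :=
  (hG.dual.isMinEnclosingEdge_of_max_adj hx.dual hxy hyx hmin hay).dual

end SimpleGraph

open SimpleGraph

theorem checksPassAt_of_isMinEnclosingEdge {n : ℕ} {G : SimpleGraph (Fin (n + 2))}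
    {I : Fin (n + 2) → ℤ × ℤ} (hG : G.NonCrossing)
    (hI : ∀ y, 0 < y → y < Fin.last (n + 1) →
      ∃ c d, G.IsMinEnclosingEdge y c d ∧ I y = (((c : ℕ) : ℤ), ((d : ℕ) : ℤ)))
    (hIend : ∀ y, y = 0 ∨ y = Fin.last (n + 1) → I y = (-1, (n : ℤ) + 2))
    {x a b : Fin (n + 2)} (hx : G.IsMinEnclosingEdge x a b)
    (hIx : I x = (((a : ℕ) : ℤ), ((b : ℕ) : ℤ))) : ChecksPassAt n G I x := by
  have hcert : ∀ {y c d}, G.IsMinEnclosingEdge y c d →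
      I y = (((c : ℕ) : ℤ), ((d : ℕ) : ℤ)) := by
    intro y c d hy
    obtain ⟨c', d', hy', hIy⟩ := hI y ((Fin.zero_le c).trans_lt hy.2.1)
      (hy.2.2.1.trans_le (Fin.le_last d))
    obtain ⟨rfl, rfl⟩ := hy.unique hy'
    exact hIy
  have hIcc : ∀ {y}, G.Adj x y → y ∈ Set.Icc a b := hG.mem_Icc_of_adj hx.1 hx.2.1 hx.2.2.1
  simp only [ChecksPassAt, hIx]
  refine ⟨⟨by exact_mod_cast hx.2.1, by exact_mod_cast hx.2.2.1⟩, fun y hxy => ?_,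
    fun y z hxy hxz hxy' hyz hcons =>
      hcert (hG.isMinEnclosingEdge_of_consecutive_right hxy hxz hxy' hyz hcons),
    fun y z hxy hxz hyz hzx hcons =>
      hcert (hG.isMinEnclosingEdge_of_consecutive_left hxy hxz hyz hzx hcons),
    fun y hxy hxy' hmax hyb =>
      hcert (hG.isMinEnclosingEdge_of_max_adj hx hxy hxy' hmax (by exact_mod_cast hyb)),
    fun y hxy hyx hmin hay =>
      hcert (hG.isMinEnclosingEdge_of_min_adj hx hxy hyx hmin (by exact_mod_cast hay)),
    fun y hxy => ?_⟩
  · exact ⟨by exact_mod_cast (hIcc hxy).1, by exact_mod_cast (hIcc hxy).2⟩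
  by_cases hy : 0 < y ∧ y < Fin.last (n + 1)
  · obtain ⟨c, d, hcd, hIy⟩ := hI y hy.1 hy.2
    have hxa : ((a : ℕ) : ℤ) < ((x : ℕ) : ℤ) := by exact_mod_cast hx.2.1
    have hxb : ((x : ℕ) : ℤ) < ((b : ℕ) : ℤ) := by exact_mod_cast hx.2.2.1
    simp only [hIy, ne_eq, Prod.mk.injEq]
    constructor
    · intro hc
      obtain rfl : c = x := Fin.ext (by exact_mod_cast hc)
      have hdb : ((d : ℕ) : ℤ) ≤ ((b : ℕ) : ℤ) := by exact_mod_cast (hIcc hcd.1).2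
      exact ⟨⟨d, rfl, hcd.1⟩, hxa.le, hdb, fun h => hxa.ne h.1.symm⟩
    · intro hd
      obtain rfl : d = x := Fin.ext (by exact_mod_cast hd)
      have hac : ((a : ℕ) : ℤ) ≤ ((c : ℕ) : ℤ) := by exact_mod_cast (hIcc hcd.1.symm).1
      exact ⟨⟨c, rfl, hcd.1⟩, hac, hxb.le, fun h => hxb.ne h.2⟩
  · rw [not_and_or, not_lt, not_lt, Fin.le_zero_iff, Fin.last_le_iff] at hy
    have := x.isLt
    simp only [hIend y hy]
    omega

/-- Completeness: if any two edges of `G` are nested or non-overlapping and `I x` is the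
inclusion-minimal pair `(a, b)` such that `{a, b}` is an edge of `G` with `a < x < b`,
then the checks pass at every vertex `x ∈ {1, …, n}`. -/
theorem path_outerplanar_implies_checks (n : ℕ)
    (G : SimpleGraph (Fin (n + 2)))
    (I : Fin (n + 2) → ℤ × ℤ)
    (hI0 : I ⟨0, by omega⟩ = (-1, (n : ℤ) + 2))
    (hIn : I ⟨n + 1, by omega⟩ = (-1, (n : ℤ) + 2))
    (hnest : ∀ e f g h : Fin (n + 2), G.Adj e f → G.Adj g h → e < f → g < h →
      (f ≤ g) ∨ (h ≤ e) ∨ (e ≤ g ∧ h ≤ f) ∨ (g ≤ e ∧ f ≤ h))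
    (hmin : ∀ x : Fin (n + 2), 1 ≤ (x : ℕ) → (x : ℕ) ≤ n →
      ∃ a b : Fin (n + 2), G.Adj a b ∧ a < x ∧ x < b ∧
        I x = (((a : ℕ) : ℤ), ((b : ℕ) : ℤ)) ∧
        ∀ a' b' : Fin (n + 2), G.Adj a' b' → a' < x → x < b' → (a' ≤ a ∧ b ≤ b')) :
    ∀ x : Fin (n + 2), 1 ≤ (x : ℕ) → (x : ℕ) ≤ n → ChecksPassAt n G I x := by
  have hI : ∀ y, 0 < y → y < Fin.last (n + 1) →
      ∃ c d, G.IsMinEnclosingEdge y c d ∧ I y = (((c : ℕ) : ℤ), ((d : ℕ) : ℤ)) := by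
    intro y h0 hlast
    rw [Fin.lt_def, Fin.val_zero] at h0
    rw [Fin.lt_def, Fin.val_last] at hlast
    obtain ⟨c, d, hcd, hcy, hyd, hIy, hcd_min⟩ := hmin y h0 (by omega)
    exact ⟨c, d, ⟨hcd, hcy, hyd, hcd_min⟩, hIy⟩
  have hIend : ∀ y, y = 0 ∨ y = Fin.last (n + 1) → I y = (-1, (n : ℤ) + 2) := by
    rintro y (rfl | rfl)
    exacts [hI0, hIn]
  intro x hx1 hxn
  obtain ⟨a, b, hab, hax, hxb, hIx, hab_min⟩ := hmin x hx1 hxn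
  exact checksPassAt_of_isMinEnclosingEdge hnest hI hIend ⟨hab, hax, hxb, hab_min⟩ hIx
end

section
/- Let k ≥ 3 and n ≥ 1, and let G be a simple graph on vertex set {0, 1, …, n−1} such that every edge {u, v} of G satisfies |u − v| ≤ k − 2. Then K_k is not a minor of G. -/
lemma crossing_walk {n : ℕ} (G : SimpleGraph (Fin n)) (S : Set (Fin n)) (t : ℕ) :
    ∀ (a b : S) (_ : (G.induce S).Walk a b), ((a : Fin n) : ℕ) ≤ t → t < ((b : Fin n) : ℕ) →
      ∃ u ∈ S, ∃ v ∈ S, G.Adj u v ∧ (u : ℕ) ≤ t ∧ t < (v : ℕ) := by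
  intro a b w
  induction w with
  | nil => intro h1 h2; omega
  | @cons x c b h p ih =>
    intro h1 h2
    by_cases hc : ((c : Fin n) : ℕ) ≤ t
    · exact ih hc h2
    · exact ⟨x, x.2, c, c.2, h, h1, by omega⟩

lemma crossing {n : ℕ} (G : SimpleGraph (Fin n)) (S : Set (Fin n))
    (h : (G.induce S).Connected) (t : ℕ) {x y : Fin n} (hx : x ∈ S) (hy : y ∈ S)
    (hxt : (x : ℕ) ≤ t) (hty : t < (y : ℕ)) :
    ∃ u ∈ S, ∃ v ∈ S, G.Adj u v ∧ (u : ℕ) ≤ t ∧ t < (v : ℕ) := by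
  obtain ⟨w⟩ := h.preconnected ⟨x, hx⟩ ⟨y, hy⟩
  exact crossing_walk G S t ⟨x, hx⟩ ⟨y, hy⟩ w hxt hty


/-- A graph on `{0, …, n-1}` whose every edge `{u, v}` satisfies `|u - v| ≤ k - 2`
has no `K_k` minor. -/
theorem short_edges_no_clique_minor (k n : ℕ) (hk : 3 ≤ k) (hn : 1 ≤ n)
    (G : SimpleGraph (Fin n))
    (hG : ∀ u v : Fin n, G.Adj u v → |((u : ℕ) : ℤ) - ((v : ℕ) : ℤ)| ≤ (k : ℤ) - 2) :
    ¬ HasCliqueMinor G k := by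
  rintro ⟨S, hne, hdisj, hconn, hadj⟩
  -- minimum vertex of each S i
  have hmin : ∀ i : Fin k, ∃ m : Fin n, m ∈ S i ∧ ∀ v ∈ S i, (m : ℕ) ≤ (v : ℕ) := by
    intro i
    obtain ⟨m, hm, hmin⟩ := Set.exists_min_image (S i) (fun v => (v : ℕ)) (Set.toFinite _) (hne i)
    exact ⟨m, hm, hmin⟩
  choose m hmS hmmin using hmin
  -- i0 maximizing min
  have : Nonempty (Fin k) := ⟨⟨0, by omega⟩⟩
  obtain ⟨i0, hi0⟩ := Finite.exists_max (fun i : Fin k => ((m i : ℕ)))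
  set a : ℕ := (m i0 : ℕ) with ha
  -- every S i contains a vertex in window [a-(k-2), a]
  have hwin : ∀ i : Fin k, ∃ v ∈ S i, (v : ℕ) ≤ a ∧ (a : ℤ) ≤ ((v : ℕ) : ℤ) + ((k : ℤ) - 2) := by
    intro i
    by_cases hi : i = i0
    · subst hi
      exact ⟨m i, hmS i, le_refl _, by omega⟩
    · obtain ⟨u, hu, v, hv, huv⟩ := hadj i0 i (Ne.symm hi)
      have hua : a ≤ (u : ℕ) := hmmin i0 u hu
      have hle := hG u v huv
      by_cases hva : (v : ℕ) ≤ a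
      · refine ⟨v, hv, hva, ?_⟩
        rw [abs_le] at hle
        omega
      · -- S i has min ≤ a and a vertex > a; crossing edge
        have hmi : ((m i : ℕ)) ≤ a := hi0 i
        obtain ⟨u', hu', v', hv', huv', hu'a, hv'a⟩ :=
          crossing G (S i) (hconn i) a (hmS i) hv hmi (by omega)
        have hle' := hG u' v' huv'
        rw [abs_le] at hle'
        exact ⟨u', hu', hu'a, by omega⟩
  choose g hgS hg1 hg2 using hwin
  -- g is injective
  have hginj : Function.Injective g := by
    intro i j hij
    by_contra hne'
    exact (hdisj i j hne').ne_of_mem (hgS i) (hgS j) (by rw [hij])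
  -- map into Fin (k-1)
  have hcard : ∀ i : Fin k, a - ((g i : ℕ)) < k - 1 := by
    intro i
    have := hg2 i
    omega
  have hinj2 : Function.Injective (fun i : Fin k => (⟨a - ((g i : ℕ)), hcard i⟩ : Fin (k-1))) := by
    intro i j hij
    apply hginj
    have h1 := hg1 i
    have h2 := hg1 j
    have : a - ((g i : ℕ)) = a - ((g j : ℕ)) := by
      simpa using congrArg Fin.val hij
    have : ((g i : ℕ)) = ((g j : ℕ)) := by omega
    exact Fin.ext this
  have := Fintype.card_le_of_injective _ hinj2
  simp [Fintype.card_fin] at this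
  omega
end

section
/- Let s, t ≥ 1, m ≥ 0, and let 1 ≤ i_1 < ⋯ < i_m ≤ s and 1 ≤ j_1 < ⋯ < j_m ≤ t. Let G be the simple graph with vertex set {a_1, …, a_s} ∪ {b_1, …, b_t} (all distinct) whose edges are exactly: {a_x, a_{x+1}} for 1 ≤ x < s, {b_y, b_{y+1}} for 1 ≤ y < t, and {a_{i_l}, b_{j_l}} for 1 ≤ l ≤ m. Then neither K_4 nor K_{2,3} is a minor of G. -/
/-- Two vertex-disjoint paths `a_1, …, a_s` and `b_1, …, b_t`, with the cross
edges `{a_{i_l}, b_{j_l}}` for `1 ≤ l ≤ m`, and no other edges. -/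
def TwoPathsGraph (s t m : ℕ) (ia : Fin m → Fin s) (jb : Fin m → Fin t) :
    SimpleGraph (Fin s ⊕ Fin t) :=
  SimpleGraph.fromRel (fun u v =>
    match u, v with
    | .inl x, .inl y => (x : ℕ) + 1 = (y : ℕ)
    | .inr x, .inr y => (x : ℕ) + 1 = (y : ℕ)
    | .inl x, .inr y => ∃ l, ia l = x ∧ jb l = y
    | .inr _, .inl _ => False)



set_option linter.unusedSectionVars false
namespace TwoPathsAux

variable {V : Type*} [Fintype V] {G : SimpleGraph V} {f : V → ℕ}

/-- every vertex of `S` lies strictly inside the hull of `T` -/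
def Inside (f : V → ℕ) (S T : Set V) : Prop :=
  ∀ a ∈ S, (∃ t ∈ T, f t < f a) ∧ ∃ t ∈ T, f a < f t

/-- all of `S` lies strictly left of all of `T` -/
def Below (f : V → ℕ) (S T : Set V) : Prop := ∀ a ∈ S, ∀ b ∈ T, f a < f b

/-- there is an edge between `S` and `T` -/
def Adjb (G : SimpleGraph V) (S T : Set V) : Prop := ∃ u ∈ S, ∃ v ∈ T, G.Adj u v

/-- all edges are pairwise non-crossing intervals w.r.t. `f` -/
def Noncross (G : SimpleGraph V) (f : V → ℕ) : Prop :=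
  ∀ ⦃u v x y : V⦄, G.Adj u v → G.Adj x y → f u < f x → f x < f v → f v < f y → False

lemma Adjb.symm {S T : Set V} (h : Adjb G S T) : Adjb G T S := by
  obtain ⟨u, hu, v, hv, h⟩ := h; exact ⟨v, hv, u, hu, h.symm⟩

lemma conn_nonempty {S : Set V} (h : (G.induce S).Connected) : S.Nonempty :=
  Set.nonempty_coe_sort.mp h.nonempty

lemma boundary {S : Set V} (hconn : (G.induce S).Connected) (P : V → Prop)
    {a b : V} (ha : a ∈ S) (hb : b ∈ S) (hPa : P a) (hPb : ¬ P b) :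
    ∃ x ∈ S, ∃ y ∈ S, G.Adj x y ∧ P x ∧ ¬ P y := by
  classical
  obtain ⟨w⟩ := hconn.preconnected ⟨a, ha⟩ ⟨b, hb⟩
  suffices H : ∀ (u v : ↥S), (G.induce S).Walk u v → P u.1 → ¬ P v.1 →
      ∃ x ∈ S, ∃ y ∈ S, G.Adj x y ∧ P x ∧ ¬ P y from H _ _ w hPa hPb
  intro u v w
  induction w with
  | nil => intro h1 h2; exact absurd h1 h2
  | @cons u u' v hadj p ih =>
    intro h1 h2
    by_cases hP : P u'.1
    · exact ih hP h2
    · exact ⟨u.1, u.2, u'.1, u'.2, hadj, h1, hP⟩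

lemma cover (hf : Function.Injective f) {T : Set V} (hT : (G.induce T).Connected)
    {t1 t2 : V} (h1 : t1 ∈ T) (h2 : t2 ∈ T) {w : V} (hw : w ∉ T)
    (hn1 : f t1 < f w) (hn2 : f w < f t2) :
    ∃ x ∈ T, ∃ y ∈ T, G.Adj x y ∧ f x < f w ∧ f w < f y := by
  obtain ⟨x, hx, y, hy, hadj, hPx, hPy⟩ :=
    boundary hT (fun v => f v < f w) h1 h2 hn1 (by omega)
  refine ⟨x, hx, y, hy, hadj, hPx, ?_⟩
  have : f y ≠ f w := fun h => hw (hf h ▸ hy)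
  omega

lemma one_in_all_in (hf : Function.Injective f) (hcr : Noncross G f)
    {S T : Set V} (hS : (G.induce S).Connected) (hT : (G.induce T).Connected)
    (hd : Disjoint S T) {s0 : V} (hs0 : s0 ∈ S)
    (h1 : ∃ t ∈ T, f t < f s0) (h2 : ∃ t ∈ T, f s0 < f t) : Inside f S T := by
  intro a ha
  by_contra hA
  obtain ⟨x, hx, y, hy, hadj, hPx, hPy⟩ :=
    boundary hS (fun v => (∃ t ∈ T, f t < f v) ∧ ∃ t ∈ T, f v < f t) hs0 ha ⟨h1, h2⟩ hA
  obtain ⟨⟨t1, ht1, hlt1⟩, ⟨t2, ht2, hlt2⟩⟩ := hPx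
  have hxT : x ∉ T := fun h => (Set.disjoint_left.mp hd hx) h
  have hyT : y ∉ T := fun h => (Set.disjoint_left.mp hd hy) h
  obtain ⟨α, hα, β, hβ, hadj2, hl1, hl2⟩ := cover hf hT ht1 ht2 hxT hlt1 hlt2
  rcases not_and_or.mp hPy with h | h
  · push_neg at h
    have : f y ≠ f α := fun hh => hyT (hf hh ▸ hα)
    have hya : f y < f α := by have := h α hα; omega
    exact hcr hadj.symm hadj2 hya hl1 hl2
  · push_neg at h
    have : f y ≠ f β := fun hh => hyT (hf hh ▸ hβ)
    have hby : f β < f y := by have := h β hβ; omega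
    exact hcr hadj2 hadj hl1 hl2 hby

lemma not_mutual {S T : Set V} (hS : S.Nonempty)
    (h1 : Inside f S T) (h2 : Inside f T S) : False := by
  obtain ⟨m, hm, hmax⟩ := Set.exists_max_image (S ∪ T) f (Set.toFinite _)
    (hS.mono Set.subset_union_left)
  rcases hm with hm | hm
  · obtain ⟨t, ht, hlt⟩ := (h1 m hm).2
    exact absurd (hmax t (Or.inr ht)) (by omega)
  · obtain ⟨t, ht, hlt⟩ := (h2 m hm).2
    exact absurd (hmax t (Or.inl ht)) (by omega)

lemma trichotomy (hf : Function.Injective f) (hcr : Noncross G f)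
    {S T : Set V} (hS : (G.induce S).Connected) (hT : (G.induce T).Connected)
    (hd : Disjoint S T) :
    Inside f S T ∨ Inside f T S ∨ Below f S T ∨ Below f T S := by
  obtain ⟨smin, hsmin, hsminle⟩ := Set.exists_min_image S f (Set.toFinite _) (conn_nonempty hS)
  obtain ⟨smax, hsmax, hsmaxle⟩ := Set.exists_max_image S f (Set.toFinite _) (conn_nonempty hS)
  obtain ⟨tmin, htmin, htminle⟩ := Set.exists_min_image T f (Set.toFinite _) (conn_nonempty hT)
  obtain ⟨tmax, htmax, htmaxle⟩ := Set.exists_max_image T f (Set.toFinite _) (conn_nonempty hT)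
  have hne : f smin ≠ f tmin := fun h => (Set.disjoint_left.mp hd hsmin) (hf h ▸ htmin)
  rcases lt_or_gt_of_ne hne with h | h
  · have hne2 : f tmin ≠ f smax := fun hh => (Set.disjoint_left.mp hd hsmax) ((hf hh).symm ▸ htmin)
    rcases lt_or_gt_of_ne hne2 with h2 | h2
    · exact Or.inr (Or.inl (one_in_all_in hf hcr hT hS hd.symm htmin
        ⟨smin, hsmin, h⟩ ⟨smax, hsmax, h2⟩))
    · exact Or.inr (Or.inr (Or.inl (fun a ha b hb => by
        have := hsmaxle a ha; have := htminle b hb; omega)))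
  · have hne2 : f smin ≠ f tmax := fun hh => (Set.disjoint_left.mp hd hsmin) (hf hh ▸ htmax)
    rcases lt_or_gt_of_ne hne2 with h2 | h2
    · exact Or.inl (one_in_all_in hf hcr hS hT hd hsmin ⟨tmin, htmin, h⟩ ⟨tmax, htmax, h2⟩)
    · exact Or.inr (Or.inr (Or.inr (fun a ha b hb => by
        have := htmaxle a ha; have := hsminle b hb; omega)))


/-- If `W` sits strictly inside the hull of `X` and `W` has an edge to `Y`
(all pairwise disjoint connected), then `Y` is inside `X` too. -/
lemma killer (hf : Function.Injective f) (hcr : Noncross G f)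
    {X W Y : Set V} (hX : (G.induce X).Connected) (hY : (G.induce Y).Connected)
    (hdWX : Disjoint W X) (hdYX : Disjoint Y X)
    (hWX : Inside f W X) {w y : V} (hw : w ∈ W) (hy : y ∈ Y)
    (hadj : G.Adj w y) : Inside f Y X := by
  obtain ⟨⟨x1, hx1, h1⟩, ⟨x2, hx2, h2⟩⟩ := hWX w hw
  by_cases hyin : (∃ x ∈ X, f x < f y) ∧ ∃ x ∈ X, f y < f x
  · exact one_in_all_in hf hcr hY hX hdYX hy hyin.1 hyin.2
  · exfalso
    have hwX : w ∉ X := Set.disjoint_left.mp hdWX hw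
    have hyX : y ∉ X := Set.disjoint_left.mp hdYX hy
    obtain ⟨α, hα, β, hβ, hadj2, hl1, hl2⟩ := cover hf hX hx1 hx2 hwX h1 h2
    rcases not_and_or.mp hyin with h | h
    · push_neg at h
      have : f y ≠ f α := fun hh => hyX (hf hh ▸ hα)
      have hya : f y < f α := by have := h α hα; omega
      exact hcr hadj.symm hadj2 hya hl1 hl2
    · push_neg at h
      have : f y ≠ f β := fun hh => hyX (hf hh ▸ hβ)
      have hby : f β < f y := by have := h β hβ; omega
      exact hcr hadj2 hadj hl1 hl2 hby

/-- A connected set disjoint from an edge's endpoints cannot have a vertex strictly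
under the edge and another strictly outside it. -/
lemma straddle (hf : Function.Injective f) (hcr : Noncross G f)
    {W : Set V} (hW : (G.induce W).Connected) {a b : V} (hadj : G.Adj a b)
    (hab : f a < f b) (haW : a ∉ W) (hbW : b ∉ W) {w1 w2 : V}
    (h1 : w1 ∈ W) (h2 : w2 ∈ W) (hin1 : f a < f w1) (hin2 : f w1 < f b)
    (hout : f w2 < f a ∨ f b < f w2) : False := by
  obtain ⟨x, hx, y, hy, hadjxy, hPx, hPy⟩ :=
    boundary hW (fun v => f a < f v ∧ f v < f b) h1 h2 ⟨hin1, hin2⟩ (by omega)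
  have hya : f y ≠ f a := fun hh => haW ((hf hh) ▸ hy)
  have hyb : f y ≠ f b := fun hh => hbW ((hf hh) ▸ hy)
  rcases not_and_or.mp hPy with h | h
  · have : f y < f a := by omega
    exact hcr hadjxy.symm hadj this hPx.1 hPx.2
  · have : f b < f y := by omega
    exact hcr hadj hadjxy hPx.1 hPx.2 this

/-- An edge `p q` spanning over a point `x` of `M`, where `x` has an edge to a
connected set `Z` avoiding `p, q` and reaching outside `[f p, f q]`, is impossible. -/
lemma spanEscape (hf : Function.Injective f) (hcr : Noncross G f)
    {Z : Set V} (hZ : (G.induce Z).Connected) {p q x z : V}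
    (hpq : G.Adj p q) (hxz : G.Adj x z) (h1 : f p < f x) (h2 : f x < f q)
    (hz : z ∈ Z) (hpZ : p ∉ Z) (hqZ : q ∉ Z)
    (ho : ∃ o ∈ Z, f o < f p ∨ f q < f o) : False := by
  obtain ⟨o, ho', hoo⟩ := ho
  have hzp : f z ≠ f p := fun hh => hpZ (hf hh ▸ hz)
  have hzq : f z ≠ f q := fun hh => hqZ (hf hh ▸ hz)
  rcases lt_trichotomy (f z) (f p) with h | h | h
  · exact hcr hxz.symm hpq h h1 h2
  · exact absurd h hzp
  · rcases lt_trichotomy (f z) (f q) with h' | h' | h'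
    · exact straddle hf hcr hZ hpq (by omega) hpZ hqZ hz ho' h h' hoo
    · exact absurd h' hzq
    · exact hcr hpq hxz h1 h2 h'

/-- Four sets in order `W < X < Y < Z` with edges `W–Y` and `X–Z` give a crossing. -/
lemma cross4 (hcr : Noncross G f) {W X Y Z : Set V}
    (hWY : Adjb G W Y) (hXZ : Adjb G X Z)
    (b1 : Below f W X) (b2 : Below f X Y) (b3 : Below f Y Z) : False := by
  obtain ⟨a, ha, c, hc, e1⟩ := hWY
  obtain ⟨b, hb, d, hd, e2⟩ := hXZ
  exact hcr e1 e2 (b1 a ha b hb) (b2 b hb c hc) (b3 c hc d hd)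

lemma below_resolve {S T : Set V} (h : Below f S T ∨ Below f T S)
    {x y : V} (hx : x ∈ S) (hy : y ∈ T) (hlt : f x < f y) : Below f S T :=
  h.resolve_right fun hb => absurd (hb _ hy _ hx) (by omega)

/-- Core contradiction: `P1 < P2 < P3` all inside outer `X`, edge `P1–P3`
spans `P2`, which escapes to `X` (which reaches below `P1`). -/
lemma k4_core (hf : Function.Injective f) (hcr : Noncross G f)
    {X P1 P2 P3 : Set V} (hX : (G.induce X).Connected)
    (b12 : Below f P1 P2) (b23 : Below f P2 P3)
    (i1 : Inside f P1 X) (d1X : Disjoint P1 X) (d3X : Disjoint P3 X)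
    (a13 : Adjb G P1 P3) (a2X : Adjb G P2 X) : False := by
  obtain ⟨p, hp, q, hq, hpq⟩ := a13
  obtain ⟨x, hx, z, hz, hxz⟩ := a2X
  obtain ⟨⟨o, ho, hlt⟩, -⟩ := i1 p hp
  exact spanEscape hf hcr hX hpq hxz (b12 p hp x hx) (b23 x hx q hq) hz
    (Set.disjoint_left.mp d1X hp) (Set.disjoint_left.mp d3X hq) ⟨o, ho, Or.inl hlt⟩


/-- sorting helper: strictly increasing reps after `Tuple.sort` -/
lemma sort_strict {n : ℕ} (g : Fin n → ℕ) (hg : ∀ i j, i ≠ j → g i ≠ g j)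
    {i j : Fin n} (hij : i < j) :
    g (Tuple.sort g i) < g (Tuple.sort g j) :=
  lt_of_le_of_ne (Tuple.monotone_sort g hij.le)
    (hg _ _ ((Tuple.sort g).injective.ne hij.ne))

/-- If one of three mutually adjacent sets lies inside a fourth set adjacent to
all of them, we get a contradiction (K4 with an `Inside` pair). -/
lemma k4_inside (hf : Function.Injective f) (hcr : Noncross G f)
    {X : Set V} (T : Fin 3 → Set V)
    (hX : (G.induce X).Connected) (hT : ∀ i, (G.induce (T i)).Connected)
    (hd : ∀ i, Disjoint (T i) X) (hdp : ∀ i j, i ≠ j → Disjoint (T i) (T j))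
    (ha : ∀ i j, i ≠ j → Adjb G (T i) (T j)) (haX : ∀ i, Adjb G (T i) X)
    (h0 : Inside f (T 0) X) : False := by
  have hIns : ∀ i, Inside f (T i) X := by
    intro i
    by_cases hi : i = 0
    · exact hi ▸ h0
    · obtain ⟨w, hw, y, hy, hadj⟩ := ha 0 i (Ne.symm hi)
      exact killer hf hcr hX (hT i) (hd 0) (hd i) h0 hw hy hadj
  have hbo : ∀ i j, i ≠ j → Below f (T i) (T j) ∨ Below f (T j) (T i) := by
    intro i j hij
    rcases trichotomy hf hcr (hT i) (hT j) (hdp i j hij) with h | h | h | h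
    · exfalso
      obtain ⟨w, hw, y, hy, hadj⟩ := haX i
      have : Inside f X (T j) := killer hf hcr (hT j) hX (hdp i j hij) (hd j).symm h hw hy hadj
      exact not_mutual (conn_nonempty hX) this (hIns j)
    · exfalso
      obtain ⟨w, hw, y, hy, hadj⟩ := haX j
      have : Inside f X (T i) := killer hf hcr (hT i) hX (hdp j i (Ne.symm hij)) (hd i).symm h hw hy hadj
      exact not_mutual (conn_nonempty hX) this (hIns i)
    · exact Or.inl h
    · exact Or.inr h
  have hne : ∀ i, (T i).Nonempty := fun i => conn_nonempty (hT i)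
  choose r hr using hne
  set g : Fin 3 → ℕ := fun i => f (r i) with hgdef
  have hginj : ∀ i j, i ≠ j → g i ≠ g j := by
    intro i j hij hh
    exact (Set.disjoint_left.mp (hdp i j hij) (hr i)) (hf hh ▸ hr j)
  set σ := Tuple.sort g with hσ
  have toB : ∀ i j, i ≠ j → g i < g j → Below f (T i) (T j) := fun i j hij hlt =>
    below_resolve (hbo i j hij) (hr i) (hr j) hlt
  have hne01 : σ 0 ≠ σ 1 := σ.injective.ne (by decide)
  have hne12 : σ 1 ≠ σ 2 := σ.injective.ne (by decide)
  have hne02 : σ 0 ≠ σ 2 := σ.injective.ne (by decide)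
  exact k4_core hf hcr hX
    (toB _ _ hne01 (sort_strict g hginj (by decide)))
    (toB _ _ hne12 (sort_strict g hginj (by decide)))
    (hIns (σ 0)) (hd (σ 0)) (hd (σ 2)) (ha _ _ hne02) (haX (σ 1))

/-- no K4 minor in a non-crossing graph -/
lemma noK4 (hf : Function.Injective f) (hcr : Noncross G f)
    (S : Fin 4 → Set V) (hconn : ∀ i, (G.induce (S i)).Connected)
    (hdisj : ∀ i j, i ≠ j → Disjoint (S i) (S j))
    (hadj : ∀ i j, i ≠ j → Adjb G (S i) (S j)) : False := by
  classical
  by_cases h : ∃ i j, i ≠ j ∧ Inside f (S i) (S j)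
  · obtain ⟨i, j, hij, hIns⟩ := h
    obtain ⟨ι, hιinj, hιj, hι0⟩ :=
      (by decide : ∀ i j : Fin 4, i ≠ j → ∃ ι : Fin 3 → Fin 4,
        Function.Injective ι ∧ (∀ a, ι a ≠ j) ∧ ι 0 = i) i j hij
    exact k4_inside hf hcr (fun a => S (ι a)) (hconn j) (fun a => hconn _)
      (fun a => hdisj _ _ (hιj a)) (fun a b hab => hdisj _ _ (hιinj.ne hab))
      (fun a b hab => hadj _ _ (hιinj.ne hab)) (fun a => hadj _ _ (hιj a))
      (by show Inside f (S (ι 0)) (S j); rw [hι0]; exact hIns)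
  · push_neg at h
    have hbo : ∀ i j, i ≠ j → Below f (S i) (S j) ∨ Below f (S j) (S i) := by
      intro i j hij
      rcases trichotomy hf hcr (hconn i) (hconn j) (hdisj i j hij) with h' | h' | h' | h'
      · exact absurd h' (h i j hij)
      · exact absurd h' (h j i (Ne.symm hij))
      · exact Or.inl h'
      · exact Or.inr h'
    have hne : ∀ i, (S i).Nonempty := fun i => conn_nonempty (hconn i)
    choose r hr using hne
    set g : Fin 4 → ℕ := fun i => f (r i) with hgdef
    have hginj : ∀ i j, i ≠ j → g i ≠ g j := by
      intro i j hij hh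
      exact (Set.disjoint_left.mp (hdisj i j hij) (hr i)) (hf hh ▸ hr j)
    set σ := Tuple.sort g with hσ
    have toB : ∀ i j, i ≠ j → g i < g j → Below f (S i) (S j) := fun i j hij hlt =>
      below_resolve (hbo i j hij) (hr i) (hr j) hlt
    exact cross4 hcr (hadj _ _ (σ.injective.ne (by decide : (0 : Fin 4) ≠ 2)))
      (hadj _ _ (σ.injective.ne (by decide : (1 : Fin 4) ≠ 3)))
      (toB _ _ (σ.injective.ne (by decide)) (sort_strict g hginj (by decide : (0:Fin 4) < 1)))
      (toB _ _ (σ.injective.ne (by decide)) (sort_strict g hginj (by decide : (1:Fin 4) < 2)))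
      (toB _ _ (σ.injective.ne (by decide)) (sort_strict g hginj (by decide : (2:Fin 4) < 3)))


/-- K2,3 star configuration: outer `O`, center `C`, leaves `B i`, everything inside `O`. -/
lemma k23_star (hf : Function.Injective f) (hcr : Noncross G f)
    {O C : Set V} (B : Fin 3 → Set V)
    (hO : (G.induce O).Connected) (hC : (G.induce C).Connected)
    (hB : ∀ i, (G.induce (B i)).Connected)
    (dCO : Disjoint C O) (dBO : ∀ i, Disjoint (B i) O)
    (dCB : ∀ i, Disjoint C (B i)) (dBB : ∀ i j, i ≠ j → Disjoint (B i) (B j))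
    (aCB : ∀ i, Adjb G C (B i)) (aOB : ∀ i, Adjb G O (B i))
    (hCO : Inside f C O) : False := by
  -- all leaves are inside O
  have hBO : ∀ i, Inside f (B i) O := by
    intro i
    obtain ⟨w, hw, y, hy, hadj⟩ := aCB i
    exact killer hf hcr hO (hB i) dCO (dBO i) hCO hw hy hadj
  -- below-or between C and each leaf
  have boCB : ∀ k, Below f C (B k) ∨ Below f (B k) C := by
    intro k
    rcases trichotomy hf hcr hC (hB k) (dCB k) with h | h | h | h
    · exfalso
      obtain ⟨l, hl⟩ : ∃ l, l ≠ k := by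
        rcases (by decide : ∀ k : Fin 3, ∃ l : Fin 3, l ≠ k) k with ⟨l, hl⟩
        exact ⟨l, hl⟩
      obtain ⟨w, hw, y, hy, hadj⟩ := aCB l
      have h2 : Inside f (B l) (B k) :=
        killer hf hcr (hB k) (hB l) (dCB k) (dBB l k hl) h hw hy hadj
      obtain ⟨w', hw', y', hy', hadj'⟩ := (aOB l).symm
      have h3 : Inside f O (B k) :=
        killer hf hcr (hB k) hO (dBB l k hl) (dBO k).symm h2 hw' hy' hadj'
      exact not_mutual (conn_nonempty hO) h3 (hBO k)
    · exfalso
      obtain ⟨w, hw, y, hy, hadj⟩ := (aOB k).symm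
      have h3 : Inside f O C :=
        killer hf hcr hC hO (dCB k).symm dCO.symm h hw hy hadj
      exact not_mutual (conn_nonempty hO) h3 hCO
    · exact Or.inl h
    · exact Or.inr h
  have boBB : ∀ k l, k ≠ l → Below f (B k) (B l) ∨ Below f (B l) (B k) := by
    intro k l hkl
    rcases trichotomy hf hcr (hB k) (hB l) (dBB k l hkl) with h | h | h | h
    · exfalso
      obtain ⟨w, hw, y, hy, hadj⟩ := (aOB k).symm
      have h3 : Inside f O (B l) :=
        killer hf hcr (hB l) hO (dBB k l hkl) (dBO l).symm h hw hy hadj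
      exact not_mutual (conn_nonempty hO) h3 (hBO l)
    · exfalso
      obtain ⟨w, hw, y, hy, hadj⟩ := (aOB l).symm
      have h3 : Inside f O (B k) :=
        killer hf hcr (hB k) hO (dBB l k (Ne.symm hkl)) (dBO k).symm h hw hy hadj
      exact not_mutual (conn_nonempty hO) h3 (hBO k)
    · exact Or.inl h
    · exact Or.inr h
  -- sort the leaves
  have hne : ∀ i, (B i).Nonempty := fun i => conn_nonempty (hB i)
  choose rb hrb using hne
  obtain ⟨rc, hrc⟩ := conn_nonempty hC
  set g : Fin 3 → ℕ := fun i => f (rb i) with hgdef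
  have hginj : ∀ i j, i ≠ j → g i ≠ g j := by
    intro i j hij hh
    exact (Set.disjoint_left.mp (dBB i j hij) (hrb i)) (hf hh ▸ hrb j)
  set σ := Tuple.sort g with hσ
  have hne01 : σ 0 ≠ σ 1 := σ.injective.ne (by decide)
  have hne12 : σ 1 ≠ σ 2 := σ.injective.ne (by decide)
  have hne02 : σ 0 ≠ σ 2 := σ.injective.ne (by decide)
  have hB01 : Below f (B (σ 0)) (B (σ 1)) :=
    below_resolve (boBB _ _ hne01) (hrb _) (hrb _) (sort_strict g hginj (by decide))
  have hB12 : Below f (B (σ 1)) (B (σ 2)) :=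
    below_resolve (boBB _ _ hne12) (hrb _) (hrb _) (sort_strict g hginj (by decide))
  have hcb : ∀ k, f rc ≠ f (rb k) := by
    intro k hh
    exact (Set.disjoint_left.mp (dCB k) hrc) (hf hh ▸ hrb k)
  rcases lt_or_gt_of_ne (hcb (σ 0)) with h0 | h0
  · -- C < B σ0 < B σ1
    exact k4_core hf hcr hO
      (below_resolve (boCB (σ 0)) hrc (hrb _) h0) hB01 hCO dCO (dBO (σ 1))
      (aCB (σ 1)) ((aOB (σ 0)).symm)
  · rcases lt_or_gt_of_ne (hcb (σ 1)) with h1 | h1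
    · -- B σ0 < C < B σ1 < B σ2
      exact k4_core hf hcr hO
        (below_resolve (boCB (σ 1)) hrc (hrb _) h1) hB12 hCO dCO (dBO (σ 2))
        (aCB (σ 2)) ((aOB (σ 1)).symm)
    · -- B σ0 < B σ1 < C
      exact k4_core hf hcr hO hB01
        (below_resolve (boCB (σ 1)).symm (hrb _) hrc h1)
        (hBO (σ 0)) (dBO (σ 0)) dCO ((aCB (σ 0)).symm) ((aOB (σ 1)).symm)


/-- C4 core: sorted inner sets `A1 < A2` (the two A's) and `Ba < Bb` (inner B's),
all inside outer `O` which is adjacent to both A's. -/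
lemma k23_c4_core (hf : Function.Injective f) (hcr : Noncross G f)
    {O A1 A2 Ba Bb : Set V}
    (hO : (G.induce O).Connected)
    (hA1 : (G.induce A1).Connected) (hA2 : (G.induce A2).Connected)
    (hBa : (G.induce Ba).Connected) (hBb : (G.induce Bb).Connected)
    (dA1O : Disjoint A1 O) (dA2O : Disjoint A2 O)
    (dBaO : Disjoint Ba O) (dBbO : Disjoint Bb O)
    (dA1Ba : Disjoint A1 Ba) (dA2Ba : Disjoint A2 Ba) (dA2Bb : Disjoint A2 Bb)
    (aA1Ba : Adjb G A1 Ba) (aA1Bb : Adjb G A1 Bb)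
    (aA2Ba : Adjb G A2 Ba) (aA2Bb : Adjb G A2 Bb)
    (aA1O : Adjb G A1 O) (aA2O : Adjb G A2 O)
    (iA1O : Inside f A1 O) (iBaO : Inside f Ba O)
    (hA : Below f A1 A2) (hB : Below f Ba Bb)
    (bo1 : Below f A1 Ba ∨ Below f Ba A1)
    (bo2 : Below f A2 Ba ∨ Below f Ba A2)
    (bo3 : Below f A2 Bb ∨ Below f Bb A2) : False := by
  obtain ⟨ra1, hra1⟩ := conn_nonempty hA1
  obtain ⟨ra2, hra2⟩ := conn_nonempty hA2
  obtain ⟨rba, hrba⟩ := conn_nonempty hBa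
  obtain ⟨rbb, hrbb⟩ := conn_nonempty hBb
  have ne2a : f ra2 ≠ f rba := fun hh =>
    (Set.disjoint_left.mp dA2Ba hra2) (hf hh ▸ hrba)
  rcases lt_or_gt_of_ne ne2a with h | h
  · -- A1 < A2 < Ba
    exact k4_core hf hcr hO hA (below_resolve bo2 hra2 hrba h) iA1O dA1O dBaO aA1Ba aA2O
  · have ne1a : f ra1 ≠ f rba := fun hh =>
      (Set.disjoint_left.mp dA1Ba hra1) (hf hh ▸ hrba)
    rcases lt_or_gt_of_ne ne1a with h1 | h1
    · -- A1 < Ba < A2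
      have ne2b : f ra2 ≠ f rbb := fun hh =>
        (Set.disjoint_left.mp dA2Bb hra2) (hf hh ▸ hrbb)
      rcases lt_or_gt_of_ne ne2b with h2 | h2
      · -- A2 < Bb : A1 < A2 < Bb
        exact k4_core hf hcr hO hA (below_resolve bo3 hra2 hrbb h2) iA1O dA1O dBbO aA1Bb aA2O
      · -- A1 < Ba < Bb < A2
        exact cross4 hcr aA1Bb aA2Ba.symm
          (below_resolve bo1 hra1 hrba h1) hB
          (below_resolve bo3.symm hrbb hra2 h2)
    · -- Ba < A1 < A2
      exact k4_core hf hcr hO (below_resolve bo1.symm hrba hra1 h1) hA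
        iBaO dBaO dA2O aA2Ba.symm aA1O

/-- C4 wrapper: derive all `Inside`s and below-or's, then sort. -/
lemma k23_c4 (hf : Function.Injective f) (hcr : Noncross G f)
    {O A1 A2 Ba Bb : Set V}
    (hO : (G.induce O).Connected)
    (hA1 : (G.induce A1).Connected) (hA2 : (G.induce A2).Connected)
    (hBa : (G.induce Ba).Connected) (hBb : (G.induce Bb).Connected)
    (dA1O : Disjoint A1 O) (dA2O : Disjoint A2 O)
    (dBaO : Disjoint Ba O) (dBbO : Disjoint Bb O)
    (dAA : Disjoint A1 A2) (dBaBb : Disjoint Ba Bb)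
    (dA1Ba : Disjoint A1 Ba) (dA1Bb : Disjoint A1 Bb)
    (dA2Ba : Disjoint A2 Ba) (dA2Bb : Disjoint A2 Bb)
    (aA1Ba : Adjb G A1 Ba) (aA1Bb : Adjb G A1 Bb)
    (aA2Ba : Adjb G A2 Ba) (aA2Bb : Adjb G A2 Bb)
    (aA1O : Adjb G A1 O) (aA2O : Adjb G A2 O)
    (iA1O : Inside f A1 O) : False := by
  -- derive remaining insides
  have iBaO : Inside f Ba O := by
    obtain ⟨w, hw, y, hy, hadj⟩ := aA1Ba
    exact killer hf hcr hO hBa dA1O dBaO iA1O hw hy hadj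
  have iA2O : Inside f A2 O := by
    obtain ⟨w, hw, y, hy, hadj⟩ := aA2Ba.symm
    exact killer hf hcr hO hA2 dBaO dA2O iBaO hw hy hadj
  have iBbO : Inside f Bb O := by
    obtain ⟨w, hw, y, hy, hadj⟩ := aA1Bb
    exact killer hf hcr hO hBb dA1O dBbO iA1O hw hy hadj
  -- refutation helpers
  have ref1 : ∀ {U W : Set V}, (G.induce W).Connected → Disjoint U W → Disjoint O W →
      Inside f W O → Adjb G U O → Inside f U W → False := by
    intro U W hWc dUW dOW hWO aUO h
    obtain ⟨u, hu, o, ho', hadj⟩ := aUO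
    exact not_mutual (conn_nonempty hO)
      (killer hf hcr hWc hO dUW dOW h hu ho' hadj) hWO
  have ref2 : ∀ {U W Ai : Set V}, (G.induce W).Connected → (G.induce Ai).Connected →
      Disjoint U W → Disjoint Ai W → Disjoint O W → Inside f W O →
      Adjb G U Ai → Adjb G Ai O → Inside f U W → False := by
    intro U W Ai hWc hAic dUW dAiW dOW hWO aUAi aAiO h
    obtain ⟨u, hu, a, ha', hadj⟩ := aUAi
    have h2 : Inside f Ai W := killer hf hcr hWc hAic dUW dAiW h hu ha' hadj
    exact ref1 hWc dAiW dOW hWO aAiO h2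
  -- below-or's
  have boAA : Below f A1 A2 ∨ Below f A2 A1 := by
    rcases trichotomy hf hcr hA1 hA2 dAA with h | h | h | h
    · exact absurd h (ref1 hA2 dAA dA2O.symm iA2O aA1O)
    · exact absurd h (ref1 hA1 dAA.symm dA1O.symm iA1O aA2O)
    · exact Or.inl h
    · exact Or.inr h
  have boBB : Below f Ba Bb ∨ Below f Bb Ba := by
    rcases trichotomy hf hcr hBa hBb dBaBb with h | h | h | h
    · exact absurd h (ref2 hBb hA1 dBaBb dA1Bb dBbO.symm iBbO aA1Ba.symm aA1O)
    · exact absurd h (ref2 hBa hA1 dBaBb.symm dA1Ba dBaO.symm iBaO aA1Bb.symm aA1O)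
    · exact Or.inl h
    · exact Or.inr h
  have bo1 : Below f A1 Ba ∨ Below f Ba A1 := by
    rcases trichotomy hf hcr hA1 hBa dA1Ba with h | h | h | h
    · exact absurd h (ref1 hBa dA1Ba dBaO.symm iBaO aA1O)
    · exact absurd h (ref2 hA1 hA2 dA1Ba.symm dAA.symm dA1O.symm iA1O aA2Ba.symm aA2O)
    · exact Or.inl h
    · exact Or.inr h
  have bo1b : Below f A1 Bb ∨ Below f Bb A1 := by
    rcases trichotomy hf hcr hA1 hBb dA1Bb with h | h | h | h
    · exact absurd h (ref1 hBb dA1Bb dBbO.symm iBbO aA1O)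
    · exact absurd h (ref2 hA1 hA2 dA1Bb.symm dAA.symm dA1O.symm iA1O aA2Bb.symm aA2O)
    · exact Or.inl h
    · exact Or.inr h
  have bo2 : Below f A2 Ba ∨ Below f Ba A2 := by
    rcases trichotomy hf hcr hA2 hBa dA2Ba with h | h | h | h
    · exact absurd h (ref1 hBa dA2Ba dBaO.symm iBaO aA2O)
    · exact absurd h (ref2 hA2 hA1 dA2Ba.symm dAA dA2O.symm iA2O aA1Ba.symm aA1O)
    · exact Or.inl h
    · exact Or.inr h
  have bo2b : Below f A2 Bb ∨ Below f Bb A2 := by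
    rcases trichotomy hf hcr hA2 hBb dA2Bb with h | h | h | h
    · exact absurd h (ref1 hBb dA2Bb dBbO.symm iBbO aA2O)
    · exact absurd h (ref2 hA2 hA1 dA2Bb.symm dAA dA2O.symm iA2O aA1Bb.symm aA1O)
    · exact Or.inl h
    · exact Or.inr h
  -- sort and call core
  rcases boAA with hA | hA <;> rcases boBB with hB | hB
  · exact k23_c4_core hf hcr hO hA1 hA2 hBa hBb dA1O dA2O dBaO dBbO dA1Ba dA2Ba dA2Bb
      aA1Ba aA1Bb aA2Ba aA2Bb aA1O aA2O iA1O iBaO hA hB bo1 bo2 bo2b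
  · exact k23_c4_core hf hcr hO hA1 hA2 hBb hBa dA1O dA2O dBbO dBaO dA1Bb dA2Bb dA2Ba
      aA1Bb aA1Ba aA2Bb aA2Ba aA1O aA2O iA1O iBbO hA hB bo1b bo2b bo2
  · exact k23_c4_core hf hcr hO hA2 hA1 hBa hBb dA2O dA1O dBaO dBbO dA2Ba dA1Ba dA1Bb
      aA2Ba aA2Bb aA1Ba aA1Bb aA2O aA1O iA2O iBaO hA hB bo2 bo1 bo1b
  · exact k23_c4_core hf hcr hO hA2 hA1 hBb hBa dA2O dA1O dBbO dBaO dA2Bb dA1Bb dA1Ba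
      aA2Bb aA2Ba aA1Bb aA1Ba aA2O aA1O iA2O iBbO hA hB bo2b bo1b bo1


/-- K2,3 with pairwise hull-disjoint branch sets, A's and B's sorted. -/
lemma k23_disj_core (hf : Function.Injective f) (hcr : Noncross G f)
    {A1 A2 B1 B2 B3 : Set V}
    {ra1 ra2 rb1 rb2 rb3 : V}
    (hra1 : ra1 ∈ A1) (hra2 : ra2 ∈ A2)
    (hrb1 : rb1 ∈ B1) (hrb2 : rb2 ∈ B2) (hrb3 : rb3 ∈ B3)
    (d11 : Disjoint A1 B1) (d12 : Disjoint A1 B2) (d13 : Disjoint A1 B3)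
    (d21 : Disjoint A2 B1) (d22 : Disjoint A2 B2) (d23 : Disjoint A2 B3)
    (a11 : Adjb G A1 B1) (a12 : Adjb G A1 B2) (a13 : Adjb G A1 B3)
    (a21 : Adjb G A2 B1) (a22 : Adjb G A2 B2) (a23 : Adjb G A2 B3)
    (hA : Below f A1 A2) (hB12 : Below f B1 B2) (hB23 : Below f B2 B3)
    (bo11 : Below f A1 B1 ∨ Below f B1 A1)
    (bo12 : Below f A1 B2 ∨ Below f B2 A1)
    (bo21 : Below f A2 B1 ∨ Below f B1 A2)
    (bo22 : Below f A2 B2 ∨ Below f B2 A2)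
    (bo23 : Below f A2 B3 ∨ Below f B3 A2) : False := by
  have ne21 : f ra2 ≠ f rb1 := fun hh => (Set.disjoint_left.mp d21 hra2) (hf hh ▸ hrb1)
  rcases lt_or_gt_of_ne ne21 with h | h
  · -- A1 < A2 < B1 < B2
    exact cross4 hcr a11 a22 hA (below_resolve bo21 hra2 hrb1 h) hB12
  · have ne22 : f ra2 ≠ f rb2 := fun hh => (Set.disjoint_left.mp d22 hra2) (hf hh ▸ hrb2)
    rcases lt_or_gt_of_ne ne22 with h2 | h2
    · -- A1 < A2 < B2 < B3
      exact cross4 hcr a12 a23 hA (below_resolve bo22 hra2 hrb2 h2) hB23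
    · have ne12 : f ra1 ≠ f rb2 := fun hh => (Set.disjoint_left.mp d12 hra1) (hf hh ▸ hrb2)
      rcases lt_or_gt_of_ne ne12 with h3 | h3
      · have ne11 : f ra1 ≠ f rb1 := fun hh => (Set.disjoint_left.mp d11 hra1) (hf hh ▸ hrb1)
        rcases lt_or_gt_of_ne ne11 with h4 | h4
        · -- A1 < B1 < B2 < A2
          exact cross4 hcr a12 a21.symm (below_resolve bo11 hra1 hrb1 h4) hB12
            (below_resolve bo22.symm hrb2 hra2 h2)
        · have ne23 : f ra2 ≠ f rb3 := fun hh => (Set.disjoint_left.mp d23 hra2) (hf hh ▸ hrb3)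
          rcases lt_or_gt_of_ne ne23 with h5 | h5
          · -- B1 < A1 < A2 < B3
            exact cross4 hcr a21.symm a13 (below_resolve bo11.symm hrb1 hra1 h4) hA
              (below_resolve bo23 hra2 hrb3 h5)
          · -- A1 < B2 < B3 < A2
            exact cross4 hcr a13 a22.symm (below_resolve bo12 hra1 hrb2 h3) hB23
              (below_resolve bo23.symm hrb3 hra2 h5)
      · -- B1 < B2 < A1 < A2
        exact cross4 hcr a11.symm a22.symm hB12
          (below_resolve bo12.symm hrb2 hra1 h3) hA

/-- K2,3 with all pairs hull-disjoint. -/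
lemma k23_disj (hf : Function.Injective f) (hcr : Noncross G f)
    (A : Fin 2 → Set V) (B : Fin 3 → Set V)
    (hcA : ∀ i, (G.induce (A i)).Connected) (hcB : ∀ j, (G.induce (B j)).Connected)
    (dAA : ∀ i j, i ≠ j → Disjoint (A i) (A j))
    (dBB : ∀ i j, i ≠ j → Disjoint (B i) (B j))
    (dAB : ∀ i j, Disjoint (A i) (B j))
    (adj : ∀ i j, Adjb G (A i) (B j))
    (boAA : Below f (A 0) (A 1) ∨ Below f (A 1) (A 0))
    (boAB : ∀ i j, Below f (A i) (B j) ∨ Below f (B j) (A i))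
    (boBB : ∀ i j, i ≠ j → Below f (B i) (B j) ∨ Below f (B j) (B i)) : False := by
  have hneA : ∀ i, (A i).Nonempty := fun i => conn_nonempty (hcA i)
  have hneB : ∀ j, (B j).Nonempty := fun j => conn_nonempty (hcB j)
  choose ra hra using hneA
  choose rb hrb using hneB
  set g : Fin 3 → ℕ := fun j => f (rb j) with hgdef
  have hginj : ∀ i j, i ≠ j → g i ≠ g j := by
    intro i j hij hh
    exact (Set.disjoint_left.mp (dBB i j hij) (hrb i)) (hf hh ▸ hrb j)
  set σ := Tuple.sort g with hσ
  have hne01 : σ 0 ≠ σ 1 := σ.injective.ne (by decide)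
  have hne12 : σ 1 ≠ σ 2 := σ.injective.ne (by decide)
  have hB12 : Below f (B (σ 0)) (B (σ 1)) :=
    below_resolve (boBB _ _ hne01) (hrb _) (hrb _) (sort_strict g hginj (by decide))
  have hB23 : Below f (B (σ 1)) (B (σ 2)) :=
    below_resolve (boBB _ _ hne12) (hrb _) (hrb _) (sort_strict g hginj (by decide))
  have hneAA : f (ra 0) ≠ f (ra 1) := fun hh =>
    (Set.disjoint_left.mp (dAA 0 1 (by decide)) (hra 0)) (hf hh ▸ hra 1)
  rcases lt_or_gt_of_ne hneAA with hA | hA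
  · exact k23_disj_core hf hcr (hra 0) (hra 1) (hrb (σ 0)) (hrb (σ 1)) (hrb (σ 2))
      (dAB 0 _) (dAB 0 _) (dAB 0 _) (dAB 1 _) (dAB 1 _) (dAB 1 _)
      (adj 0 _) (adj 0 _) (adj 0 _) (adj 1 _) (adj 1 _) (adj 1 _)
      (below_resolve boAA (hra 0) (hra 1) hA) hB12 hB23
      (boAB 0 _) (boAB 0 _) (boAB 1 _) (boAB 1 _) (boAB 1 _)
  · exact k23_disj_core hf hcr (hra 1) (hra 0) (hrb (σ 0)) (hrb (σ 1)) (hrb (σ 2))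
      (dAB 1 _) (dAB 1 _) (dAB 1 _) (dAB 0 _) (dAB 0 _) (dAB 0 _)
      (adj 1 _) (adj 1 _) (adj 1 _) (adj 0 _) (adj 0 _) (adj 0 _)
      (below_resolve boAA.symm (hra 1) (hra 0) hA) hB12 hB23
      (boAB 1 _) (boAB 1 _) (boAB 0 _) (boAB 0 _) (boAB 0 _)


/-- no K2,3 minor in a non-crossing graph -/
lemma noK23 (hf : Function.Injective f) (hcr : Noncross G f)
    (A : Fin 2 → Set V) (B : Fin 3 → Set V)
    (hcA : ∀ i, (G.induce (A i)).Connected) (hcB : ∀ j, (G.induce (B j)).Connected)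
    (dAA : ∀ i j, i ≠ j → Disjoint (A i) (A j))
    (dBB : ∀ i j, i ≠ j → Disjoint (B i) (B j))
    (dAB : ∀ i j, Disjoint (A i) (B j))
    (adj : ∀ i j, Adjb G (A i) (B j)) : False := by
  classical
  by_cases hAA : ∃ i j : Fin 2, i ≠ j ∧ Inside f (A i) (A j)
  · obtain ⟨i, j, hij, h⟩ := hAA
    exact k23_star hf hcr B (hcA j) (hcA i) hcB (dAA i j hij)
      (fun k => (dAB j k).symm) (fun k => dAB i k) dBB
      (fun k => adj i k) (fun k => adj j k) h
  by_cases hBA : ∃ (i : Fin 3) (j : Fin 2), Inside f (B i) (A j)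
  · obtain ⟨i, j, h⟩ := hBA
    obtain ⟨j', hj'⟩ := (by decide : ∀ j : Fin 2, ∃ j', j' ≠ j) j
    obtain ⟨w, hw, y, hy, hadj⟩ := (adj j' i).symm
    have hCO : Inside f (A j') (A j) :=
      killer hf hcr (hcA j) (hcA j') (dAB j i).symm (dAA j' j hj') h hw hy hadj
    exact k23_star hf hcr B (hcA j) (hcA j') hcB (dAA j' j hj')
      (fun k => (dAB j k).symm) (fun k => dAB j' k) dBB
      (fun k => adj j' k) (fun k => adj j k) hCO
  by_cases hAB : ∃ (i : Fin 2) (j : Fin 3), Inside f (A i) (B j)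
  · obtain ⟨i, j, h⟩ := hAB
    obtain ⟨i', hi'⟩ := (by decide : ∀ i : Fin 2, ∃ i', i' ≠ i) i
    obtain ⟨k, l, hkj, hlj, hkl⟩ :=
      (by decide : ∀ j : Fin 3, ∃ k l, k ≠ j ∧ l ≠ j ∧ k ≠ l) j
    exact k23_c4 hf hcr (hcB j) (hcA i) (hcA i') (hcB k) (hcB l)
      (dAB i j) (dAB i' j) (dBB k j hkj) (dBB l j hlj)
      (dAA i i' (Ne.symm hi')) (dBB k l hkl)
      (dAB i k) (dAB i l) (dAB i' k) (dAB i' l)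
      (adj i k) (adj i l) (adj i' k) (adj i' l)
      (adj i j) (adj i' j) h
  by_cases hBB : ∃ i j : Fin 3, i ≠ j ∧ Inside f (B i) (B j)
  · obtain ⟨i, j, hij, h⟩ := hBB
    obtain ⟨l, hli, hlj⟩ :=
      (by decide : ∀ i j : Fin 3, i ≠ j → ∃ l, l ≠ i ∧ l ≠ j) i j hij
    obtain ⟨w, hw, y, hy, hadj⟩ := (adj 0 i).symm
    have iA1O : Inside f (A 0) (B j) :=
      killer hf hcr (hcB j) (hcA 0) (dBB i j hij) (dAB 0 j) h hw hy hadj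
    exact k23_c4 hf hcr (hcB j) (hcA 0) (hcA 1) (hcB i) (hcB l)
      (dAB 0 j) (dAB 1 j) (dBB i j hij) (dBB l j hlj)
      (dAA 0 1 (by decide)) (dBB i l (Ne.symm hli))
      (dAB 0 i) (dAB 0 l) (dAB 1 i) (dAB 1 l)
      (adj 0 i) (adj 0 l) (adj 1 i) (adj 1 l)
      (adj 0 j) (adj 1 j) iA1O
  · push_neg at hAA hBA hAB hBB
    have boAA : Below f (A 0) (A 1) ∨ Below f (A 1) (A 0) := by
      rcases trichotomy hf hcr (hcA 0) (hcA 1) (dAA 0 1 (by decide)) with h | h | h | h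
      · exact absurd h (hAA 0 1 (by decide))
      · exact absurd h (hAA 1 0 (by decide))
      · exact Or.inl h
      · exact Or.inr h
    have boAB : ∀ i j, Below f (A i) (B j) ∨ Below f (B j) (A i) := by
      intro i j
      rcases trichotomy hf hcr (hcA i) (hcB j) (dAB i j) with h | h | h | h
      · exact absurd h (hAB i j)
      · exact absurd h (hBA j i)
      · exact Or.inl h
      · exact Or.inr h
    have boBB : ∀ i j, i ≠ j → Below f (B i) (B j) ∨ Below f (B j) (B i) := by
      intro i j hij
      rcases trichotomy hf hcr (hcB i) (hcB j) (dBB i j hij) with h | h | h | h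
      · exact absurd h (hBB i j hij)
      · exact absurd h (hBB j i (Ne.symm hij))
      · exact Or.inl h
      · exact Or.inr h
    exact k23_disj hf hcr A B hcA hcB dAA dBB dAB adj boAA boAB boBB

end TwoPathsAux

namespace TwoPathsConcrete

variable {s t m : ℕ} {ia : Fin m → Fin s} {jb : Fin m → Fin t}

/-- position of a vertex on the line: `a`-path in order, then the `b`-path reversed. -/
def pos (s t : ℕ) : Fin s ⊕ Fin t → ℕ :=
  Sum.elim (fun x => (x : ℕ)) (fun y => s + (t - 1 - (y : ℕ)))

lemma pos_injective (s t : ℕ) : Function.Injective (pos s t) := by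
  rintro (x | x) (y | y) h <;> simp only [pos, Sum.elim_inl, Sum.elim_inr] at h
  · exact congrArg Sum.inl (Fin.ext h)
  · exact absurd h (by have := x.isLt; omega)
  · exact absurd h (by have := y.isLt; omega)
  · have hx := x.isLt; have hy := y.isLt
    exact congrArg Sum.inr (Fin.ext (by omega))

lemma adj_char {u v : Fin s ⊕ Fin t}
    (h : (TwoPathsGraph s t m ia jb).Adj u v) (hlt : pos s t u < pos s t v) :
    (pos s t v = pos s t u + 1) ∨
    ∃ l : Fin m, pos s t u = (ia l : ℕ) ∧ pos s t v = s + (t - 1 - (jb l : ℕ)) := by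
  rw [TwoPathsGraph, SimpleGraph.fromRel_adj] at h
  obtain ⟨hne, h⟩ := h
  rcases u with x | x <;> rcases v with y | y <;>
    simp only [pos, Sum.elim_inl, Sum.elim_inr] at hlt ⊢
  · left
    rcases h with h | h
    · omega
    · omega
  · rcases h with h | h
    · obtain ⟨l, hl1, hl2⟩ := h
      exact Or.inr ⟨l, by rw [hl1], by rw [hl2]⟩
    · exact absurd h (by exact id)
  · rcases h with h | h
    · exact absurd h (by exact id)
    · exfalso; have := x.isLt; have := y.isLt; omega
  · left
    have hx := x.isLt; have hy := y.isLt
    rcases h with h | h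
    · omega
    · omega

lemma noncross_aux (hia : StrictMono ia) (hjb : StrictMono jb)
    {u v x y : Fin s ⊕ Fin t}
    (h1 : (TwoPathsGraph s t m ia jb).Adj u v)
    (h2 : (TwoPathsGraph s t m ia jb).Adj x y)
    (l1 : pos s t u < pos s t x) (l2 : pos s t x < pos s t v)
    (l3 : pos s t v < pos s t y) : False := by
  rcases adj_char h1 (by omega) with h | ⟨l, hl1, hl2⟩
  · omega
  · rcases adj_char h2 (by omega) with h' | ⟨l', hl1', hl2'⟩
    · omega
    · -- two chords: l < l' from left endpoints, contradiction on right endpoints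
      have hll' : l < l' := by
        by_contra hc
        push_neg at hc
        rcases lt_or_eq_of_le hc with hc | hc
        · have := hia hc; have : (ia l' : ℕ) < (ia l : ℕ) := this; omega
        · subst hc; omega
      have hjj : (jb l : ℕ) < (jb l' : ℕ) := hjb hll'
      have := (jb l').isLt
      omega

end TwoPathsConcrete

/-- Two paths joined by non-crossing cross edges form a graph with neither a `K_4`
nor a `K_{2,3}` minor. -/
theorem two_paths_graph_outerplanar (s t m : ℕ) (hs : 1 ≤ s) (ht : 1 ≤ t)
    (ia : Fin m → Fin s) (jb : Fin m → Fin t)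
    (hia : StrictMono ia) (hjb : StrictMono jb) :
    ¬ HasCliqueMinor (TwoPathsGraph s t m ia jb) 4 ∧
    ¬ HasBipartiteMinor (TwoPathsGraph s t m ia jb) 2 3 := by
  constructor
  · rintro ⟨S, hne, hdisj, hconn, hadj⟩
    exact TwoPathsAux.noK4 (TwoPathsConcrete.pos_injective s t)
      (fun u v x y h1 h2 => TwoPathsConcrete.noncross_aux hia hjb h1 h2)
      S hconn hdisj hadj
  · rintro ⟨S, T, hneS, hneT, hdS, hdT, hdST, hcS, hcT, hadj⟩
    exact TwoPathsAux.noK23 (TwoPathsConcrete.pos_injective s t)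
      (fun u v x y h1 h2 => TwoPathsConcrete.noncross_aux hia hjb h1 h2)
      S T hcS hcT hdS hdT hdST hadj
end
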